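/- arXiv:2405.10617 — 5 statements merged into one kernel-verified Lean document; each statement's English description precedes it below -/
import Mathlib

section
/- Let (W,S) be a 2-spherical Coxeter system of finite rank n ≥ 3 (i.e. m_{st} < ∞ for all s,t ∈ S). Then the growth function of (W,S) is finite at 1/(n-1); that is, the series ∑_{i≥0} c_i · (1/(n-1))^i converges, i.e. the sequence i ↦ (c_i : ℝ)/(n-1)^i is summable. -/
open List CoxeterSystem

section AuxGrowth

variable {B : Type*} [Fintype B] [DecidableEq B]

def allWords (B : Type*) [Fintype B] [DecidableEq B] (i : ℕ) : Finset (List B) :=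
  (Finset.univ : Finset (Fin i → B)).image List.ofFn

theorem mem_allWords {i : ℕ} {ω : List B} : ω ∈ allWords B i ↔ ω.length = i := by
  constructor
  · rintro h
    rcases Finset.mem_image.1 h with ⟨f, -, rfl⟩
    simp
  · rintro rfl
    exact Finset.mem_image.2 ⟨ω.get, Finset.mem_univ _, List.ofFn_get ω⟩

theorem card_allWords (i : ℕ) : (allWords B i).card = (Fintype.card B) ^ i := by
  rw [allWords, Finset.card_image_of_injective _ List.ofFn_injective]
  simp [Fintype.card_fun]

open Classical in
/-- Lists of length `r` forming a `≠`-chain starting after `b`. -/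
noncomputable def chainsF (b : B) (r : ℕ) : Finset (List B) :=
  (allWords B r).filter (fun l => List.Chain (· ≠ ·) b l)

theorem mem_chainsF {b : B} {r : ℕ} {l : List B} :
    l ∈ chainsF b r ↔ l.length = r ∧ List.Chain (· ≠ ·) b l := by
  simp [chainsF, mem_allWords]

theorem card_chainsF (b : B) (r : ℕ) :
    (chainsF b r).card ≤ (Fintype.card B - 1) ^ r := by
  induction r generalizing b with
  | zero =>
    refine le_trans (Finset.card_le_card (fun l hl => ?_)) (by simp : ({[]} : Finset (List B)).card ≤ 1)
    rcases mem_chainsF.1 hl with ⟨h1, -⟩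
    simp [List.length_eq_zero_iff.1 h1]
  | succ r ih =>
    have hsub : chainsF b (r+1) ⊆
        (Finset.univ.erase b).biUnion (fun x => (chainsF x r).image (x :: ·)) := by
      intro l hl
      rcases mem_chainsF.1 hl with ⟨h1, h2⟩
      match l, h1 with
      | x :: l', h1 =>
        rcases List.chain_cons.1 h2 with ⟨hbx, hchain⟩
        refine Finset.mem_biUnion.2 ⟨x, Finset.mem_erase.2 ⟨Ne.symm hbx, Finset.mem_univ x⟩, ?_⟩
        exact Finset.mem_image.2 ⟨l', mem_chainsF.2 ⟨by simpa using h1, hchain⟩, rfl⟩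
    calc (chainsF b (r+1)).card ≤ _ := Finset.card_le_card hsub
      _ ≤ ∑ x ∈ Finset.univ.erase b, ((chainsF x r).image (x :: ·)).card :=
          Finset.card_biUnion_le
      _ ≤ ∑ x ∈ Finset.univ.erase b, (Fintype.card B - 1) ^ r := by
          refine Finset.sum_le_sum fun x _ => le_trans (Finset.card_image_le) (ih x)
      _ = (Fintype.card B - 1) * (Fintype.card B - 1) ^ r := by
          rw [Finset.sum_const, Finset.card_erase_of_mem (Finset.mem_univ b), Finset.card_univ,
            smul_eq_mul]
      _ = (Fintype.card B - 1) ^ (r+1) := by ring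

variable {W : Type*} [Group W] {M : CoxeterMatrix B} (cs : CoxeterSystem M W)

/-- The word `b t b t ⋯` of length `2 * k`. -/
def myAlt (b t : B) : ℕ → List B
  | 0 => []
  | k + 1 => b :: t :: myAlt b t k

@[simp] theorem myAlt_length (b t : B) (k : ℕ) : (myAlt b t k).length = 2 * k := by
  induction k with
  | zero => rfl
  | succ k ih => simp [myAlt, ih]; ring

theorem myAlt_prod (cs : CoxeterSystem M W) (b t : B) (k : ℕ) :
    cs.wordProd (myAlt b t k) = (cs.simple b * cs.simple t) ^ k := by
  induction k with
  | zero => simp [myAlt]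
  | succ k ih =>
    rw [myAlt, cs.wordProd_cons, cs.wordProd_cons, ih, pow_succ']
    group

theorem myAlt_chain {b t : B} (hbt : b ≠ t) (k : ℕ) :
    ∀ x : B, x ≠ b → List.Chain (· ≠ ·) x (myAlt b t k) := by
  induction k with
  | zero => intro x _; simp [myAlt, List.Chain]
  | succ k ih =>
    intro x hx
    exact List.chain_cons.2 ⟨hx, List.chain_cons.2 ⟨hbt, ih t (Ne.symm hbt)⟩⟩

theorem myAlt_head {b t₁ t₂ : B} {k : ℕ} (hk : 1 ≤ k)
    (h : myAlt t₁ b k = myAlt t₂ b k) : t₁ = t₂ := by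
  match k, hk with
  | k + 1, _ => simpa [myAlt] using congrArg (·.head?) h

theorem myAlt_prefix (b t : B) {k K : ℕ} (hk : k ≤ K) :
    myAlt b t k <+: myAlt b t K := by
  induction k generalizing K with
  | zero => exact List.nil_prefix
  | succ k ih =>
    match K, hk with
    | K + 1, hk =>
      rw [myAlt, myAlt]
      exact List.cons_prefix_cons.2 ⟨rfl, List.cons_prefix_cons.2 ⟨rfl, ih (Nat.succ_le_succ_iff.1 hk)⟩⟩

theorem cons_myAlt (b t : B) (K : ℕ) :
    b :: myAlt t b K = myAlt b t K ++ [b] := by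
  induction K with
  | zero => rfl
  | succ K ih => rw [myAlt, myAlt]; simp only [List.cons_append]; rw [← ih]

theorem isReduced_infix {ω μ : List B} (h : cs.IsReduced ω) (hm : μ <:+: ω) :
    cs.IsReduced μ := by
  rcases hm with ⟨l₁, l₂, rfl⟩
  have h1 : cs.IsReduced (μ ++ l₂) := by
    have := CoxeterSystem.IsReduced.drop (cs := cs) (by rwa [List.append_assoc] at h) l₁.length
    rwa [List.drop_left] at this
  have := h1.take μ.length
  rwa [List.take_left] at this

theorem chain'_of_isReduced : ∀ {ω : List B}, cs.IsReduced ω → List.Chain' (· ≠ ·) ω := by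
  intro ω
  induction ω with
  | nil => intro _; simp [List.Chain']
  | cons x l ih =>
    intro h
    match l with
    | [] => simp [List.Chain']
    | y :: l' =>
      have htail : cs.IsReduced (y :: l') := by
        have := h.drop 1
        simpa using this
      refine List.isChain_cons_cons.2 ⟨?_, ih htail⟩
      rintro rfl
      have h2 : cs.IsReduced [x, x] :=
        isReduced_infix cs h ⟨[], l', by simp⟩
      have : cs.length (cs.wordProd [x, x]) = 2 := h2
      rw [show cs.wordProd [x, x] = 1 by
        rw [cs.wordProd_cons, cs.wordProd_singleton, cs.simple_mul_simple_self]] at this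
      simp [cs.length_one] at this

-- new material
open Classical in
noncomputable def RW (i : ℕ) : Finset (List B) :=
  (allWords B i).filter (fun ω => cs.IsReduced ω)

theorem mem_RW {i : ℕ} {ω : List B} : ω ∈ RW cs i ↔ ω.length = i ∧ cs.IsReduced ω := by
  classical
  simp [RW, mem_allWords]

def altSet (b : B) (K : ℕ) : Finset (List B) :=
  (Finset.univ.erase b).image (fun t => myAlt t b K)

theorem card_goodS (b : B) {K : ℕ} (hK : 1 ≤ K) :
    (chainsF b (2 * K) \ altSet b K).card
      ≤ (Fintype.card B - 1) ^ (2 * K) - (Fintype.card B - 1) := by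
  have hsub : altSet b K ⊆ chainsF b (2 * K) := by
    intro l hl
    rcases Finset.mem_image.1 hl with ⟨t, ht, rfl⟩
    have htb : t ≠ b := (Finset.mem_erase.1 ht).1
    exact mem_chainsF.2 ⟨myAlt_length t b K, myAlt_chain htb K b (Ne.symm htb)⟩
  have hcard : (altSet b K).card = Fintype.card B - 1 := by
    rw [altSet, Finset.card_image_of_injOn (fun t₁ _ t₂ _ h => myAlt_head hK h),
      Finset.card_erase_of_mem (Finset.mem_univ b), Finset.card_univ]
  rw [Finset.card_sdiff_of_subset hsub, hcard]
  exact Nat.sub_le_sub_right (card_chainsF b (2 * K)) _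

theorem RW_decomp (b₀ : B) {i r : ℕ} (hi : 1 ≤ i) {ω : List B} (hω : ω ∈ RW cs (i + r)) :
    ω.take i ∈ RW cs i ∧ ω = ω.take i ++ ω.drop i ∧
      (ω.drop i) ∈ chainsF ((ω.take i).getLastD b₀) r ∧
      cs.IsReduced (((ω.take i).getLastD b₀) :: ω.drop i) := by
  rcases (mem_RW cs).1 hω with ⟨hlen, hred⟩
  have hp_len : (ω.take i).length = i := by
    rw [List.length_take, hlen]; omega
  have hp_red : cs.IsReduced (ω.take i) := hred.take i
  have hp_ne : ω.take i ≠ [] := by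
    intro h; rw [h] at hp_len; simp at hp_len; omega
  set p := ω.take i with hp
  have hgd : p.getLastD b₀ = p.getLast hp_ne := by
    match p, hp_ne with
    | a :: l, _ => rw [List.getLastD_cons, List.getLast_eq_getLastD]
  have hb : p.dropLast ++ [p.getLastD b₀] = p := by
    rw [hgd]; exact List.dropLast_append_getLast hp_ne
  have hsplit : ω = p ++ ω.drop i := (List.take_append_drop i ω).symm
  have hinfix : (p.getLastD b₀ :: ω.drop i) <:+: ω := by
    refine ⟨p.dropLast, [], ?_⟩
    rw [List.append_nil, ← List.singleton_append, ← List.append_assoc, hb]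
    exact hsplit.symm
  have hwin : cs.IsReduced (p.getLastD b₀ :: ω.drop i) := isReduced_infix cs hred hinfix
  have hchain : List.Chain (· ≠ ·) (p.getLastD b₀) (ω.drop i) := chain'_of_isReduced cs hwin
  have hd_len : (ω.drop i).length = r := by rw [List.length_drop, hlen]; omega
  exact ⟨(mem_RW cs).2 ⟨hp_len, hp_red⟩, hsplit, mem_chainsF.2 ⟨hd_len, hchain⟩, hwin⟩

theorem RW_card_step (b₀ : B) {i : ℕ} (hi : 1 ≤ i) (r : ℕ) :
    (RW cs (i + r)).card ≤ (Fintype.card B - 1) ^ r * (RW cs i).card := by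
  have hsub : RW cs (i + r) ⊆
      (RW cs i).biUnion (fun p => (chainsF (p.getLastD b₀) r).image (p ++ ·)) := by
    intro ω hω
    obtain ⟨h1, h2, h3, -⟩ := RW_decomp cs b₀ hi hω
    exact Finset.mem_biUnion.2 ⟨_, h1, Finset.mem_image.2 ⟨_, h3, h2.symm⟩⟩
  calc (RW cs (i + r)).card ≤ _ := Finset.card_le_card hsub
    _ ≤ ∑ p ∈ RW cs i, ((chainsF (p.getLastD b₀) r).image (p ++ ·)).card :=
        Finset.card_biUnion_le
    _ ≤ ∑ _p ∈ RW cs i, (Fintype.card B - 1) ^ r :=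
        Finset.sum_le_sum fun p _ => le_trans Finset.card_image_le (card_chainsF _ r)
    _ = (Fintype.card B - 1) ^ r * (RW cs i).card := by
        rw [Finset.sum_const, smul_eq_mul, mul_comm]

theorem RW_card_stepK (b₀ : B) {i : ℕ} (hi : 1 ≤ i) {K : ℕ}
    (hK : ∀ b t : B, ∃ k, 1 ≤ k ∧ k ≤ K ∧ (cs.simple b * cs.simple t) ^ k = 1) :
    (RW cs (i + 2 * K)).card
      ≤ ((Fintype.card B - 1) ^ (2 * K) - (Fintype.card B - 1)) * (RW cs i).card := by
  have hK1 : 1 ≤ K := by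
    obtain ⟨k, hk1, hk2, -⟩ := hK b₀ b₀; omega
  have hsub : RW cs (i + 2 * K) ⊆
      (RW cs i).biUnion
        (fun p => ((chainsF (p.getLastD b₀) (2 * K) \ altSet (p.getLastD b₀) K)).image
          (p ++ ·)) := by
    intro ω hω
    obtain ⟨h1, h2, h3, h4⟩ := RW_decomp cs b₀ hi hω
    refine Finset.mem_biUnion.2 ⟨_, h1, Finset.mem_image.2 ⟨_, Finset.mem_sdiff.2 ⟨h3, ?_⟩,
      h2.symm⟩⟩
    -- the suffix is not an alternating word
    intro halt
    rcases Finset.mem_image.1 halt with ⟨t, _, hteq⟩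
    set b := (ω.take i).getLastD b₀
    obtain ⟨k, hk1, hk2, hk3⟩ := hK b t
    -- `b :: drop = myAlt b t K ++ [b]`, whose prefix `myAlt b t k` is reduced
    have hwin : cs.IsReduced (myAlt b t K ++ [b]) := by
      rw [← cons_myAlt, hteq]; exact h4
    have hpre : cs.IsReduced (myAlt b t k) :=
      isReduced_infix cs hwin ((myAlt_prefix b t hk2).trans (List.prefix_append _ _)).isInfix
    have : cs.length (cs.wordProd (myAlt b t k)) = 2 * k := by
      rw [hpre, myAlt_length]
    rw [myAlt_prod cs b t k, hk3, cs.length_one] at this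
    omega
  calc (RW cs (i + 2 * K)).card ≤ _ := Finset.card_le_card hsub
    _ ≤ ∑ p ∈ RW cs i, (((chainsF (p.getLastD b₀) (2 * K) \ altSet (p.getLastD b₀) K)).image
          (p ++ ·)).card := Finset.card_biUnion_le
    _ ≤ ∑ _p ∈ RW cs i, ((Fintype.card B - 1) ^ (2 * K) - (Fintype.card B - 1)) :=
        Finset.sum_le_sum fun p _ => le_trans Finset.card_image_le (card_goodS _ hK1)
    _ = _ := by rw [Finset.sum_const, smul_eq_mul, mul_comm]

theorem card_length_le (i : ℕ) : Nat.card {w : W // cs.length w = i} ≤ (RW cs i).card := by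
  have hex : ∀ w : {w : W // cs.length w = i}, ∃ ω : List B,
      ω ∈ RW cs i ∧ cs.wordProd ω = w.1 := by
    rintro ⟨w, hw⟩
    obtain ⟨ω, hlen, rfl⟩ := cs.exists_reduced_word w
    exact ⟨ω, (mem_RW cs).2 ⟨by rw [← hlen.eq, hw], hlen⟩, rfl⟩
  choose φ hmem hprod using hex
  have hinj : Function.Injective (fun w => (⟨φ w, hmem w⟩ : {l // l ∈ RW cs i})) := by
    intro w₁ w₂ h
    have : cs.wordProd (φ w₁) = cs.wordProd (φ w₂) := by
      rw [show φ w₁ = φ w₂ from congrArg Subtype.val h]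
    rw [hprod, hprod] at this
    exact Subtype.ext this
  calc Nat.card {w : W // cs.length w = i}
      ≤ Nat.card {l // l ∈ RW cs i} := Nat.card_le_card_of_injective _ hinj
    _ = (RW cs i).card := by rw [Nat.card_eq_fintype_card, Fintype.card_coe]

theorem RW_one_card : (RW cs 1).card ≤ Fintype.card B := by
  classical
  have : RW cs 1 ⊆ Finset.univ.image (fun b : B => [b]) := by
    intro ω hω
    obtain ⟨hlen, -⟩ := (mem_RW cs).1 hω
    match ω, hlen with
    | [b], _ => exact Finset.mem_image.2 ⟨b, Finset.mem_univ b, rfl⟩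
  exact le_trans (Finset.card_le_card this) (le_trans Finset.card_image_le (by simp))

theorem RW_geom_card (b₀ : B) {K : ℕ}
    (hK : ∀ b t : B, ∃ k, 1 ≤ k ∧ k ≤ K ∧ (cs.simple b * cs.simple t) ^ k = 1) (k : ℕ) :
    (RW cs (1 + k * (2 * K))).card
      ≤ Fintype.card B * ((Fintype.card B - 1) ^ (2 * K) - (Fintype.card B - 1)) ^ k := by
  induction k with
  | zero => simpa using RW_one_card cs
  | succ k ih =>
    have harith : 1 + (k + 1) * (2 * K) = (1 + k * (2 * K)) + 2 * K := by ring
    rw [harith]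
    calc (RW cs ((1 + k * (2 * K)) + 2 * K)).card
        ≤ ((Fintype.card B - 1) ^ (2 * K) - (Fintype.card B - 1)) *
            (RW cs (1 + k * (2 * K))).card := RW_card_stepK cs b₀ (by omega) hK
      _ ≤ ((Fintype.card B - 1) ^ (2 * K) - (Fintype.card B - 1)) *
            (Fintype.card B * ((Fintype.card B - 1) ^ (2 * K) - (Fintype.card B - 1)) ^ k) :=
          Nat.mul_le_mul_left _ ih
      _ = _ := by ring

theorem RW_full_card (b₀ : B) {K : ℕ}
    (hK : ∀ b t : B, ∃ k, 1 ≤ k ∧ k ≤ K ∧ (cs.simple b * cs.simple t) ^ k = 1) (k r : ℕ) :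
    (RW cs (1 + k * (2 * K) + r)).card
      ≤ (Fintype.card B - 1) ^ r *
        (Fintype.card B * ((Fintype.card B - 1) ^ (2 * K) - (Fintype.card B - 1)) ^ k) := by
  calc (RW cs ((1 + k * (2 * K)) + r)).card
      ≤ (Fintype.card B - 1) ^ r * (RW cs (1 + k * (2 * K))).card :=
        RW_card_step cs b₀ (by omega) r
    _ ≤ _ := Nat.mul_le_mul_left _ (RW_geom_card cs b₀ hK k)

end AuxGrowth

set_option maxHeartbeats 1000000 in
/-- **Theorem A.** Let `(W, S)` be a `2`-spherical Coxeter system of finite rank `n ≥ 3`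
(i.e. the order `m s t` of `s * t` is finite for all `s, t ∈ S`). Then the growth series of
`(W, S)` converges at `1 / (n - 1)`, i.e. `i ↦ c i / (n - 1) ^ i` is summable, where
`c i` is the number of elements of `W` of length `i`. -/
theorem growth_summable_of_two_spherical
    {B : Type*} [Fintype B] {W : Type*} [Group W] {M : CoxeterMatrix B}
    (cs : CoxeterSystem M W) (n : ℕ) (hn : Fintype.card B = n) (hn3 : 3 ≤ n)
    (h2sph : ∀ s t : B, orderOf (cs.simple s * cs.simple t) ≠ 0) :
    Summable (fun i : ℕ =>
      (Nat.card {w : W // cs.length w = i} : ℝ) / ((n : ℝ) - 1) ^ i) := by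
  classical
  have hBne : Nonempty B := by
    rw [← Fintype.card_pos_iff]; omega
  obtain ⟨b₀⟩ := hBne
  -- a uniform bound on the orders
  obtain ⟨K, hK⟩ : ∃ K : ℕ, ∀ b t : B, ∃ k, 1 ≤ k ∧ k ≤ K ∧ (cs.simple b * cs.simple t) ^ k = 1 := by
    refine ⟨Finset.univ.sup (fun p : B × B => orderOf (cs.simple p.1 * cs.simple p.2)), ?_⟩
    intro b t
    refine ⟨orderOf (cs.simple b * cs.simple t), Nat.pos_of_ne_zero (h2sph b t),
      Finset.le_sup (f := fun p : B × B => orderOf (cs.simple p.1 * cs.simple p.2))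
        (Finset.mem_univ (b, t)), pow_orderOf_eq_one _⟩
  have hK1 : 1 ≤ K := by obtain ⟨k, h1, h2, -⟩ := hK b₀ b₀; omega
  -- numeric abbreviations
  set q : ℕ := (n - 1) ^ (2 * K) - (n - 1) with hqdef
  set N : ℝ := (n : ℝ) - 1 with hNdef
  have hN2 : (2 : ℝ) ≤ N := by
    rw [hNdef]; have : (3 : ℝ) ≤ (n : ℝ) := by exact_mod_cast hn3
    linarith
  have hN0 : 0 < N := by linarith
  have hNpow : ∀ j : ℕ, (0:ℝ) < N ^ j := fun j => pow_pos hN0 j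
  have hsub_le : (n - 1 : ℕ) ≤ (n - 1) ^ (2 * K) := Nat.le_self_pow (by omega) _
  have hcast_n1 : ((n - 1 : ℕ) : ℝ) = N := by
    rw [hNdef]; push_cast [Nat.cast_sub (by omega : 1 ≤ n)]; ring
  have hqcast : (q : ℝ) = N ^ (2 * K) - N := by
    rw [hqdef, Nat.cast_sub hsub_le, Nat.cast_pow, hcast_n1]
  set ρ : ℝ := (q : ℝ) / N ^ (2 * K) with hρdef
  have hρ0 : 0 ≤ ρ := div_nonneg (Nat.cast_nonneg q) (le_of_lt (hNpow _))
  have hρ1 : ρ < 1 := by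
    rw [hρdef, div_lt_one (hNpow _), hqcast]
    linarith
  -- the bound on each term with index `i + 1`
  have hbound : ∀ i : ℕ,
      (Nat.card {w : W // cs.length w = i + 1} : ℝ) / N ^ (i + 1)
        ≤ ((n : ℝ) / N) * ρ ^ (i / (2 * K)) := by
    intro i
    obtain ⟨k, r, hir', hr⟩ : ∃ k r : ℕ, i = k * (2 * K) + r ∧ r < 2 * K :=
      ⟨i / (2 * K), i % (2 * K), by
        rw [mul_comm]; exact (Nat.div_add_mod i (2 * K)).symm, Nat.mod_lt _ (by omega)⟩
    have hir : i + 1 = 1 + k * (2 * K) + r := by omega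
    have hcardle : (Nat.card {w : W // cs.length w = i + 1} : ℝ)
        ≤ ((n - 1 : ℕ) ^ r * (n * q ^ k) : ℕ) := by
      have h1 := card_length_le cs (i + 1)
      have h2 := RW_full_card cs b₀ hK k r
      rw [← hir] at h2
      rw [hn] at h2
      exact_mod_cast le_trans h1 h2
    have hA : (((n - 1 : ℕ) ^ r * (n * q ^ k) : ℕ) : ℝ) = N ^ r * ((n : ℝ) * (q:ℝ) ^ k) := by
      push_cast [hcast_n1]; ring
    have hNsplit : N ^ (i + 1) = N * (N ^ (2 * K)) ^ k * N ^ r := by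
      rw [hir, pow_add, pow_add, pow_one, mul_comm k (2 * K), pow_mul]
    have key : (((n - 1 : ℕ) ^ r * (n * q ^ k) : ℕ) : ℝ) / N ^ (i + 1)
        = ((n : ℝ) / N) * ρ ^ k := by
      rw [hA, hNsplit, hρdef, div_pow, ← pow_mul]
      have hNne : N ≠ 0 := ne_of_gt hN0
      field_simp
    calc (Nat.card {w : W // cs.length w = i + 1} : ℝ) / N ^ (i + 1)
        ≤ (((n - 1 : ℕ) ^ r * (n * q ^ k) : ℕ) : ℝ) / N ^ (i + 1) := by
          apply div_le_div_of_nonneg_right hcardle (le_of_lt (hNpow _))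
      _ = ((n : ℝ) / N) * ρ ^ k := key
      _ = ((n : ℝ) / N) * ρ ^ (i / (2 * K)) := by
          have hk : i / (2 * K) = k := by
            rw [hir', mul_comm, Nat.mul_add_div (by omega), Nat.div_eq_of_lt hr, Nat.add_zero]
          rw [hk]
  -- summability of the geometric-type majorant
  haveI : NeZero (2 * K) := ⟨by omega⟩
  have hmaj : Summable (fun i : ℕ => ((n : ℝ) / N) * ρ ^ (i / (2 * K))) := by
    apply Summable.mul_left
    have hprod : Summable (fun p : ℕ × Fin (2 * K) => ρ ^ p.1) := by
      refine (summable_prod_of_nonneg (fun p => pow_nonneg hρ0 _)).2 ⟨fun x => ?_, ?_⟩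
      · exact (hasSum_fintype _).summable
      · apply Summable.congr ((summable_geometric_of_lt_one hρ0 hρ1).mul_left (2 * K : ℝ))
        intro x
        rw [tsum_fintype]
        simp [Finset.sum_const, nsmul_eq_mul]
    have := (Nat.divModEquiv (2 * K)).summable_iff.2 hprod
    exact this.congr (fun i => rfl)
  -- conclude
  rw [← summable_nat_add_iff 1]
  refine Summable.of_nonneg_of_le (fun i => ?_) (fun i => hbound i) hmaj
  · exact div_nonneg (Nat.cast_nonneg _) (le_of_lt (hNpow _))
end

section
/- Let (W,S) be a Coxeter system of finite rank n ≥ 4 whose Coxeter diagram is the complete graph (i.e. m_{st} ≥ 3 for all s ≠ t ∈ S). Then the growth function of (W,S) diverges at 1/(n-2); that is, the sequence i ↦ (c_i : ℝ)/(n-2)^i is not summable. -/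
/-!
Auxiliary development for Theorem C: the standard geometric representation of a
Coxeter system, built by hand as an action on `B → ℝ`, used to show that
"special" words (words in which no letter equals either of the two preceding
letters) represent pairwise distinct group elements.
-/

open Real Finset Matrix

namespace ThmC

variable {B : Type*} [Fintype B] [DecidableEq B]

noncomputable def kk (M : CoxeterMatrix B) (a b : B) : ℝ := -Real.cos (Real.pi / (M a b : ℕ))

noncomputable def tau (M : CoxeterMatrix B) (a : B) (v : B → ℝ) : ℝ := ∑ b, kk M a b * v b

noncomputable def sgm (M : CoxeterMatrix B) (a : B) : Function.End (B → ℝ) :=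
  fun v => v - (2 * tau M a v) • (Pi.single a 1 : B → ℝ)

variable {M : CoxeterMatrix B}

lemma kk_diag (a : B) : kk M a a = 1 := by simp [kk, M.diagonal a]

lemma kk_symm (a b : B) : kk M a b = kk M b a := by rw [kk, kk, M.symmetric]

lemma tau_add (a : B) (v w : B → ℝ) : tau M a (v + w) = tau M a v + tau M a w := by
  simp [tau, mul_add, Finset.sum_add_distrib]

lemma tau_smul_single (a b : B) (x : ℝ) : tau M a (x • (Pi.single b 1 : B → ℝ)) = x * kk M a b := by
  simp only [tau, Pi.smul_apply, smul_eq_mul]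
  rw [Finset.sum_eq_single b]
  · simp [Pi.single_eq_same]; ring
  · intro c _ hc; simp [Pi.single_eq_of_ne hc]
  · simp

lemma sgm_apply (a : B) (v : B → ℝ) : sgm M a v = v - (2 * tau M a v) • (Pi.single a 1 : B → ℝ) := rfl

lemma tau_sgm_self (a : B) (v : B → ℝ) : tau M a (sgm M a v) = -tau M a v := by
  rw [sgm_apply, sub_eq_add_neg, tau_add, ← neg_smul, tau_smul_single, kk_diag]; ring

lemma sgm_invol (a : B) (v : B → ℝ) : sgm M a (sgm M a v) = v := by
  rw [sgm_apply (v := sgm M a v), tau_sgm_self, sgm_apply]; module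

lemma mul_sgm_apply (i j : B) (hij : i ≠ j) (v : B → ℝ) (P Q : ℝ) :
    (sgm M i * sgm M j) (v + P • (Pi.single i 1 : B → ℝ) + Q • (Pi.single j 1 : B → ℝ))
      = v + ((4*(kk M i j)^2-1)*P + 2*(kk M i j)*Q
              + (4*(kk M i j)*(tau M j v) - 2*(tau M i v))) • (Pi.single i 1 : B → ℝ)
          + (-2*(kk M i j)*P - Q - 2*(tau M j v)) • (Pi.single j 1 : B → ℝ) := by
  set c := kk M i j with hc
  set α := tau M i v
  set β := tau M j v
  show sgm M i (sgm M j _) = _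
  have hji : kk M j i = c := by rw [hc, kk_symm]
  have h1 : sgm M j (v + P • (Pi.single i 1 : B → ℝ) + Q • (Pi.single j 1 : B → ℝ))
      = v + P • (Pi.single i 1 : B → ℝ) + (-Q - 2*c*P - 2*β) • (Pi.single j 1 : B → ℝ) := by
    have ht : tau M j (v + P • (Pi.single i 1 : B → ℝ) + Q • (Pi.single j 1 : B → ℝ))
        = β + c*P + Q := by
      rw [tau_add, tau_add, tau_smul_single, tau_smul_single, hji, kk_diag]; ring
    rw [sgm_apply, ht]; module
  rw [h1]
  have ht2 : tau M i (v + P • (Pi.single i 1 : B → ℝ) + (-Q - 2*c*P - 2*β) • (Pi.single j 1 : B → ℝ))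
      = α + P + c*(-Q - 2*c*P - 2*β) := by
    rw [tau_add, tau_add, tau_smul_single, tau_smul_single, kk_diag, ← hc]; ring
  rw [sgm_apply, ht2]; module

noncomputable def FF (c : ℝ) : Matrix (Fin 2) (Fin 2) ℝ := !![4*c^2-1, 2*c; -2*c, -1]

lemma sgm_order (i j : B) (hij : i ≠ j) (hm : 3 ≤ M i j)
    (hFF : (FF (kk M i j)) ^ (M i j) = 1) : (sgm M i * sgm M j) ^ (M i j) = 1 := by
  set m := M i j with hmdef
  set c := kk M i j with hc
  have hm' : (3:ℝ) ≤ (m:ℝ) := by exact_mod_cast hm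
  have hθpos : 0 < Real.pi / (m:ℝ) := by positivity
  have hθlt : Real.pi / (m:ℝ) < Real.pi := by
    rw [div_lt_iff₀ (by linarith)]
    nlinarith [Real.pi_pos]
  have hc2 : 1 - c^2 ≠ 0 := by
    have h1 : Real.sin (Real.pi / (m:ℝ)) > 0 := Real.sin_pos_of_pos_of_lt_pi hθpos hθlt
    have h2 : Real.sin (Real.pi / (m:ℝ))^2 + Real.cos (Real.pi / (m:ℝ))^2 = 1 :=
      Real.sin_sq_add_cos_sq _
    have : c^2 = Real.cos (Real.pi / (m:ℝ))^2 := by rw [hc, kk]; push_cast; ring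
    nlinarith
  funext v
  show ((sgm M i * sgm M j) ^ m) v = v
  set α := tau M i v with hα
  set β := tau M j v with hβ
  set z₁ := (c*β - α)/(1-c^2) with hz₁
  set z₂ := (c*α - β)/(1-c^2) with hz₂
  have hfix1 : (4*c^2-1)*z₁ + 2*c*z₂ + (4*c*β - 2*α) = z₁ := by
    rw [hz₁, hz₂]; field_simp; ring
  have hfix2 : -2*c*z₁ - z₂ - 2*β = z₂ := by
    rw [hz₁, hz₂]; field_simp; ring
  have hFv : ∀ u : Fin 2 → ℝ, FF c *ᵥ u = ![(4*c^2-1)*u 0 + 2*c*u 1, -2*c*u 0 - u 1] := by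
    intro u; funext k
    fin_cases k <;> simp [FF, Matrix.mulVec, dotProduct, Fin.sum_univ_two] <;> ring
  have key : ∀ t : ℕ, ((sgm M i * sgm M j) ^ t) v
      = v + (z₁ + ((FF c)^t *ᵥ ![-z₁, -z₂]) 0) • (Pi.single i 1 : B → ℝ)
          + (z₂ + ((FF c)^t *ᵥ ![-z₁, -z₂]) 1) • (Pi.single j 1 : B → ℝ) := by
    intro t
    induction t with
    | zero =>
      rw [pow_zero, pow_zero, Matrix.one_mulVec]
      show v = v + (z₁ + -z₁) • _ + (z₂ + -z₂) • _
      module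
    | succ t ih =>
      rw [pow_succ', pow_succ']
      show (sgm M i * sgm M j) (((sgm M i * sgm M j) ^ t) v) = _
      rw [ih, mul_sgm_apply i j hij, ← hc, ← hα, ← hβ, ← Matrix.mulVec_mulVec, hFv]
      set u0 := ((FF c)^t *ᵥ ![-z₁, -z₂]) 0
      set u1 := ((FF c)^t *ᵥ ![-z₁, -z₂]) 1
      have e0 : (4*c^2-1)*(z₁ + u0) + 2*c*(z₂ + u1) + (4*c*β - 2*α)
          = z₁ + ((4*c^2-1)*u0 + 2*c*u1) := by
        nlinarith [hfix1]
      have e1 : -2*c*(z₁ + u0) - (z₂ + u1) - 2*β = z₂ + (-2*c*u0 - u1) := by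
        nlinarith [hfix2]
      rw [e0, e1]
      show _ = _ + (z₁ + ![(4*c^2-1)*u0 + 2*c*u1, -2*c*u0-u1] 0) • _
          + (z₂ + ![(4*c^2-1)*u0 + 2*c*u1, -2*c*u0-u1] 1) • _
      norm_num
  have := key m
  rw [hFF, Matrix.one_mulVec] at this
  rw [this]
  show v + (z₁ + -z₁) • _ + (z₂ + -z₂) • _ = v
  module


lemma FF_sq (c : ℝ) : FF c * FF c = (4*c^2-2) • FF c - 1 := by
  ext i j
  fin_cases i <;> fin_cases j <;>
    simp [FF, Matrix.mul_apply, Fin.sum_univ_two, Matrix.one_apply] <;> ring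

lemma FF_pow_smul (c θ : ℝ) (hc : c = -Real.cos θ) (t : ℕ) :
    Real.sin (2*θ) • (FF c) ^ (t+1)
      = Real.sin (2*(t+1)*θ) • FF c - Real.sin (2*t*θ) • (1 : Matrix (Fin 2) (Fin 2) ℝ) := by
  induction t with
  | zero => norm_num
  | succ t ih =>
    have h4c : 4*c^2 - 2 = 2 * Real.cos (2*θ) := by
      rw [hc, Real.cos_two_mul]; ring
    have hsin1 : Real.sin (2*(t+1+1)*θ) = Real.sin (2*(t+1)*θ + 2*θ) := by ring_nf
    have hsin2 : Real.sin (2*(t:ℝ)*θ) = Real.sin (2*(t+1)*θ - 2*θ) := by ring_nf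
    have key : Real.sin (2*(t+1)*θ) * (4*c^2-2) - Real.sin (2*(t:ℝ)*θ)
        = Real.sin (2*((t:ℝ)+1+1)*θ) := by
      rw [h4c, hsin1, hsin2, Real.sin_add, Real.sin_sub]; ring
    calc Real.sin (2*θ) • (FF c) ^ (t+1+1)
        = (Real.sin (2*θ) • (FF c)^(t+1)) * FF c := by
          rw [pow_succ, Matrix.smul_mul]
      _ = (Real.sin (2*(t+1)*θ) • FF c - Real.sin (2*t*θ) • 1) * FF c := by rw [ih]
      _ = Real.sin (2*(t+1)*θ) • (FF c * FF c) - Real.sin (2*t*θ) • FF c := by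
          rw [Matrix.sub_mul, Matrix.smul_mul, Matrix.smul_mul, Matrix.one_mul]
      _ = Real.sin (2*(t+1)*θ) • ((4*c^2-2) • FF c - 1) - Real.sin (2*t*θ) • FF c := by
          rw [FF_sq]
      _ = (Real.sin (2*(t+1)*θ) * (4*c^2-2) - Real.sin (2*(t:ℝ)*θ)) • FF c
            - Real.sin (2*(t+1)*θ) • 1 := by
          rw [smul_sub, smul_smul, sub_smul]; abel
      _ = _ := by rw [key]; push_cast; ring_nf


lemma FF_pow_order {m : ℕ} (hm : 3 ≤ m) : (FF (-Real.cos (Real.pi / m))) ^ m = 1 := by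
  set θ := Real.pi / (m:ℝ) with hθ
  have hm' : (3:ℝ) ≤ (m:ℝ) := by exact_mod_cast hm
  have hm0 : (0:ℝ) < m := by linarith
  have hθpos : 0 < θ := by rw [hθ]; positivity
  have hθlt : 2*θ < Real.pi := by
    rw [hθ, mul_div_assoc']
    rw [div_lt_iff₀ hm0]
    nlinarith [Real.pi_pos]
  have hsin : Real.sin (2*θ) ≠ 0 :=
    ne_of_gt (Real.sin_pos_of_pos_of_lt_pi (by linarith) hθlt)
  have hmθ : (m:ℝ) * θ = Real.pi := by
    rw [hθ]; field_simp
  have h1 : m - 1 + 1 = m := by omega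
  have h2 := FF_pow_smul (-Real.cos θ) θ rfl (m-1)
  rw [h1] at h2
  have hc1 : (2*((m:ℝ)-1+1)*θ) = 2 * Real.pi := by
    push_cast; nlinarith [hmθ]
  have hc2 : (2*(((m-1:ℕ)):ℝ)*θ) = 2*Real.pi - 2*θ := by
    have : ((m-1:ℕ):ℝ) = (m:ℝ) - 1 := by
      push_cast [Nat.cast_sub (by omega : 1 ≤ m)]; ring
    rw [this]; nlinarith [hmθ]
  have hcast : ((m-1:ℕ):ℝ) + 1 = (m:ℝ) := by
    push_cast [Nat.cast_sub (by omega : 1 ≤ m)]; ring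
  rw [show (2*(((m-1:ℕ):ℝ)+1)*θ) = 2*((m:ℝ)-1+1)*θ by rw [hcast]; push_cast [Nat.cast_sub (by omega : 1 ≤ m)]; ring] at h2
  rw [hc1, hc2] at h2
  have hsin2 : Real.sin (2*Real.pi - 2*θ) = - Real.sin (2*θ) := by
    rw [Real.sin_sub, Real.sin_two_pi, Real.cos_two_pi]; ring
  rw [Real.sin_two_pi, hsin2, zero_smul, zero_sub, neg_smul, neg_neg] at h2
  have := smul_right_injective (Matrix (Fin 2) (Fin 2) ℝ) hsin
  apply this
  show Real.sin (2*θ) • (FF (-Real.cos θ))^m = Real.sin (2*θ) • (1 : Matrix (Fin 2) (Fin 2) ℝ)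
  rw [h2]


lemma sgm_apply_ne {a d : B} (hd : d ≠ a) (v : B → ℝ) : sgm M a v d = v d := by
  simp [sgm, Pi.single_eq_of_ne hd]

lemma sgm_apply_self (a : B) (v : B → ℝ) : sgm M a v a = v a - 2 * tau M a v := by
  simp [sgm, Pi.single_eq_same]

lemma sgm_self_ge (hkk : ∀ a b : B, a ≠ b → kk M a b ≤ -(1/2)) (a : B) (v : B → ℝ)
    (hpos : ∀ d, 0 ≤ v d) :
    (∑ d ∈ univ.erase a, v d) - v a ≤ sgm M a v a := by
  have ht : tau M a v ≤ v a - (1/2) * ∑ d ∈ univ.erase a, v d := by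
    have h1 : tau M a v = kk M a a * v a + ∑ d ∈ univ.erase a, kk M a d * v d :=
      (Finset.add_sum_erase _ _ (mem_univ a)).symm
    have h2 : ∑ d ∈ univ.erase a, kk M a d * v d ≤ ∑ d ∈ univ.erase a, (-(1/2)) * v d := by
      apply Finset.sum_le_sum
      intro d hd
      exact mul_le_mul_of_nonneg_right (hkk a d (Finset.ne_of_mem_erase hd).symm) (hpos d)
    rw [h1, kk_diag]
    rw [← Finset.mul_sum] at h2
    linarith
  rw [sgm_apply_self]; linarith

/-- Special words: no letter equal to either of the two letters just before it. -/
def Spec : List B → Prop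
  | a :: b :: c :: l => a ≠ b ∧ a ≠ c ∧ Spec (b :: c :: l)
  | [a, b] => a ≠ b
  | _ => True

lemma spec_nil : Spec ([] : List B) := trivial

lemma spec_singleton (a : B) : Spec [a] := trivial

lemma spec_destruct {a b : B} {l : List B} (h : Spec (a :: b :: l)) :
    a ≠ b ∧ (∀ c ∈ l.head?, a ≠ c) ∧ Spec (b :: l) := by
  cases l with
  | nil => exact ⟨h, by simp, trivial⟩
  | cons c l' =>
    obtain ⟨h1, h2, h3⟩ := h
    exact ⟨h1, by simpa using h2, h3⟩

lemma spec_cons {a b : B} {l : List B} (hab : a ≠ b) (h2 : ∀ c ∈ l.head?, a ≠ c)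
    (h : Spec (b :: l)) : Spec (a :: b :: l) := by
  cases l with
  | nil => exact hab
  | cons c l' => exact ⟨hab, by simpa using h2, h⟩

lemma spec_tail {a : B} {l : List B} (h : Spec (a :: l)) : Spec l := by
  cases l with
  | nil => trivial
  | cons b l' => exact (spec_destruct h).2.2

/-- action of a word on a vector -/
noncomputable def ac (M : CoxeterMatrix B) : List B → (B → ℝ) → (B → ℝ)
  | [], v => v
  | a :: l, v => sgm M a (ac M l v)

/-- the all-ones vector -/
def xx : B → ℝ := fun _ => 1

lemma invariant (hkk : ∀ a b : B, a ≠ b → kk M a b ≤ -(1/2)) (hn : 4 ≤ Fintype.card B) :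
    ∀ (l : List B) (a : B), Spec (a :: l) →
      (∀ d, 1 ≤ ac M (a :: l) xx d) ∧
      (∀ d, d ≠ a → ac M (a :: l) xx d < ac M (a :: l) xx a) ∧
      (∀ b ∈ l.head?, ∀ d, d ≠ a → d ≠ b → ac M (a :: l) xx d ≤ ac M (a :: l) xx b) ∧
      (l = [] → ∀ d, d ≠ a → ac M (a :: l) xx d = 1) := by
  intro l
  induction l with
  | nil =>
    intro a _
    have hne : ∀ d, d ≠ a → ac M [a] xx d = 1 := by
      intro d hd
      show sgm M a (ac M [] xx) d = 1
      rw [show ac M [] xx = xx from rfl, sgm_apply_ne hd]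
      rfl
    have hself : (2:ℝ) ≤ ac M [a] xx a := by
      have h0 : ∀ d : B, (0:ℝ) ≤ xx d := fun d => by norm_num [xx]
      have := sgm_self_ge hkk a xx h0
      have hsum : ∑ d ∈ univ.erase a, xx d = (Fintype.card B : ℝ) - 1 := by
        simp only [xx, Finset.sum_const, nsmul_eq_mul, mul_one,
          Finset.card_erase_of_mem (mem_univ a), Finset.card_univ]
        push_cast [Nat.cast_sub (by omega : 1 ≤ Fintype.card B)]
        ring
      show (2:ℝ) ≤ sgm M a xx a
      rw [hsum] at this
      have : (Fintype.card B : ℝ) - 1 - 1 ≤ sgm M a xx a := by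
        convert this using 2 <;> norm_num [xx]
      have hc : (4:ℝ) ≤ (Fintype.card B : ℝ) := by exact_mod_cast hn
      linarith
    refine ⟨?_, ?_, ?_, ?_⟩
    · intro d
      by_cases hd : d = a
      · subst hd; linarith
      · rw [hne d hd]
    · intro d hd; rw [hne d hd]; linarith
    · intro b hb; simp at hb
    · intro _ d hd; exact hne d hd
  | cons b l' ih =>
    intro a hS
    obtain ⟨hab, hac, hS'⟩ := spec_destruct hS
    obtain ⟨ih1, ih2, ih3, ih4⟩ := ih b hS'
    set v' := ac M (b :: l') xx with hv'
    have hval : ∀ d, d ≠ a → ac M (a :: b :: l') xx d = v' d := by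
      intro d hd
      show sgm M a v' d = v' d
      exact sgm_apply_ne hd v'
    have hpos : ∀ d, 0 ≤ v' d := fun d => le_trans zero_le_one (ih1 d)
    -- the key sum bound
    have hsumbound : v' a + 1 ≤ ∑ d ∈ (univ.erase a).erase b, v' d := by
      cases l' with
      | nil =>
        have hall : ∀ d, d ≠ b → v' d = 1 := ih4 rfl
        have hcard : (((univ.erase a).erase b).card : ℝ) = (Fintype.card B : ℝ) - 2 := by
          rw [Finset.card_erase_of_mem (Finset.mem_erase.2 ⟨Ne.symm hab, mem_univ b⟩),
            Finset.card_erase_of_mem (mem_univ a)]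
          obtain ⟨k, hk⟩ : ∃ k, Fintype.card B = k + 2 := ⟨Fintype.card B - 2, by omega⟩
          rw [Finset.card_univ, hk]
          push_cast
          ring
        have hsum : ∑ d ∈ (univ.erase a).erase b, v' d = ((univ.erase a).erase b).card • (1:ℝ) := by
          rw [Finset.sum_congr rfl (fun d hd => hall d (Finset.ne_of_mem_erase hd))]
          simp
        rw [hsum]
        rw [hall a hab]
        have hc : (4:ℝ) ≤ (Fintype.card B : ℝ) := by exact_mod_cast hn
        rw [nsmul_eq_mul, mul_one, hcard]
        linarith
      | cons c l'' =>
        have hbc : b ≠ c := (spec_destruct hS').1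
        have hca : a ≠ c := hac c (by simp)
        have hvac : v' a ≤ v' c := ih3 c (by simp) a hab hca
        have hcmem : c ∈ (univ.erase a).erase b :=
          Finset.mem_erase.2 ⟨Ne.symm hbc, Finset.mem_erase.2 ⟨Ne.symm hca, mem_univ c⟩⟩
        have hsplit : ∑ d ∈ (univ.erase a).erase b, v' d
            = v' c + ∑ d ∈ (((univ.erase a).erase b).erase c), v' d :=
          (Finset.add_sum_erase _ _ hcmem).symm
        have hrest : (1:ℝ) ≤ ∑ d ∈ (((univ.erase a).erase b).erase c), v' d := by
          have hcard : 1 ≤ ((((univ.erase a).erase b).erase c)).card := by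
            rw [Finset.card_erase_of_mem hcmem,
              Finset.card_erase_of_mem (Finset.mem_erase.2 ⟨Ne.symm hab, mem_univ b⟩),
              Finset.card_erase_of_mem (mem_univ a), Finset.card_univ]
            omega
          calc (1:ℝ) = (1:ℕ) • (1:ℝ) := by norm_num
          _ ≤ ((((univ.erase a).erase b).erase c)).card • (1:ℝ) := by
              apply nsmul_le_nsmul_left (by norm_num) hcard
          _ ≤ ∑ d ∈ (((univ.erase a).erase b).erase c), v' d :=
              Finset.card_nsmul_le_sum _ _ _ (fun d _ => ih1 d)
        rw [hsplit]
        linarith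
    have hva : v' b + 1 ≤ ac M (a :: b :: l') xx a := by
      have h1 := sgm_self_ge hkk a v' hpos
      have hbmem : b ∈ univ.erase a := Finset.mem_erase.2 ⟨Ne.symm hab, mem_univ b⟩
      have hsplit : ∑ d ∈ univ.erase a, v' d = v' b + ∑ d ∈ (univ.erase a).erase b, v' d :=
        (Finset.add_sum_erase _ _ hbmem).symm
      show v' b + 1 ≤ sgm M a v' a
      rw [hsplit] at h1
      linarith
    have hvb : ∀ d, d ≠ b → v' d ≤ v' b := by
      intro d hd
      exact le_of_lt (ih2 d hd)
    refine ⟨?_, ?_, ?_, ?_⟩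
    · intro d
      by_cases hdeq : d = a
      · subst hdeq; have := ih1 b; linarith
      · rw [hval d hdeq]; exact ih1 d
    · intro d hd
      rw [hval d hd]
      have : v' d ≤ v' b := by
        by_cases hdb : d = b
        · subst hdb; exact le_refl _
        · exact hvb d hdb
      linarith
    · intro b₂ hb₂ d hda hdb
      simp only [List.head?_cons, Option.mem_def, Option.some.injEq] at hb₂
      rw [← hb₂] at hdb ⊢
      rw [hval d hda, hval b (Ne.symm hab)]
      exact hvb d hdb
    · intro h; exact absurd h (by simp)


lemma ac_inj (hkk : ∀ a b : B, a ≠ b → kk M a b ≤ -(1/2)) (hn : 4 ≤ Fintype.card B) :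
    ∀ ω ω' : List B, Spec ω → Spec ω' → ac M ω xx = ac M ω' xx → ω = ω' := by
  have base : ∀ (a : B) (l : List B), Spec (a :: l) → ac M (a :: l) xx ≠ ac M [] xx := by
    intro a l hS heq
    obtain ⟨h1, h2, _, _⟩ := invariant hkk hn l a hS
    obtain ⟨d, hd⟩ := Fintype.exists_ne_of_one_lt_card (by omega) a
    have hlt := h2 d hd
    rw [heq] at hlt
    simp only [ac, xx] at hlt
    exact lt_irrefl _ hlt
  intro ω
  induction ω with
  | nil =>
    intro ω' _ hS' heq
    cases ω' with
    | nil => rfl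
    | cons a l => exact absurd heq.symm (base a l hS')
  | cons a l ihl =>
    intro ω' hS hS' heq
    cases ω' with
    | nil => exact absurd heq (base a l hS)
    | cons a' l' =>
      by_cases haa : a = a'
      · subst haa
        have heq' : ac M l xx = ac M l' xx := by
          have h := congrArg (sgm M a) heq
          show ac M l xx = ac M l' xx
          calc ac M l xx = sgm M a (sgm M a (ac M l xx)) := (sgm_invol a _).symm
            _ = sgm M a (sgm M a (ac M l' xx)) := h
            _ = ac M l' xx := sgm_invol a _
        rw [ihl l' (spec_tail hS) (spec_tail hS') heq']
      · exfalso
        obtain ⟨_, h2, _, _⟩ := invariant hkk hn l a hS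
        obtain ⟨_, h2', _, _⟩ := invariant hkk hn l' a' hS'
        have t1 := h2 a' (fun h => haa h.symm)
        have t2 := h2' a (Ne.symm (fun h => haa h.symm))
        rw [heq] at t1
        exact lt_irrefl _ (t1.trans t2)

/-- Finset of special words of length j -/
noncomputable def SF (B : Type*) [Fintype B] [DecidableEq B] : ℕ → Finset (List B)
  | 0 => {[]}
  | (j+1) => (SF B j).biUnion
      (fun l => ((univ : Finset B) \ (l.take 2).toFinset).image (fun a => a :: l))

lemma SF_mem {j : ℕ} {l : List B} (h : l ∈ SF B j) : l.length = j ∧ Spec l := by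
  induction j generalizing l with
  | zero =>
    simp only [SF, Finset.mem_singleton] at h
    subst h; exact ⟨rfl, trivial⟩
  | succ j ih =>
    simp only [SF, Finset.mem_biUnion, Finset.mem_image, Finset.mem_sdiff] at h
    obtain ⟨l', hl', a, ⟨_, ha⟩, rfl⟩ := h
    obtain ⟨hlen, hspec⟩ := ih hl'
    rw [List.mem_toFinset] at ha
    constructor
    · simp [hlen]
    · cases l' with
      | nil => trivial
      | cons b t =>
        cases t with
        | nil =>
          have : a ≠ b := by intro hab; exact ha (by simp [hab])
          exact this
        | cons c t' =>
          refine ⟨?_, ?_, hspec⟩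
          · intro hab; exact ha (by simp [hab])
          · intro hac; exact ha (by simp [hac])

lemma SF_card (hn : 4 ≤ Fintype.card B) (j : ℕ) :
    (Fintype.card B - 2)^j ≤ (SF B j).card := by
  induction j with
  | zero => simp [SF]
  | succ j ih =>
    have hdisj : ∀ l₁ ∈ SF B j, ∀ l₂ ∈ SF B j, l₁ ≠ l₂ →
        Disjoint (((univ : Finset B) \ (l₁.take 2).toFinset).image (fun a => a :: l₁))
                 (((univ : Finset B) \ (l₂.take 2).toFinset).image (fun a => a :: l₂)) := by
      intro l₁ _ l₂ _ hne
      rw [Finset.disjoint_left]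
      rintro x hx₁ hx₂
      simp only [Finset.mem_image] at hx₁ hx₂
      obtain ⟨a₁, _, rfl⟩ := hx₁
      obtain ⟨a₂, _, h⟩ := hx₂
      exact hne (List.tail_eq_of_cons_eq h.symm)
    rw [SF, Finset.card_biUnion hdisj]
    calc (Fintype.card B - 2)^(j+1) = (Fintype.card B - 2)^j * (Fintype.card B - 2) := pow_succ _ _
      _ ≤ (SF B j).card * (Fintype.card B - 2) := Nat.mul_le_mul_right _ ih
      _ = ∑ _l ∈ SF B j, (Fintype.card B - 2) := by rw [Finset.sum_const, smul_eq_mul, mul_comm]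
      _ ≤ _ := by
        apply Finset.sum_le_sum
        intro l _
        rw [Finset.card_image_of_injective _ (fun a b h => (List.cons.injEq .. ▸ h).1)]
        rw [Finset.card_sdiff_of_subset (Finset.subset_univ _), Finset.card_univ]
        have : (l.take 2).toFinset.card ≤ 2 :=
          le_trans (List.toFinset_card_le _) (by simpa using List.length_take_le 2 l)
        omega


end ThmC

open ThmC Finset in
/-- **Theorem C.** Let `(W, S)` be a Coxeter system of finite rank `n ≥ 4` whose Coxeter
diagram is the complete graph, i.e. for all `s ≠ t` in `S` the order `m s t` of `s * t` is at
least `3` (possibly infinite; `orderOf = 0` encodes infinite order). Then the growth series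
of `(W, S)` diverges at `1 / (n - 2)`, i.e. `i ↦ c i / (n - 2) ^ i` is not summable, where
`c i` is the number of elements of `W` of length `i`. -/
theorem growth_not_summable_of_complete_graph_rank_ge_four
    {B : Type*} [Fintype B] {W : Type*} [Group W] {M : CoxeterMatrix B}
    (cs : CoxeterSystem M W) (n : ℕ) (hn : Fintype.card B = n) (hn4 : 4 ≤ n)
    (hcomp : ∀ s t : B, s ≠ t →
      orderOf (cs.simple s * cs.simple t) = 0 ∨ 3 ≤ orderOf (cs.simple s * cs.simple t)) :
    ¬ Summable (fun i : ℕ =>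
      (Nat.card {w : W // cs.length w = i} : ℝ) / ((n : ℝ) - 2) ^ i) := by
  classical
  intro hsum
  -- step 2: matrix entries are 0 or ≥ 3 off the diagonal
  have hM : ∀ i j : B, i ≠ j → M i j = 0 ∨ 3 ≤ M i j := by
    intro i j hij
    rcases Nat.lt_or_ge (M i j) 3 with h3 | h3
    · left
      interval_cases h : M.M i j
      · rfl
      · exact absurd h (M.off_diagonal i j hij)
      · exfalso
        have hpow : (cs.simple i * cs.simple j) ^ 2 = 1 := by
          have := cs.simple_mul_simple_pow i j
          rwa [show M.M i j = 2 from h] at this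
        have hdvd := orderOf_dvd_of_pow_eq_one hpow
        rcases hcomp i j hij with h0 | hge
        · rw [h0] at hdvd
          exact absurd (Nat.eq_zero_of_zero_dvd hdvd) (by norm_num)
        · have := Nat.le_of_dvd (by norm_num) hdvd
          omega
    · right; exact h3
  have hnB : 4 ≤ Fintype.card B := hn ▸ hn4
  -- step 3
  have hkk : ∀ a b : B, a ≠ b → kk M a b ≤ -(1/2) := by
    intro a b hab
    rcases hM a b hab with h0 | h3
    · rw [kk, h0]
      norm_num
    · rw [kk]
      have h3' : (3:ℝ) ≤ (M a b : ℕ) := by exact_mod_cast h3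
      have h1 : Real.pi / (M a b : ℕ) ≤ Real.pi / 3 :=
        div_le_div_of_nonneg_left Real.pi_pos.le (by norm_num) h3'
      have h2 : Real.cos (Real.pi/3) ≤ Real.cos (Real.pi / (M a b : ℕ)) := by
        apply Real.cos_le_cos_of_nonneg_of_le_pi (by positivity) (by nlinarith [Real.pi_pos]) h1
      rw [Real.cos_pi_div_three] at h2
      linarith
  -- step 4: liftability
  have hlift : M.IsLiftable (fun i => sgm M i) := by
    intro i j
    by_cases hij : i = j
    · subst hij
      rw [M.diagonal, pow_one]
      funext v
      exact sgm_invol i v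
    · rcases hM i j hij with h0 | h3
      · rw [h0, pow_zero]
      · refine sgm_order i j hij h3 ?_
        have : kk M i j = -Real.cos (Real.pi / (M.M i j : ℕ)) := rfl
        rw [this]
        exact FF_pow_order h3
  set ρ : W →* Function.End (B → ℝ) := cs.lift ⟨fun i => sgm M i, hlift⟩ with hρdef
  have hρ : ∀ i, ρ (cs.simple i) = sgm M i := fun i => cs.lift_apply_simple hlift i
  have hAC : ∀ ω : List B, ρ (cs.wordProd ω) = ac M ω := by
    intro ω
    induction ω with
    | nil => rw [cs.wordProd_nil, _root_.map_one]; rfl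
    | cons a l ih =>
      rw [cs.wordProd_cons, _root_.map_mul, hρ]
      funext v
      show sgm M a (ρ (cs.wordProd l) v) = sgm M a (ac M l v)
      rw [ih]
  -- injectivity of wordProd on special words
  have hinj : ∀ ω ω' : List B, Spec ω → Spec ω' → cs.wordProd ω = cs.wordProd ω' → ω = ω' := by
    intro ω ω' h h' heq
    apply ac_inj hkk hnB ω ω' h h'
    rw [← hAC, ← hAC, heq]
  -- finiteness of length classes
  have hfin : ∀ j : ℕ, {w : W | cs.length w = j}.Finite := by
    intro j
    apply Set.Finite.subset ((List.finite_length_eq B j).image cs.wordProd)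
    intro w hw
    obtain ⟨ω, hlen, rfl⟩ := cs.exists_reduced_word w
    exact ⟨ω, by rw [Set.mem_setOf_eq, ← (hlen : cs.length (cs.wordProd ω) = ω.length)]; exact hw, rfl⟩
  -- the key counting bound
  have main : ∀ i : ℕ, ∑ j ∈ range (i+1), (Fintype.card B - 2)^j
      ≤ ∑ j ∈ range (i+1), Nat.card {w : W // cs.length w = j} := by
    intro i
    set TT : Finset W := (range (i+1)).biUnion (fun j => (SF B j).image cs.wordProd) with hTT
    have hdisj : ∀ j₁ ∈ range (i+1), ∀ j₂ ∈ range (i+1), j₁ ≠ j₂ →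
        Disjoint ((SF B j₁).image cs.wordProd) ((SF B j₂).image cs.wordProd) := by
      intro j₁ _ j₂ _ hne
      rw [Finset.disjoint_left]
      rintro w hw₁ hw₂
      obtain ⟨ω₁, hω₁, rfl⟩ := Finset.mem_image.1 hw₁
      obtain ⟨ω₂, hω₂, heq⟩ := Finset.mem_image.1 hw₂
      obtain ⟨hl₁, hs₁⟩ := SF_mem hω₁
      obtain ⟨hl₂, hs₂⟩ := SF_mem hω₂
      have := hinj ω₂ ω₁ hs₂ hs₁ heq
      subst this
      exact hne (hl₁ ▸ hl₂)
    have hcardTT : TT.card = ∑ j ∈ range (i+1), ((SF B j).image cs.wordProd).card :=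
      Finset.card_biUnion hdisj
    have himg : ∀ j, ((SF B j).image cs.wordProd).card = (SF B j).card := by
      intro j
      apply Finset.card_image_of_injOn
      intro ω₁ h₁ ω₂ h₂ heq
      exact hinj ω₁ ω₂ (SF_mem (Finset.mem_coe.1 h₁)).2 (SF_mem (Finset.mem_coe.1 h₂)).2 heq
    have hlow : ∑ j ∈ range (i+1), (Fintype.card B - 2)^j ≤ TT.card := by
      rw [hcardTT]
      apply Finset.sum_le_sum
      intro j _
      rw [himg j]
      exact SF_card hnB j
    -- fiberwise count
    have hmem : ∀ w ∈ TT, cs.length w ∈ range (i+1) := by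
      intro w hw
      obtain ⟨j, hj, hw'⟩ := Finset.mem_biUnion.1 hw
      obtain ⟨ω, hω, rfl⟩ := Finset.mem_image.1 hw'
      obtain ⟨hl, _⟩ := SF_mem hω
      rw [Finset.mem_range] at hj ⊢
      have := cs.length_wordProd_le ω
      omega
    have hfiber : TT.card = ∑ j ∈ range (i+1), (TT.filter (fun w => cs.length w = j)).card :=
      Finset.card_eq_sum_card_fiberwise hmem
    have hfilter : ∀ j, (TT.filter (fun w => cs.length w = j)).card
        ≤ Nat.card {w : W // cs.length w = j} := by
      intro j
      have hsub : TT.filter (fun w => cs.length w = j) ⊆ (hfin j).toFinset := by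
        intro w hw
        rw [Set.Finite.mem_toFinset]
        exact (Finset.mem_filter.1 hw).2
      calc (TT.filter (fun w => cs.length w = j)).card ≤ (hfin j).toFinset.card :=
            Finset.card_le_card hsub
        _ = Nat.card {w : W | cs.length w = j} := by
            rw [Nat.card_coe_set_eq, Set.ncard_eq_toFinset_card _ (hfin j)]
        _ = Nat.card {w : W // cs.length w = j} := rfl
    calc ∑ j ∈ range (i+1), (Fintype.card B - 2)^j ≤ TT.card := hlow
      _ = ∑ j ∈ range (i+1), (TT.filter (fun w => cs.length w = j)).card := hfiber
      _ ≤ ∑ j ∈ range (i+1), Nat.card {w : W // cs.length w = j} :=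
          Finset.sum_le_sum (fun j _ => hfilter j)
  -- final analytic contradiction
  set r : ℝ := (n:ℝ) - 2 with hrdef
  have hn' : (4:ℝ) ≤ (n:ℝ) := by exact_mod_cast hn4
  have hr2 : (2:ℝ) ≤ r := by rw [hrdef]; linarith
  have hr0 : (0:ℝ) < r := by linarith
  set c : ℕ → ℝ := fun j => (Nat.card {w : W // cs.length w = j} : ℝ) with hcdef
  have hcnn : ∀ j, 0 ≤ c j := fun j => Nat.cast_nonneg _
  have hcast : ∀ j : ℕ, (((Fintype.card B - 2)^j : ℕ) : ℝ) = r^j := by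
    intro j
    rw [hrdef, ← hn]
    push_cast [Nat.cast_sub (by omega : 2 ≤ Fintype.card B)]
    ring
  have mainR : ∀ i : ℕ, ∑ j ∈ range (i+1), r^j ≤ ∑ j ∈ range (i+1), c j := by
    intro i
    have := main i
    calc ∑ j ∈ range (i+1), r^j = ∑ j ∈ range (i+1), (((Fintype.card B - 2)^j : ℕ) : ℝ) := by
          exact Finset.sum_congr rfl (fun j _ => (hcast j).symm)
      _ = ((∑ j ∈ range (i+1), (Fintype.card B - 2)^j : ℕ) : ℝ) := by push_cast; ring
      _ ≤ ((∑ j ∈ range (i+1), Nat.card {w : W // cs.length w = j} : ℕ) : ℝ) := by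
          exact_mod_cast this
      _ = ∑ j ∈ range (i+1), c j := by push_cast; rfl
  -- tail bound from summability
  set ε : ℝ := 1/(2*r) with hεdef
  have hε0 : 0 < ε := by rw [hεdef]; positivity
  have hεhalf : ε ≤ 1/4 := by
    rw [hεdef]
    rw [div_le_div_iff₀ (by linarith) (by norm_num)]
    linarith
  have hev : ∀ᶠ j in Filter.atTop, c j / r^j < ε :=
    hsum.tendsto_atTop_zero.eventually_lt_const hε0
  obtain ⟨N, hN⟩ := Filter.eventually_atTop.1 hev
  have hcb : ∀ j, N ≤ j → c j ≤ ε * r^j := by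
    intro j hj
    have h1 := (hN j hj).le
    have h2 : (0:ℝ) < r^j := by positivity
    calc c j = (c j / r^j) * r^j := by field_simp
      _ ≤ ε * r^j := by nlinarith
  set D : ℝ := ∑ j ∈ range N, c j with hDdef
  have key : ∀ i : ℕ, r^i ≤ 2*D := by
    intro i
    set G : ℝ := ∑ j ∈ range (i+1), r^j with hGdef
    have hGnn : ∀ j ∈ range (i+1), (0:ℝ) ≤ r^j := fun j _ => by positivity
    have hsingle : r^i ≤ G := Finset.single_le_sum hGnn (Finset.self_mem_range_succ i)
    have hsplit : ∑ j ∈ range (i+1), c j ≤ D + ε * G := by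
      rcases le_or_gt N (i+1) with hNi | hNi
      · have h1 : ∑ j ∈ range N, c j + ∑ j ∈ Finset.Ico N (i+1), c j
            = ∑ j ∈ range (i+1), c j := by
          simp only [Finset.range_eq_Ico]
          exact Finset.sum_Ico_consecutive _ (Nat.zero_le N) hNi
        have h2 : ∑ j ∈ Finset.Ico N (i+1), c j ≤ ∑ j ∈ Finset.Ico N (i+1), ε * r^j :=
          Finset.sum_le_sum (fun j hj => hcb j (Finset.mem_Ico.1 hj).1)
        have h3 : ∑ j ∈ Finset.Ico N (i+1), ε * r^j ≤ ε * G := by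
          rw [hGdef, Finset.mul_sum]
          apply Finset.sum_le_sum_of_subset_of_nonneg
          · rw [Finset.range_eq_Ico]
            exact Finset.Ico_subset_Ico (Nat.zero_le N) le_rfl
          · intro j _ _; positivity
        have h4 : D = ∑ j ∈ range N, c j := hDdef
        linarith
      · have h1 : ∑ j ∈ range (i+1), c j ≤ D := by
          apply Finset.sum_le_sum_of_subset_of_nonneg
          · exact Finset.range_subset_range.2 (by omega)
          · intro j _ _; exact hcnn j
        have h2 : 0 ≤ ε * G := by
          apply mul_nonneg hε0.le
          exact Finset.sum_nonneg hGnn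
        linarith
    have hGD : G ≤ D + ε * G := le_trans (mainR i) hsplit
    have hGnn' : (0:ℝ) ≤ G := Finset.sum_nonneg hGnn
    nlinarith
  -- contradiction: r^i unbounded
  obtain ⟨i, hi⟩ := pow_unbounded_of_one_lt (2*D) (by linarith : (1:ℝ) < r)
  exact absurd (key i) (not_le.2 hi)
end

section
/- Let (W,S) be a 2-spherical Coxeter system whose Coxeter diagram is the complete graph. Suppose w ∈ W and s ≠ t ∈ S satisfy ℓ(ws) = ℓ(w) + 1 = ℓ(wt), and suppose w' ∈ ⟨s,t⟩ with ℓ(w') ≥ 2. Then for every r ∈ S \ {s,t} one has ℓ(w w' r) = ℓ(w) + ℓ(w') + 1. -/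
open List CoxeterSystem
open scoped Classical

namespace CoxAux

variable {B : Type*} {W : Type*} [Group W] {M : CoxeterMatrix B} (cs : CoxeterSystem M W)

local prefix:100 "σ" => cs.simple
local prefix:100 "π" => cs.wordProd
local prefix:100 "ℓ" => cs.length

noncomputable def tfun (i : B) : W × ℤˣ → W × ℤˣ :=
  fun p => (σ i * p.1 * σ i, p.2 * (if p.1 = σ i then -1 else 1))

lemma tfun_invol (i : B) : Function.Involutive (tfun cs i) := by
  intro ⟨w, ε⟩
  have h1 : σ i * (σ i * w * σ i) * σ i = w := by
    simp only [← mul_assoc, cs.simple_mul_simple_self, one_mul]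
    exact cs.simple_mul_simple_cancel_right i
  have h2 : (σ i * w * σ i = σ i) ↔ (w = σ i) := by
    constructor
    · intro h
      have := congrArg (fun z => σ i * z * σ i) h
      rw [h1] at this
      rw [this]
      simp only [← mul_assoc, cs.simple_mul_simple_self, one_mul]
    · intro h; rw [h]
      simp only [cs.simple_mul_simple_self, one_mul]
  simp only [tfun, h1, h2]
  refine Prod.ext rfl ?_
  by_cases h : w = σ i <;> simp [h]

noncomputable def tswap (i : B) : Equiv.Perm (W × ℤˣ) := (tfun_invol cs i).toPerm

lemma tswap_apply (i : B) (w : W) (ε : ℤˣ) :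
    tswap cs i (w, ε) = (σ i * w * σ i, ε * (if w = σ i then -1 else 1)) := rfl

private lemma prod_double {M' : Type*} [CommMonoid M'] (f : ℕ → M') (n : ℕ) :
    ∏ k ∈ Finset.range n, (f (2*k) * f (2*k+1)) = ∏ l ∈ Finset.range (2*n), f l := by
  induction n with
  | zero => simp
  | succ n ih =>
    rw [Finset.prod_range_succ, ih, show 2*(n+1) = 2*n + 1 + 1 by ring,
      Finset.prod_range_succ, Finset.prod_range_succ, ← mul_assoc]

lemma tswap_liftable : M.IsLiftable (fun i => (tswap cs i : Equiv.Perm (W × ℤˣ))) := by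
  intro i j
  set m := M i j with hmdef
  set q : W := σ j * σ i with hq
  have hqinv : q⁻¹ = σ i * σ j := by
    rw [hq, mul_inv_rev, cs.inv_simple, cs.inv_simple]
  have hqm : q ^ m = 1 := by
    rw [hq, hmdef]; exact cs.simple_mul_simple_pow' i j
  have hbase : σ j * q * σ j = q⁻¹ := by
    rw [hq, hqinv, cs.simple_mul_simple_cancel_left]
  have hbase' : σ j * q⁻¹ * σ j = q := by
    have := congrArg (fun z => σ j * z * σ j) hbase
    rw [← this]
    simp only [← mul_assoc, cs.simple_mul_simple_self, one_mul]
    exact cs.simple_mul_simple_cancel_right j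
  have conj_q : ∀ k : ℕ, σ j * q ^ k * σ j = (q⁻¹) ^ k := by
    intro k
    calc σ j * q ^ k * σ j = (σ j * q * (σ j)⁻¹) ^ k := by
          rw [conj_pow, cs.inv_simple]
      _ = (q⁻¹) ^ k := by rw [cs.inv_simple, hbase]
  have conj_q' : ∀ k : ℕ, σ j * (q⁻¹) ^ k * σ j = q ^ k := by
    intro k
    calc σ j * (q⁻¹) ^ k * σ j = (σ j * q⁻¹ * (σ j)⁻¹) ^ k := by
          rw [conj_pow, cs.inv_simple]
      _ = q ^ k := by rw [cs.inv_simple, hbase']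
  have swap_q : ∀ k : ℕ, σ j * q ^ k = (q⁻¹) ^ k * σ j := by
    intro k
    have := conj_q k
    have h2 := congrArg (fun z => z * σ j) this
    rwa [mul_assoc, cs.simple_mul_simple_self, mul_one] at h2
  have swap_q' : ∀ k : ℕ, σ j * (q⁻¹) ^ k = q ^ k * σ j := by
    intro k
    have := conj_q' k
    have h2 := congrArg (fun z => z * σ j) this
    rwa [mul_assoc, cs.simple_mul_simple_self, mul_one] at h2
  have key : ∀ (n : ℕ) (w : W) (ε : ℤˣ),
      ((tswap cs i * tswap cs j) ^ n) (w, ε) =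
        ((q⁻¹) ^ n * w * q ^ n,
          ε * ∏ l ∈ Finset.range (2*n), (if w = q ^ l * σ j then (-1 : ℤˣ) else 1)) := by
    intro n
    induction n with
    | zero => intro w ε; simp
    | succ n ih =>
      intro w ε
      rw [pow_succ', Equiv.Perm.mul_apply, ih, Equiv.Perm.mul_apply]
      rw [tswap_apply, tswap_apply]
      set v : W := (q⁻¹) ^ n * w * q ^ n with hv
      have hρ : σ i * (σ j * v * σ j) * σ i = (q⁻¹) ^ (n+1) * w * q ^ (n+1) := by
        have e1 : σ i * (σ j * v * σ j) * σ i = (σ i * σ j) * v * (σ j * σ i) := by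
          group
        rw [e1, ← hq, ← hqinv, hv, pow_succ (q⁻¹) n, pow_succ q n]
        group
      have hval : q ^ n * (σ j * (q ^ n)⁻¹) = q ^ (2*n) * σ j := by
        rw [← inv_pow, swap_q', two_mul, pow_add]
        group
      have hc1 : (v = σ j) ↔ (w = q ^ (2*n) * σ j) := by
        rw [← hval]
        constructor
        · intro h
          have : w = q ^ n * (v * (q ^ n)⁻¹) := by rw [hv]; group
          rw [this, h]
        · intro h
          rw [hv, h]; group
      have hc2 : (σ j * v * σ j = σ i) ↔ (w = q ^ (2*n+1) * σ j) := by
        have hval2 : q ^ n * ((q * σ j) * (q ^ n)⁻¹) = q ^ (2*n+1) * σ j := by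
          rw [← inv_pow, mul_assoc q, swap_q']
          rw [show q ^ (2*n+1) = q ^ n * (q * q ^ n) by rw [two_mul, pow_add, pow_succ']; group]
          group
        have h3 : (σ j * v * σ j = σ i) ↔ (v = σ j * σ i * σ j) := by
          constructor
          · intro h
            have := congrArg (fun z => σ j * z * σ j) h
            rw [← this]
            simp only [← mul_assoc, cs.simple_mul_simple_self, one_mul]
            rw [cs.simple_mul_simple_cancel_right]
          · intro h
            rw [h]
            simp only [← mul_assoc, cs.simple_mul_simple_self, one_mul]
            rw [cs.simple_mul_simple_cancel_right]
        have h4 : σ j * σ i * σ j = q * σ j := by rw [hq]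
        rw [h3, h4, ← hval2]
        constructor
        · intro h
          have : w = q ^ n * (v * (q ^ n)⁻¹) := by rw [hv]; group
          rw [this, h]
        · intro h
          rw [hv, h]; group
      refine Prod.ext hρ ?_
      simp only
      rw [show 2*(n+1) = 2*n + 1 + 1 by ring, Finset.prod_range_succ, Finset.prod_range_succ]
      rw [← hc1, ← hc2]
      by_cases h1 : v = σ j <;> by_cases h2 : σ j * v * σ j = σ i <;>
        simp [h1, h2, mul_assoc, mul_comm, mul_left_comm]
  -- conclude
  refine Equiv.ext fun p => ?_
  obtain ⟨w, ε⟩ := p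
  rw [key m w ε]
  have hq1 : (q⁻¹) ^ m = 1 := by rw [inv_pow, hqm, inv_one]
  have hsign : (∏ l ∈ Finset.range (2*m), (if w = q ^ l * σ j then (-1 : ℤˣ) else 1)) = 1 := by
    have hper : ∀ l, (if w = q ^ (m + l) * σ j then (-1 : ℤˣ) else 1)
        = (if w = q ^ l * σ j then (-1 : ℤˣ) else 1) := by
      intro l
      rw [pow_add, hqm, one_mul]
    rw [two_mul, Finset.prod_range_add]
    simp only [hper]
    rw [← Finset.prod_mul_distrib]
    apply Finset.prod_eq_one
    intro l _
    by_cases h : w = q ^ l * σ j <;> simp [h]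
  rw [hq1, hqm, hsign]
  simp

noncomputable def eta : W →* Equiv.Perm (W × ℤˣ) :=
  CoxeterSystem.lift cs ⟨fun i => tswap cs i, tswap_liftable cs⟩

lemma eta_simple (i : B) : eta cs (σ i) = tswap cs i :=
  cs.lift_apply_simple (tswap_liftable cs) i

/-- The sign by which `w` acts on the reflection slot `t`. -/
noncomputable def nn (w t : W) : ℤˣ := ((eta cs w) (t, 1)).2

lemma eta_apply (w : W) : ∀ (t : W) (ε : ℤˣ),
    eta cs w (t, ε) = (w * t * w⁻¹, ε * nn cs w t) := by
  induction w using cs.simple_induction with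
  | simple i =>
    intro t ε
    rw [eta_simple, tswap_apply]
    have : nn cs (σ i) t = (if t = σ i then -1 else 1) := by
      rw [nn, eta_simple, tswap_apply, one_mul]
    rw [this, cs.inv_simple]
  | one =>
    intro t ε
    have : nn cs (1 : W) t = 1 := by rw [nn, map_one]; rfl
    rw [map_one, this]
    simp
  | mul u v hu hv =>
    intro t ε
    have h1 : nn cs (u * v) t = nn cs u (v * t * v⁻¹) * nn cs v t := by
      rw [nn, map_mul, Equiv.Perm.mul_apply, hv, hu, one_mul, mul_comm]
    rw [map_mul, Equiv.Perm.mul_apply, hv, hu, h1]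
    refine Prod.ext ?_ ?_
    · simp only; group
    · simp only
      rw [mul_assoc, mul_comm (nn cs v t)]

lemma nn_mul (u v t : W) : nn cs (u * v) t = nn cs u (v * t * v⁻¹) * nn cs v t := by
  rw [nn, map_mul, Equiv.Perm.mul_apply, eta_apply, eta_apply, one_mul, mul_comm]

lemma nn_simple (i : B) (t : W) : nn cs (σ i) t = (if t = σ i then -1 else 1) := by
  rw [nn, eta_simple, tswap_apply, one_mul]

lemma nn_one (t : W) : nn cs 1 t = 1 := by rw [nn, map_one]; rfl

lemma nn_inv_mul (u t : W) : nn cs u (u⁻¹ * t * u) * nn cs u⁻¹ t = 1 := by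
  have := nn_mul cs u u⁻¹ t
  rw [mul_inv_cancel, nn_one, inv_inv] at this
  exact this.symm

lemma nn_wordProd (ω : List B) (t : W) :
    nn cs (π ω) t = (-1 : ℤˣ) ^ (List.count t (cs.rightInvSeq ω)) := by
  induction ω with
  | nil => simp [nn_one]
  | cons i ω ih =>
    rw [cs.wordProd_cons, nn_mul, nn_simple, ih, rightInvSeq]
    rw [List.count_cons]
    have hcond : (π ω * t * (π ω)⁻¹ = σ i) ↔ (t = (π ω)⁻¹ * σ i * π ω) := by
      constructor
      · intro h
        rw [← h]; group
      · intro h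
        rw [h]; group
    by_cases h : t = (π ω)⁻¹ * σ i * π ω
    · rw [if_pos (hcond.2 h)]
      simp only [← h, beq_self_eq_true, if_true, pow_succ]
      rw [mul_comm]
    · rw [if_neg (fun hc => h (hcond.1 hc))]
      rw [if_neg (fun hc => h (Eq.symm (beq_iff_eq.1 hc))), Nat.add_zero, one_mul]

lemma nn_reflection_self {t : W} (ht : cs.IsReflection t) : nn cs t t = -1 := by
  obtain ⟨u, i, rfl⟩ := ht
  have e1 := nn_mul cs (u * σ i) u⁻¹ (u * σ i * u⁻¹)
  rw [inv_inv] at e1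
  have e2 : u⁻¹ * (u * σ i * u⁻¹) * u = σ i := by group
  rw [e1, e2, nn_mul, nn_simple]
  have e3 : σ i * σ i * (σ i)⁻¹ = σ i := by group
  rw [e3, if_pos rfl]
  have e4 : nn cs u (σ i) * nn cs u⁻¹ (u * σ i * u⁻¹) = 1 := by
    have := nn_inv_mul cs u (u * σ i * u⁻¹)
    rwa [e2] at this
  have : nn cs u (σ i) * -1 * nn cs u⁻¹ (u * σ i * u⁻¹)
      = -(nn cs u (σ i) * nn cs u⁻¹ (u * σ i * u⁻¹)) := by
    rw [mul_comm _ (-1 : ℤˣ), mul_assoc, neg_one_mul]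
  rw [this, e4]

lemma mem_rightInvSeq_of_nn_neg {w t : W} {ω : List B} (hω : π ω = w)
    (hneg : nn cs w t = -1) : t ∈ cs.rightInvSeq ω := by
  have := nn_wordProd cs ω t
  rw [hω, hneg] at this
  by_contra hmem
  rw [List.count_eq_zero_of_not_mem hmem, pow_zero] at this
  exact absurd this.symm (by decide)

/-- Exchange: if `nn w t = -1` then right multiplication by `t` deletes a letter. -/
lemma exchange_of_nn_neg {w t : W} {ω : List B} (hω : π ω = w)
    (hneg : nn cs w t = -1) : ∃ k < ω.length, w * t = π (ω.eraseIdx k) := by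
  have hmem := mem_rightInvSeq_of_nn_neg cs hω hneg
  obtain ⟨k, hk, hget⟩ := List.mem_iff_getElem.1 hmem
  rw [cs.length_rightInvSeq] at hk
  refine ⟨k, hk, ?_⟩
  have := cs.wordProd_mul_getD_rightInvSeq ω k
  rw [List.getD_eq_getElem?_getD, List.getElem?_eq_getElem (by rwa [cs.length_rightInvSeq]),
    Option.getD_some, hget, hω] at this
  exact this

lemma length_mul_lt_of_nn_neg {w t : W} (hrefl : cs.IsReflection t)
    (hneg : nn cs w t = -1) : ℓ (w * t) < ℓ w := by
  obtain ⟨ω, hlen, hw⟩ := cs.exists_reduced_word w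
  unfold CoxeterSystem.IsReduced at hlen
  rw [← hw] at hlen
  obtain ⟨k, hk, he⟩ := exchange_of_nn_neg cs hw.symm hneg
  have h1 : ℓ (w * t) ≤ (ω.eraseIdx k).length := he ▸ cs.length_wordProd_le _
  have h2 : (ω.eraseIdx k).length = ω.length - 1 := by
    rw [List.length_eraseIdx]; simp [hk]
  have h3 : 0 < ω.length := Nat.zero_lt_of_lt hk
  omega

lemma nn_neg_iff_descent {w t : W} (hrefl : cs.IsReflection t) :
    nn cs w t = -1 ↔ ℓ (w * t) < ℓ w := by
  constructor
  · exact length_mul_lt_of_nn_neg cs hrefl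
  · intro hlt
    rcases Int.units_eq_one_or (nn cs w t) with h | h
    · exfalso
      have : nn cs (w * t) t = -1 := by
        rw [nn_mul, hrefl.inv]
        have e : t * t * t = t := by rw [hrefl.mul_self, one_mul]
        rw [e, h, one_mul, nn_reflection_self cs hrefl]
      have := length_mul_lt_of_nn_neg cs hrefl this
      rw [mul_assoc, hrefl.mul_self, mul_one] at this
      omega
    · exact h

/-- Strong exchange for arbitrary words. -/
lemma strong_exchange {w t : W} {ω : List B} (hω : π ω = w) (hrefl : cs.IsReflection t)
    (hlt : ℓ (w * t) < ℓ w) : ∃ k < ω.length, w * t = π (ω.eraseIdx k) := by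
  exact exchange_of_nn_neg cs hω ((nn_neg_iff_descent cs hrefl).2 hlt)

/-! ### Part 2: dihedral subgroups and alternating words -/

section Dihedral

local notation "aw" => CoxeterSystem.alternatingWord

lemma ord_symm (a b : B) : orderOf (σ b * σ a) = orderOf (σ a * σ b) := by
  have h : σ b * σ a = (σ a * σ b)⁻¹ := by
    rw [mul_inv_rev, cs.inv_simple, cs.inv_simple]
  rw [h, orderOf_inv]

lemma alt_cons (a b : B) (l : ℕ) :
    π (aw a b (l+1)) = σ (if Even l then b else a) * π (aw a b l) := by
  rw [CoxeterSystem.alternatingWord_succ', cs.wordProd_cons]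

lemma alt_concat (a b : B) (l : ℕ) :
    π (aw a b (l+1)) = π (aw b a l) * σ b := by
  rw [CoxeterSystem.alternatingWord_succ]
  rw [List.concat_eq_append, cs.wordProd_append]
  simp [cs.wordProd_singleton]

lemma alt_mul_last (a b : B) (l : ℕ) :
    π (aw a b (l+1)) * σ b = π (aw b a l) := by
  rw [alt_concat, mul_assoc, cs.simple_mul_simple_self, mul_one]

lemma alt_drop (a b : B) : ∀ (k l : ℕ), List.drop k (aw a b l) = aw a b (l - k) := by
  intro k
  induction k with
  | zero => intro l; simp
  | succ k ih =>
    intro l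
    match l with
    | 0 => simp [CoxeterSystem.alternatingWord]
    | l + 1 =>
      rw [CoxeterSystem.alternatingWord_succ', List.drop_succ_cons, ih l]
      congr 1
      omega

lemma alt_head (a b : B) (l : ℕ) :
    (aw a b (l+1))[0]? = some (if Even l then b else a) := by
  rw [CoxeterSystem.alternatingWord_succ']
  simp

lemma alt_get? (a b : B) (l k : ℕ) (hk : k < l) :
    (aw a b l)[k]? = some (if Even (l - (k+1)) then b else a) := by
  have h1 : (aw a b l)[k]? = ((aw a b l).drop k)[0]? := by
    rw [List.getElem?_drop, Nat.add_zero]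
  rw [h1, alt_drop]
  have h2 : l - k = (l - (k+1)) + 1 := by omega
  rw [h2, alt_head]

lemma simple_swap_pow (a b : B) (k : ℕ) :
    σ b * (σ a * σ b) ^ k = (σ b * σ a) ^ k * σ b := by
  induction k with
  | zero => simp
  | succ k ih =>
    rw [pow_succ, ← mul_assoc, ih, pow_succ]
    have : σ b * (σ a * σ b) = (σ b * σ a) * σ b := by group
    rw [mul_assoc ((σ b * σ a)^k), this, ← mul_assoc, ← mul_assoc]

lemma conj_alt (a b : B) (d : ℕ) :
    (π (aw a b d))⁻¹ * σ (if Even d then b else a) * π (aw a b d)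
      = (σ b * σ a) ^ d * σ b := by
  have hpinv : (σ a * σ b)⁻¹ = σ b * σ a := by
    rw [mul_inv_rev, cs.inv_simple, cs.inv_simple]
  have hqe : ∀ k : ℕ, (σ b * σ a) ^ k = ((σ a * σ b) ^ k)⁻¹ := by
    intro k
    rw [← hpinv, inv_pow]
  have hswap : ∀ k : ℕ, σ b * (σ a * σ b) ^ k = (σ b * σ a) ^ k * σ b :=
    simple_swap_pow cs a b
  rcases Nat.even_or_odd d with hd | hd
  · obtain ⟨e, rfl⟩ := hd
    have h2 : (e + e) / 2 = e := by omega
    rw [if_pos ⟨e, rfl⟩, cs.prod_alternatingWord_eq_mul_pow, if_pos ⟨e, rfl⟩, h2, one_mul]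
    calc ((σ a * σ b) ^ e)⁻¹ * σ b * (σ a * σ b) ^ e
        = ((σ a * σ b) ^ e)⁻¹ * (σ b * (σ a * σ b) ^ e) := by rw [mul_assoc]
      _ = ((σ a * σ b) ^ e)⁻¹ * ((σ b * σ a) ^ e * σ b) := by rw [hswap e]
      _ = (σ b * σ a) ^ e * ((σ b * σ a) ^ e * σ b) := by rw [← hqe e]
      _ = (σ b * σ a) ^ (e + e) * σ b := by rw [← mul_assoc, ← pow_add]
  · obtain ⟨e, rfl⟩ := hd
    have heo : ¬ Even (2*e + 1) := by simp [Nat.even_add_one, parity_simps]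
    have h2 : (2*e + 1) / 2 = e := by omega
    rw [if_neg heo, cs.prod_alternatingWord_eq_mul_pow, if_neg heo, h2]
    have hinv : (σ b * (σ a * σ b) ^ e)⁻¹ = (σ b * σ a) ^ e * σ b := by
      rw [mul_inv_rev, cs.inv_simple, ← hqe e]
    rw [hinv]
    have e1 : (σ b * σ a) ^ e * σ b * σ a * (σ b * (σ a * σ b) ^ e)
        = (σ b * σ a) ^ e * (σ b * σ a) * (σ b * (σ a * σ b) ^ e) := by
      simp only [← mul_assoc]
    rw [e1, hswap e, ← pow_succ, ← mul_assoc, ← pow_add]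
    have : e + 1 + e = 2 * e + 1 := by omega
    rw [this]

lemma ris_alt (a b : B) (l : ℕ) {t : W} (ht : t ∈ cs.rightInvSeq (aw a b l)) :
    ∃ d < l, t = (σ b * σ a) ^ d * σ b := by
  obtain ⟨k, hk, hget⟩ := List.mem_iff_getElem.1 ht
  rw [cs.length_rightInvSeq, CoxeterSystem.length_alternatingWord] at hk
  refine ⟨l - (k+1), by omega, ?_⟩
  have hgd : (cs.rightInvSeq (aw a b l)).getD k 1 = t := by
    rw [List.getD_eq_getElem?_getD, List.getElem?_eq_getElem
      (by rw [cs.length_rightInvSeq, CoxeterSystem.length_alternatingWord]; omega),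
      Option.getD_some, hget]
  rw [← hgd, cs.getD_rightInvSeq, alt_drop, alt_get? a b l k hk]
  have h2 : l - (k+1) = l - (k+1) := rfl
  rw [Option.map_some, Option.getD_some]
  exact conj_alt cs a b (l - (k+1))

lemma isReduced_alt (l : ℕ) : ∀ (a b : B), l ≤ orderOf (σ a * σ b) →
    cs.IsReduced (aw a b l) := by
  induction l with
  | zero =>
    intro a b _
    simp [CoxeterSystem.IsReduced, CoxeterSystem.alternatingWord]
  | succ l ih =>
    intro a b hl
    have hred : cs.IsReduced (aw b a l) := by
      apply ih b a
      rw [ord_symm]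
      omega
    have hlen : ℓ (π (aw b a l)) = l := by
      rw [hred, CoxeterSystem.length_alternatingWord]
    unfold CoxeterSystem.IsReduced
    rw [CoxeterSystem.length_alternatingWord]
    rw [CoxeterSystem.alternatingWord_succ, List.concat_eq_append, cs.wordProd_append]
    simp only [cs.wordProd_singleton]
    rcases cs.length_mul_simple (π (aw b a l)) b with h | h
    · rw [h, hlen]
    · exfalso
      rw [hlen] at h
      have hdesc : ℓ (π (aw b a l) * σ b) < ℓ (π (aw b a l)) := by omega
      have hmem : σ b ∈ cs.rightInvSeq (aw b a l) := by
        apply mem_rightInvSeq_of_nn_neg cs rfl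
        exact (nn_neg_iff_descent cs (cs.isReflection_simple b)).2 hdesc
      obtain ⟨d, hd, heq⟩ := ris_alt cs b a l hmem
      have hcontra : (σ a * σ b) ^ (d + 1) = 1 := by
        have h1 : σ b * σ a = (σ a * σ b) ^ d := by
          conv_lhs => rw [heq]
          rw [mul_assoc, cs.simple_mul_simple_self, mul_one]
        rw [pow_succ, ← h1]
        simp only [← mul_assoc]
        rw [cs.simple_mul_simple_cancel_right, cs.simple_mul_simple_self]
      have hdvd : orderOf (σ a * σ b) ∣ d + 1 := orderOf_dvd_of_pow_eq_one hcontra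
      have := Nat.le_of_dvd (by omega) hdvd
      omega

lemma length_alt (a b : B) (l : ℕ) (hl : l ≤ orderOf (σ a * σ b)) :
    ℓ (π (aw a b l)) = l := by
  have h := isReduced_alt cs l a b hl
  unfold CoxeterSystem.IsReduced at h
  rwa [CoxeterSystem.length_alternatingWord] at h

lemma longest_eq (a b : B) (hfin : orderOf (σ a * σ b) ≠ 0) :
    π (aw a b (orderOf (σ a * σ b))) = π (aw b a (orderOf (σ a * σ b))) := by
  set m := orderOf (σ a * σ b) with hm
  have hpm : (σ a * σ b) ^ m = 1 := pow_orderOf_eq_one _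
  have hqe : ∀ k : ℕ, (σ b * σ a) ^ k = ((σ a * σ b) ^ k)⁻¹ := by
    intro k
    rw [show σ b * σ a = (σ a * σ b)⁻¹ by rw [mul_inv_rev, cs.inv_simple, cs.inv_simple], inv_pow]
  rcases Nat.even_or_odd m with hev | hod
  · obtain ⟨e, he⟩ := hev
    rw [cs.prod_alternatingWord_eq_mul_pow, cs.prod_alternatingWord_eq_mul_pow,
      if_pos ⟨e, he⟩, if_pos ⟨e, he⟩, one_mul, one_mul]
    have h2 : m / 2 = e := by omega
    rw [h2]
    have h3 : (σ a * σ b) ^ e * (σ a * σ b) ^ e = 1 := by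
      rw [← pow_add, show e + e = m by omega, hpm]
    rw [hqe e]
    exact eq_inv_of_mul_eq_one_left h3
  · obtain ⟨e, he⟩ := hod
    have hno : ¬ Even m := by rw [he]; simp [Nat.even_add_one, parity_simps]
    rw [cs.prod_alternatingWord_eq_mul_pow, cs.prod_alternatingWord_eq_mul_pow,
      if_neg hno, if_neg hno]
    have h2 : m / 2 = e := by omega
    rw [h2]
    have h3 : (σ a * σ b) ^ (e+1) * (σ a * σ b) ^ e = 1 := by
      rw [← pow_add, show e + 1 + e = m by omega, hpm]
    have h4 : (σ a * σ b) ^ (e+1) = ((σ a * σ b) ^ e)⁻¹ := eq_inv_of_mul_eq_one_left h3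
    have h5 : σ a * (σ a * σ b) ^ (e+1) = σ b * (σ a * σ b) ^ e := by
      rw [pow_succ']
      simp only [← mul_assoc, cs.simple_mul_simple_self, one_mul]
    rw [← h5, h4, ← hqe e]

lemma alt_mem (a b : B) (l : ℕ) :
    π (aw a b l) ∈ Subgroup.closure ({σ a, σ b} : Set W) := by
  induction l with
  | zero =>
    show π (aw a b 0) ∈ _
    have : (aw a b 0) = [] := rfl
    rw [this, cs.wordProd_nil]
    exact one_mem _
  | succ l ih =>
    rw [alt_cons]
    refine mul_mem ?_ ih
    rcases Nat.even_or_odd l with h | h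
    · rw [if_pos h]
      exact Subgroup.subset_closure (by simp)
    · rw [if_neg (Nat.not_even_iff_odd.2 h)]
      exact Subgroup.subset_closure (by simp)

lemma mul_alt (p q c : B) (hpq : p ≠ q) (hfin : orderOf (σ p * σ q) ≠ 0)
    (hc : c = p ∨ c = q) {l : ℕ} (hl : l ≤ orderOf (σ p * σ q)) :
    ∃ l' ≤ orderOf (σ p * σ q),
      σ c * π (aw p q l) = π (aw p q l') ∨ σ c * π (aw p q l) = π (aw q p l') := by
  set m := orderOf (σ p * σ q) with hm
  have hm1 : 1 ≤ m := Nat.pos_of_ne_zero hfin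
  by_cases hcc : c = (if Even l then q else p)
  · by_cases hlm : l < m
    · refine ⟨l+1, hlm, Or.inl ?_⟩
      rw [alt_cons, hcc]
    · have hlm' : l = m := by omega
      subst hlm'
      refine ⟨m - 1, by omega, Or.inr ?_⟩
      rw [longest_eq cs p q hfin]
      have hmm : m - 1 + 1 = m := by omega
      have hcons := alt_cons cs q p (m-1)
      rw [hmm] at hcons
      rw [hcons, ← mul_assoc]
      have hc2 : c = (if Even (m-1) then p else q) := by
        rcases Nat.even_or_odd m with h | h
        · have h1 : ¬ Even (m - 1) := by
            rcases h with ⟨e, he⟩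
            intro hcon
            rcases hcon with ⟨f, hf⟩
            omega
          rw [if_neg h1]
          rw [if_pos h] at hcc
          exact hcc
        · have h1 : Even (m - 1) := by
            rcases h with ⟨e, he⟩
            exact ⟨e, by omega⟩
          rw [if_pos h1]
          rw [if_neg (by rw [← Nat.not_odd_iff_even]; simp [h])] at hcc
          exact hcc
      rw [← hc2, cs.simple_mul_simple_self, one_mul]
  · match l with
    | 0 =>
      rw [if_pos (by decide : Even 0)] at hcc
      have hcp : c = p := by tauto
      refine ⟨1, hm1, Or.inr ?_⟩
      have h1 : (aw q p 1) = [p] := rfl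
      have h0 : (aw p q 0) = [] := rfl
      rw [h1, h0, cs.wordProd_nil, mul_one, cs.wordProd_singleton, hcp]
    | l'' + 1 =>
      have hcd : c = (if Even l'' then q else p) := by
        rcases Nat.even_or_odd l'' with h | h
        · have : ¬ Even (l'' + 1) := by simp [Nat.even_add_one, h]
          rw [if_neg this] at hcc
          rw [if_pos h]
          tauto
        · have : Even (l'' + 1) := by simp [Nat.even_add_one, Nat.not_even_iff_odd.2 h]
          rw [if_pos this] at hcc
          rw [if_neg (by simp [Nat.not_even_iff_odd, h])]
          tauto
      refine ⟨l'', by omega, Or.inl ?_⟩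
      rw [alt_cons, ← mul_assoc, ← hcd, cs.simple_mul_simple_self, one_mul]

lemma word_letters_of_mem {a b : B} {w : W}
    (hw : w ∈ Subgroup.closure ({σ a, σ b} : Set W)) :
    ∃ ω : List B, (∀ c ∈ ω, c = a ∨ c = b) ∧ w = π ω := by
  induction hw using Subgroup.closure_induction with
  | mem x hx =>
    rcases hx with hx | hx
    · exact ⟨[a], by simp, by simp [hx]⟩
    · rw [Set.mem_singleton_iff] at hx
      exact ⟨[b], by simp, by simp [hx]⟩
  | one => exact ⟨[], by simp, by simp⟩
  | mul x y hx hy ihx ihy =>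
    obtain ⟨ω₁, hl1, rfl⟩ := ihx
    obtain ⟨ω₂, hl2, rfl⟩ := ihy
    refine ⟨ω₁ ++ ω₂, ?_, by rw [cs.wordProd_append]⟩
    intro c hc
    rcases List.mem_append.1 hc with h | h
    · exact hl1 c h
    · exact hl2 c h
  | inv x hx ihx =>
    obtain ⟨ω, hl, rfl⟩ := ihx
    refine ⟨ω.reverse, ?_, by rw [cs.wordProd_reverse]⟩
    intro c hc
    exact hl c (List.mem_reverse.1 hc)

lemma normal_form (a b : B) (hab : a ≠ b) (hfin : orderOf (σ a * σ b) ≠ 0) {w : W}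
    (hw : w ∈ Subgroup.closure ({σ a, σ b} : Set W)) :
    ∃ l ≤ orderOf (σ a * σ b), w = π (aw a b l) ∨ w = π (aw b a l) := by
  obtain ⟨ω, hlet, rfl⟩ := word_letters_of_mem cs hw
  clear hw
  induction ω with
  | nil =>
    exact ⟨0, Nat.zero_le _, Or.inl (by rfl)⟩
  | cons c ω ih =>
    have hc : c = a ∨ c = b := hlet c (by simp)
    obtain ⟨l, hl, hform⟩ := ih (fun d hd => hlet d (by simp [hd]))
    rw [cs.wordProd_cons]
    rcases hform with hform | hform
    · rw [hform]
      obtain ⟨l', hl', h⟩ := mul_alt cs a b c hab hfin hc hl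
      exact ⟨l', hl', h⟩
    · rw [hform]
      have hfin' : orderOf (σ b * σ a) ≠ 0 := by rwa [ord_symm]
      have hl2 : l ≤ orderOf (σ b * σ a) := by rwa [ord_symm]
      obtain ⟨l', hl', h⟩ := mul_alt cs b a c (Ne.symm hab) hfin' (hc.symm) hl2
      rw [ord_symm] at hl'
      exact ⟨l', hl', h.symm⟩

lemma eq_longest (a b : B) (hab : a ≠ b) (hfin : orderOf (σ a * σ b) ≠ 0) {w : W}
    (hw : w ∈ Subgroup.closure ({σ a, σ b} : Set W))
    (hda : ℓ (w * σ a) < ℓ w) (hdb : ℓ (w * σ b) < ℓ w) :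
    w = π (aw a b (orderOf (σ a * σ b))) := by
  set m := orderOf (σ a * σ b) with hm
  obtain ⟨l, hl, hform⟩ := normal_form cs a b hab hfin hw
  have key : ∀ u v : B, u ≠ v → orderOf (σ u * σ v) = m → w = π (aw u v l) →
      ℓ (w * σ u) < ℓ w → l = m := by
    intro u v huv hord hwf hdu
    match l, hl with
    | 0, _ =>
      exfalso
      rw [hwf] at hdu
      have : (aw u v 0) = [] := rfl
      rw [this, cs.wordProd_nil, one_mul] at hdu
      simp [cs.length_simple, cs.length_one] at hdu
    | l'' + 1, hl =>
      by_contra hne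
      have hlm : l'' + 2 ≤ m := by omega
      have hconcat : π (aw v u (l''+2)) = π (aw u v (l''+1)) * σ u := alt_concat cs v u (l''+1)
      have hlen1 : ℓ w = l'' + 1 := by
        rw [hwf]
        exact length_alt cs u v (l''+1) (by rw [hord]; exact hl)
      have hlen2 : ℓ (w * σ u) = l'' + 2 := by
        rw [hwf, ← hconcat]
        apply length_alt cs v u (l''+2)
        rw [ord_symm, hord]
        exact hlm
      omega
  rcases hform with hform | hform
  · have hlm : l = m := key a b hab rfl hform hda
    rw [hform, hlm]
  · have hlm : l = m := key b a (Ne.symm hab) (ord_symm cs a b) hform hdb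
    rw [hform, hlm, ← longest_eq cs a b hfin]

end Dihedral

/-! ### Part 3: minimal coset representatives for dihedral parabolics -/

section Coset

local notation "aw" => CoxeterSystem.alternatingWord

lemma min_add_step (a b : B) (u₀ : W)
    (hmin : ∀ d ∈ Subgroup.closure ({σ a, σ b} : Set W), ℓ u₀ ≤ ℓ (u₀ * d))
    (l : ℕ) (hl : l + 1 ≤ orderOf (σ a * σ b))
    (ihba : ℓ (u₀ * π (aw b a l)) = ℓ u₀ + l) :
    ℓ (u₀ * π (aw a b (l+1))) = ℓ u₀ + (l+1) := by
  rw [alt_concat cs a b l, ← mul_assoc]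
  set u₁ := u₀ * π (aw b a l) with hu₁
  rcases cs.length_mul_simple u₁ b with hup | hdown
  · rw [hup, ihba]
    omega
  · exfalso
    have hdesc : ℓ (u₁ * σ b) < ℓ u₁ := by omega
    obtain ⟨ω₀, hω₀len, hω₀⟩ := cs.exists_reduced_word u₀
    unfold CoxeterSystem.IsReduced at hω₀len
    rw [← hω₀] at hω₀len
    have hπ : π (ω₀ ++ aw b a l) = u₁ := by
      rw [cs.wordProd_append, hu₁, ← hω₀]
    obtain ⟨k, hk, hex⟩ := strong_exchange cs hπ (cs.isReflection_simple b) hdesc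
    rw [List.length_append, CoxeterSystem.length_alternatingWord] at hk
    by_cases hk0 : k < ω₀.length
    · rw [List.eraseIdx_append_of_lt_length hk0, cs.wordProd_append] at hex
      set v := π (ω₀.eraseIdx k) with hv
      have hveq : u₀ * (π (aw b a l) * σ b * (π (aw b a l))⁻¹) = v := by
        have h1 : u₁ * σ b * (π (aw b a l))⁻¹ = v := by
          rw [hex, mul_assoc, mul_inv_cancel, mul_one]
        rw [← h1, hu₁]
        group
      have hdmem : π (aw b a l) * σ b * (π (aw b a l))⁻¹
          ∈ Subgroup.closure ({σ a, σ b} : Set W) := by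
        have h1 : π (aw b a l) ∈ Subgroup.closure ({σ a, σ b} : Set W) := by
          have := alt_mem cs b a l
          rwa [Set.pair_comm] at this
        exact mul_mem (mul_mem h1 (Subgroup.subset_closure (by simp))) (inv_mem h1)
      have hlen : ℓ v ≤ ℓ u₀ - 1 := by
        have h1 : ℓ v ≤ (ω₀.eraseIdx k).length := cs.length_wordProd_le _
        rw [List.length_eraseIdx, if_pos hk0] at h1
        omega
      have := hmin _ hdmem
      rw [hveq] at this
      omega
    · push_neg at hk0
      rw [List.eraseIdx_append_of_length_le hk0, cs.wordProd_append] at hex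
      have hcancel : π (aw b a l) * σ b = π ((aw b a l).eraseIdx (k - ω₀.length)) := by
        apply mul_left_cancel (a := u₀)
        rw [← mul_assoc, ← hu₁, hex, hω₀]
      have hL : ℓ (π (aw b a l) * σ b) = l + 1 := by
        rw [← alt_concat cs a b l]
        exact length_alt cs a b (l+1) hl
      have hR : ℓ (π ((aw b a l).eraseIdx (k - ω₀.length))) ≤ l - 1 := by
        have h1 := cs.length_wordProd_le ((aw b a l).eraseIdx (k - ω₀.length))
        rw [List.length_eraseIdx, CoxeterSystem.length_alternatingWord] at h1
        rw [if_pos (by omega)] at h1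
        omega
      rw [hcancel] at hL
      omega

lemma min_add (a b : B) (u₀ : W)
    (hmin : ∀ d ∈ Subgroup.closure ({σ a, σ b} : Set W), ℓ u₀ ≤ ℓ (u₀ * d)) :
    ∀ d ∈ Subgroup.closure ({σ a, σ b} : Set W),
      orderOf (σ a * σ b) ≠ 0 → a ≠ b → ℓ (u₀ * d) = ℓ u₀ + ℓ d := by
  intro d hd hfin hab
  have hmin' : ∀ d ∈ Subgroup.closure ({σ b, σ a} : Set W), ℓ u₀ ≤ ℓ (u₀ * d) := by
    rw [Set.pair_comm]
    exact hmin
  have claim : ∀ l : ℕ, l ≤ orderOf (σ a * σ b) →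
      ℓ (u₀ * π (aw a b l)) = ℓ u₀ + l ∧ ℓ (u₀ * π (aw b a l)) = ℓ u₀ + l := by
    intro l
    induction l with
    | zero =>
      intro _
      constructor <;>
      · show ℓ (u₀ * π (aw _ _ 0)) = _
        rw [show (aw _ _ 0) = ([] : List B) from rfl, cs.wordProd_nil, mul_one, Nat.add_zero]
    | succ l ih =>
      intro hl
      obtain ⟨ih1, ih2⟩ := ih (by omega)
      constructor
      · exact min_add_step cs a b u₀ hmin l hl ih2
      · refine min_add_step cs b a u₀ hmin' l ?_ ih1
        rw [ord_symm]
        exact hl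
  obtain ⟨l, hl, hform⟩ := normal_form cs a b hab hfin hd
  rcases hform with hform | hform
  · rw [hform, (claim l hl).1, length_alt cs a b l hl]
  · rw [hform, (claim l hl).2, length_alt cs b a l (by rwa [ord_symm])]

lemma coset_min (a b : B) (hab : a ≠ b) (hfin : orderOf (σ a * σ b) ≠ 0) (w : W) :
    ∃ u₀ d, d ∈ Subgroup.closure ({σ a, σ b} : Set W) ∧ w = u₀ * d ∧
      ∀ d' ∈ Subgroup.closure ({σ a, σ b} : Set W), ℓ (u₀ * d') = ℓ u₀ + ℓ d' := by
  have hex : ∃ n, ∃ d ∈ Subgroup.closure ({σ a, σ b} : Set W), ℓ (w * d) = n :=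
    ⟨ℓ w, 1, one_mem _, by rw [mul_one]⟩
  obtain ⟨d₀, hd₀, hlen₀⟩ := Nat.find_spec hex
  refine ⟨w * d₀, d₀⁻¹, inv_mem hd₀, by rw [mul_assoc, mul_inv_cancel, mul_one], ?_⟩
  have hmin : ∀ d' ∈ Subgroup.closure ({σ a, σ b} : Set W), ℓ (w * d₀) ≤ ℓ (w * d₀ * d') := by
    intro d' hd'
    have h1 : w * d₀ * d' = w * (d₀ * d') := by rw [mul_assoc]
    have h2 : Nat.find hex ≤ ℓ (w * d₀ * d') :=
      Nat.find_min' hex ⟨d₀ * d', mul_mem hd₀ hd', by rw [← h1]⟩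
    omega
  intro d' hd'
  exact min_add cs a b (w * d₀) hmin d' hd' hfin hab

lemma no_descent_add (a b : B) (hab : a ≠ b) (hfin : orderOf (σ a * σ b) ≠ 0) {w : W}
    (ha : ℓ (w * σ a) = ℓ w + 1) (hb : ℓ (w * σ b) = ℓ w + 1) :
    ∀ d ∈ Subgroup.closure ({σ a, σ b} : Set W), ℓ (w * d) = ℓ w + ℓ d := by
  obtain ⟨u₀, d, hdH, hwd, hadd⟩ := coset_min cs a b hab hfin w
  have hd1 : d = 1 := by
    by_contra hne
    obtain ⟨l, hl, hform⟩ := normal_form cs a b hab hfin hdH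
    have hlpos : 1 ≤ l := by
      rcases Nat.eq_zero_or_pos l with h0 | h1
      · exfalso
        apply hne
        subst h0
        rcases hform with hform | hform <;>
          (rw [hform]; rfl)
      · exact h1
    -- descent of w at the last letter
    have key : ∀ p q : B, orderOf (σ p * σ q) = orderOf (σ a * σ b) →
        ({σ p, σ q} : Set W) = ({σ a, σ b} : Set W) →
        d = π (aw p q l) → ℓ (w * σ q) < ℓ w := by
      intro p q hord hset hdf
      have hlw : ℓ w = ℓ u₀ + l := by
        rw [hwd, hadd d hdH, hdf, length_alt cs p q l (by rwa [hord])]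
      have hstep : d * σ q = π (aw q p (l-1)) := by
        rw [hdf, show l = (l-1)+1 by omega]
        exact alt_mul_last cs p q (l-1)
      have hmem : d * σ q ∈ Subgroup.closure ({σ a, σ b} : Set W) := by
        rw [hstep, ← hset]
        have := alt_mem cs q p (l-1)
        rwa [Set.pair_comm] at this
      have hlen : ℓ (w * σ q) = ℓ u₀ + (l - 1) := by
        rw [hwd, mul_assoc, hadd _ hmem, hstep,
          length_alt cs q p (l-1) (by rw [ord_symm, hord]; omega)]
      omega
    rcases hform with hform | hform
    · have := key a b rfl rfl hform
      omega
    · have := key b a (ord_symm cs a b) (Set.pair_comm _ _) hform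
      omega
  subst hd1
  rw [mul_one] at hwd
  subst hwd
  exact hadd

lemma both_descent_decomp (a b : B) (hab : a ≠ b) (hfin : orderOf (σ a * σ b) ≠ 0) {w : W}
    (hda : ℓ (w * σ a) < ℓ w) (hdb : ℓ (w * σ b) < ℓ w) :
    ∃ u₀, w = u₀ * π (aw a b (orderOf (σ a * σ b))) ∧
      ∀ d ∈ Subgroup.closure ({σ a, σ b} : Set W), ℓ (u₀ * d) = ℓ u₀ + ℓ d := by
  obtain ⟨u₀, d, hdH, hwd, hadd⟩ := coset_min cs a b hab hfin w
  have hda' : ℓ (d * σ a) < ℓ d := by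
    have h1 : ℓ (w * σ a) = ℓ u₀ + ℓ (d * σ a) := by
      rw [hwd, mul_assoc]
      exact hadd _ (mul_mem hdH (Subgroup.subset_closure (by simp)))
    have h2 : ℓ w = ℓ u₀ + ℓ d := by rw [hwd]; exact hadd d hdH
    omega
  have hdb' : ℓ (d * σ b) < ℓ d := by
    have h1 : ℓ (w * σ b) = ℓ u₀ + ℓ (d * σ b) := by
      rw [hwd, mul_assoc]
      exact hadd _ (mul_mem hdH (Subgroup.subset_closure (by simp)))
    have h2 : ℓ w = ℓ u₀ + ℓ d := by rw [hwd]; exact hadd d hdH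
    omega
  have := eq_longest cs a b hab hfin hdH hda' hdb'
  exact ⟨u₀, by rw [hwd, this], hadd⟩

end Coset

/-! ### Part 4: the main theorem -/

section Main

local notation "aw" => CoxeterSystem.alternatingWord

theorem second_up
    (h2sph : ∀ s t : B, orderOf (σ s * σ t) ≠ 0)
    (hcomp : ∀ s t : B, s ≠ t → 3 ≤ orderOf (σ s * σ t)) (n : ℕ) :
    ∀ (w : W) (s t : B), s ≠ t →
      ℓ (w * σ s) = ℓ w + 1 → ℓ (w * σ t) = ℓ w + 1 →
      ∀ w' ∈ Subgroup.closure ({σ s, σ t} : Set W), 2 ≤ ℓ w' →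
      ∀ r : B, r ≠ s → r ≠ t → ℓ w + ℓ w' ≤ n →
      ℓ (w * w' * σ r) = ℓ w + ℓ w' + 1 := by
  induction n using Nat.strong_induction_on with
  | _ n IH =>
  intro w s t hst hws hwt w' hw' hlw' r hrs hrt hsum
  by_contra hcon
  obtain ⟨l, hlm, hform⟩ := normal_form cs s t hst (h2sph s t) hw'
  -- generic treatment for the two orientations
  have main : ∀ p q : B, p ≠ q →
      ℓ (w * σ p) = ℓ w + 1 → ℓ (w * σ q) = ℓ w + 1 → r ≠ p → r ≠ q →
      l ≤ orderOf (σ p * σ q) → w' = π (aw p q l) → False := by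
    intro p q hpq hwp hwq hrp hrq hlpq hw'f
    have hfinpq : orderOf (σ p * σ q) ≠ 0 := h2sph p q
    have hl' : ℓ w' = l := by rw [hw'f]; exact length_alt cs p q l hlpq
    have hl2 : 2 ≤ l := by omega
    obtain ⟨l₂, rfl⟩ : ∃ k, l = k + 2 := ⟨l - 2, by omega⟩
    -- additivity over the (p,q)-parabolic
    have hadd : ∀ d ∈ Subgroup.closure ({σ p, σ q} : Set W), ℓ (w * d) = ℓ w + ℓ d :=
      no_descent_add cs p q hpq hfinpq hwp hwq
    have hmemw' : w' ∈ Subgroup.closure ({σ p, σ q} : Set W) := by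
      rw [hw'f]; exact alt_mem cs p q (l₂+2)
    have huw' : ℓ (w * w') = ℓ w + (l₂+2) := by
      rw [hadd w' hmemw', hl']
    -- the two descents of w * w'
    have hr : ℓ (w * w' * σ r) < ℓ (w * w') := by
      rcases cs.length_mul_simple (w * w') r with h | h
      · exfalso; apply hcon; rw [h, huw', hl']
      · omega
    have hw'q : w' * σ q = π (aw q p (l₂+1)) := by
      rw [hw'f]; exact alt_mul_last cs p q (l₂+1)
    have hmemw'q : w' * σ q ∈ Subgroup.closure ({σ p, σ q} : Set W) := by
      rw [hw'q]
      have := alt_mem cs q p (l₂+1)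
      rwa [Set.pair_comm] at this
    have hq : ℓ (w * w' * σ q) < ℓ (w * w') := by
      have h1 : ℓ (w * (w' * σ q)) = ℓ w + (l₂+1) := by
        rw [hadd _ hmemw'q, hw'q, length_alt cs q p (l₂+1) (by rw [ord_symm]; omega)]
      rw [mul_assoc, h1, huw']
      omega
    -- first dihedral decomposition, pair (r, q)
    have hrq' : r ≠ q := hrq
    set m₁ := orderOf (σ r * σ q) with hm₁
    have hm₁3 : 3 ≤ m₁ := hcomp r q hrq
    obtain ⟨u₀, huw, hadd₁⟩ :=
      both_descent_decomp cs r q hrq (h2sph r q) hr hq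
    have hlu₀ : ℓ (w * w') = ℓ u₀ + m₁ := by
      rw [huw, hadd₁ _ (alt_mem cs r q m₁), length_alt cs r q m₁ le_rfl]
    -- z = w * w' * σ q
    have e1 : π (aw r q m₁) * σ q = π (aw q r (m₁ - 1)) := by
      have e := alt_mul_last cs r q (m₁-1)
      rwa [show m₁ - 1 + 1 = m₁ by omega] at e
    have hz : w * w' * σ q = u₀ * π (aw q r (m₁ - 1)) := by
      rw [huw, mul_assoc, e1]
    have hmem_qr : ∀ k, k ≤ m₁ → π (aw q r k) ∈ Subgroup.closure ({σ r, σ q} : Set W) := by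
      intro k _
      have := alt_mem cs q r k
      rwa [Set.pair_comm] at this
    have hlz : ℓ (w * w' * σ q) = ℓ u₀ + (m₁ - 1) := by
      rw [hz, hadd₁ _ (hmem_qr _ (by omega)),
        length_alt cs q r (m₁-1) (by rw [ord_symm, ← hm₁]; omega)]
    -- descents of z at p and r
    have hzp : w * w' * σ q * σ p = w * π (aw p q l₂) := by
      rw [show w * w' * σ q = w * (w' * σ q) by rw [mul_assoc], hw'q, mul_assoc,
        alt_mul_last cs q p l₂]
    have hlzp : ℓ (w * w' * σ q * σ p) = ℓ w + l₂ := by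
      rw [hzp, hadd _ (alt_mem cs p q l₂), length_alt cs p q l₂ (by omega)]
    have hdzp : ℓ (w * w' * σ q * σ p) < ℓ (w * w' * σ q) := by
      rw [hlzp, hlz]
      omega
    have e2 : π (aw q r (m₁ - 1)) * σ r = π (aw r q (m₁ - 2)) := by
      have e := alt_mul_last cs q r (m₁-2)
      rwa [show m₁ - 2 + 1 = m₁ - 1 by omega] at e
    have hzr : w * w' * σ q * σ r = u₀ * π (aw r q (m₁ - 2)) := by
      rw [hz, mul_assoc, e2]
    have hlzr : ℓ (w * w' * σ q * σ r) = ℓ u₀ + (m₁ - 2) := by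
      rw [hzr, hadd₁ _ (alt_mem cs r q (m₁-2)), length_alt cs r q (m₁-2) (by omega)]
    have hdzr : ℓ (w * w' * σ q * σ r) < ℓ (w * w' * σ q) := by
      rw [hlzr, hlz]
      omega
    -- second dihedral decomposition, pair (p, r)
    set m₂ := orderOf (σ p * σ r) with hm₂
    have hm₂3 : 3 ≤ m₂ := hcomp p r (fun h => hrp h.symm)
    obtain ⟨z₀, hzw, hadd₂⟩ :=
      both_descent_decomp cs p r (fun h => hrp h.symm) (h2sph p r) hdzp hdzr
    have hlz₀ : ℓ (w * w' * σ q) = ℓ z₀ + m₂ := by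
      rw [hzw, hadd₂ _ (alt_mem cs p r m₂), length_alt cs p r m₂ le_rfl]
    -- the new element y
    set y := π (aw p r m₂) * σ r with hy
    have hy' : y = π (aw r p (m₂ - 1)) := by
      have e := alt_mul_last cs p r (m₂-1)
      rw [show m₂ - 1 + 1 = m₂ by omega] at e
      rw [hy, e]
    have hymem : y ∈ Subgroup.closure ({σ p, σ r} : Set W) := by
      rw [hy]
      exact mul_mem (alt_mem cs p r m₂) (Subgroup.subset_closure (by simp))
    have hly : ℓ y = m₂ - 1 := by
      rw [hy', length_alt cs r p (m₂-1) (by rw [ord_symm, ← hm₂]; omega)]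
    -- z₀ has no (p,r) descents
    have hz₀p : ℓ (z₀ * σ p) = ℓ z₀ + 1 := by
      have h1 : σ p ∈ Subgroup.closure ({σ p, σ r} : Set W) :=
        Subgroup.subset_closure (by simp)
      rw [hadd₂ _ h1, cs.length_simple]
    have hz₀r : ℓ (z₀ * σ r) = ℓ z₀ + 1 := by
      have h1 : σ r ∈ Subgroup.closure ({σ p, σ r} : Set W) :=
        Subgroup.subset_closure (by simp)
      rw [hadd₂ _ h1, cs.length_simple]
    -- apply the induction hypothesis
    have hn' : ℓ z₀ + ℓ y < n := by omega
    have hIH := IH (ℓ z₀ + ℓ y) hn' z₀ p r (fun h => hrp h.symm) hz₀p hz₀r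
      y hymem (by omega) q (Ne.symm hpq) (Ne.symm hrq) le_rfl
    -- compute z₀ * y * σ q directly
    have hzy : z₀ * y = w * w' * σ q * σ r := by
      rw [hy, ← mul_assoc, ← hzw]
    have e3 : π (aw r q (m₁ - 2)) * σ q = π (aw q r (m₁ - 3)) := by
      have e := alt_mul_last cs r q (m₁-3)
      rwa [show m₁ - 3 + 1 = m₁ - 2 by omega] at e
    have hfin1 : z₀ * y * σ q = u₀ * π (aw q r (m₁ - 3)) := by
      rw [hzy, hzr, mul_assoc, e3]
    have hlfin : ℓ (z₀ * y * σ q) = ℓ u₀ + (m₁ - 3) := by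
      rw [hfin1, hadd₁ _ (hmem_qr _ (by omega)),
        length_alt cs q r (m₁-3) (by rw [ord_symm, ← hm₁]; omega)]
    omega
  rcases hform with hform | hform
  · exact main s t hst hws hwt hrs hrt hlm hform
  · exact main t s (Ne.symm hst) hwt hws hrt hrs (by rwa [ord_symm]) hform

end Main

end CoxAux


/-- **Corollary (second up).** Let `(W, S)` be a `2`-spherical Coxeter system whose Coxeter
diagram is the complete graph. Suppose `w ∈ W` and `s ≠ t ∈ S` satisfy
`ℓ(ws) = ℓ(w) + 1 = ℓ(wt)`, and suppose `w' ∈ ⟨s, t⟩` with `ℓ(w') ≥ 2`. Then for every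
`r ∈ S \ {s, t}` one has `ℓ(w w' r) = ℓ(w) + ℓ(w') + 1`. -/
theorem length_mul_simple_of_second_up
    {B : Type*} [Fintype B] {W : Type*} [Group W] {M : CoxeterMatrix B}
    (cs : CoxeterSystem M W)
    (h2sph : ∀ s t : B, orderOf (cs.simple s * cs.simple t) ≠ 0)
    (hcomp : ∀ s t : B, s ≠ t → 3 ≤ orderOf (cs.simple s * cs.simple t))
    (w : W) (s t : B) (hst : s ≠ t)
    (hws : cs.length (w * cs.simple s) = cs.length w + 1)
    (hwt : cs.length (w * cs.simple t) = cs.length w + 1)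
    (w' : W) (hw' : w' ∈ Subgroup.closure {cs.simple s, cs.simple t})
    (hlw' : 2 ≤ cs.length w')
    (r : B) (hrs : r ≠ s) (hrt : r ≠ t) :
    cs.length (w * w' * cs.simple r) = cs.length w + cs.length w' + 1 :=
  CoxAux.second_up cs h2sph hcomp (cs.length w + cs.length w') w s t hst hws hwt
    w' hw' hlw' r hrs hrt le_rfl
end

section
/- Let (W,S) be a Coxeter system such that m_{st} < ∞ and m_{st} ≥ 4 for all s ≠ t ∈ S. Suppose w ∈ W and s ≠ t ∈ S satisfy ℓ(ws) = ℓ(w) + 1 = ℓ(wt). Then for every r ∈ S \ {s,t} one has ℓ(wsr) = ℓ(w) + 2 or ℓ(wtr) = ℓ(w) + 2. -/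
namespace NotBothDownAux

open CoxeterSystem List

open scoped Classical

variable {B : Type*} {W : Type*} [Group W] {M : CoxeterMatrix B} (cs : CoxeterSystem M W)

/-- Tits' sign permutation attached to a simple generator. -/
noncomputable def eta (i : B) : Equiv.Perm (W × ℤˣ) :=
  Function.Involutive.toPerm
    (fun z => (cs.simple i * z.1 * cs.simple i, if z.1 = cs.simple i then -z.2 else z.2))
    (by
      rintro ⟨x, e⟩
      have h1 : ∀ y : W, cs.simple i * (cs.simple i * y * cs.simple i) * cs.simple i = y := by
        intro y
        calc cs.simple i * (cs.simple i * y * cs.simple i) * cs.simple i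
            = (cs.simple i * cs.simple i) * y * (cs.simple i * cs.simple i) := by
              simp only [mul_assoc]
          _ = y := by rw [cs.simple_mul_simple_self]; simp
      have hc : cs.simple i * x * cs.simple i = cs.simple i ↔ x = cs.simple i := by
        constructor
        · intro h
          have h2 := congrArg (fun y => cs.simple i * y * cs.simple i) h
          rwa [h1 x, cs.simple_mul_simple_self, one_mul] at h2
        · rintro rfl
          rw [cs.simple_mul_simple_self, one_mul]
      show (cs.simple i * (cs.simple i * x * cs.simple i) * cs.simple i,
          if cs.simple i * x * cs.simple i = cs.simple i then
            -(if x = cs.simple i then -e else e) else (if x = cs.simple i then -e else e))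
          = (x, e)
      rw [Prod.mk.injEq]
      refine ⟨h1 x, ?_⟩
      by_cases hx : x = cs.simple i
      · rw [if_pos (hc.mpr hx), if_pos hx, neg_neg]
      · rw [if_neg (fun hh => hx (hc.mp hh)), if_neg hx])

lemma eta_apply (i : B) (x : W) (e : ℤˣ) :
    eta cs i (x, e) = (cs.simple i * x * cs.simple i,
      if x = cs.simple i then -e else e) := rfl

/-- The elements tested by the alternating sequence of `eta`s. -/
def tau (i j : B) (l : ℕ) : W := (cs.simple j * cs.simple i) ^ l * cs.simple j

lemma simple_conj_eq_iff (a : B) (y c : W) :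
    cs.simple a * y * cs.simple a = c ↔ y = cs.simple a * c * cs.simple a := by
  constructor
  · rintro rfl
    simp [mul_assoc, cs.simple_mul_simple_cancel_left, cs.simple_mul_simple_self]
  · rintro rfl
    simp [mul_assoc, cs.simple_mul_simple_cancel_left, cs.simple_mul_simple_self]

lemma swap_pow (x y : W) (l : ℕ) : y * (x * y) ^ l = (y * x) ^ l * y := by
  induction l with
  | zero => simp
  | succ l ih =>
      rw [pow_succ' (x * y) l, pow_succ (y * x) l]
      calc y * (x * y * (x * y) ^ l)
          = y * x * (y * (x * y) ^ l) := by simp only [mul_assoc]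
        _ = y * x * ((y * x) ^ l * y) := by rw [ih]
        _ = (y * x) * (y * x) ^ l * y := by simp only [mul_assoc]
        _ = (y * x) ^ (l + 1) * y := by rw [← pow_succ']
        _ = (y * x) ^ l * (y * x) * y := by rw [pow_succ]

lemma tau_conj (i j : B) (l : ℕ) :
    cs.simple j * (cs.simple i * tau cs i j l * cs.simple i) * cs.simple j
      = tau cs i j (l + 2) := by
  unfold tau
  have key : ∀ m : ℕ, cs.simple j * (cs.simple i * ((cs.simple j * cs.simple i) ^ m *
      cs.simple j)) = (cs.simple j * cs.simple i) ^ (m + 1) * cs.simple j := by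
    intro m
    calc cs.simple j * (cs.simple i * ((cs.simple j * cs.simple i) ^ m * cs.simple j))
        = (cs.simple j * cs.simple i) * (cs.simple j * cs.simple i) ^ m * cs.simple j := by
          simp only [mul_assoc]
      _ = (cs.simple j * cs.simple i) ^ (m + 1) * cs.simple j := by rw [← pow_succ']
  have hcomm : (cs.simple j * cs.simple i) ^ (l + 1) * (cs.simple j * cs.simple i)
      = (cs.simple j * cs.simple i) * (cs.simple j * cs.simple i) ^ (l + 1) := by
    rw [← pow_succ, ← pow_succ']
  calc cs.simple j * (cs.simple i * ((cs.simple j * cs.simple i) ^ l * cs.simple j)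
        * cs.simple i) * cs.simple j
      = cs.simple j * (cs.simple i * ((cs.simple j * cs.simple i) ^ l * cs.simple j))
          * (cs.simple i * cs.simple j) := by simp only [mul_assoc]
    _ = (cs.simple j * cs.simple i) ^ (l + 1) * cs.simple j * (cs.simple i * cs.simple j) := by
          rw [key l]
    _ = (cs.simple j * cs.simple i) ^ (l + 1) * (cs.simple j * cs.simple i) * cs.simple j := by
          simp only [mul_assoc]
    _ = (cs.simple j * cs.simple i) * (cs.simple j * cs.simple i) ^ (l + 1) * cs.simple j := by
          rw [hcomm]
    _ = cs.simple j * (cs.simple i * ((cs.simple j * cs.simple i) ^ (l + 1) * cs.simple j)) := by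
          simp only [mul_assoc]
    _ = (cs.simple j * cs.simple i) ^ (l + 2) * cs.simple j := key (l + 1)

lemma range_two : List.range 2 = [0, 1] := rfl

lemma pow_eta_apply (i j : B) (k : ℕ) (x : W) (e : ℤˣ) :
    ((eta cs i * eta cs j) ^ k) (x, e) =
      ((cs.simple i * cs.simple j) ^ k * x * (cs.simple j * cs.simple i) ^ k,
        (-1) ^ ((List.range (2 * k)).countP (fun l => decide (x = tau cs i j l))) * e) := by
  induction k generalizing x e with
  | zero => simp
  | succ k ih =>
      have h0 : (x = cs.simple j) ↔ (x = tau cs i j 0) := by simp [tau]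
      have h1 : (cs.simple j * x * cs.simple j = cs.simple i) ↔ (x = tau cs i j 1) := by
        rw [simple_conj_eq_iff]
        unfold tau
        constructor <;> intro h <;> rw [h] <;> group
      have hstep : (eta cs i * eta cs j) (x, e) =
          (cs.simple i * (cs.simple j * x * cs.simple j) * cs.simple i,
            (-1) ^ ((List.range 2).countP (fun l => decide (x = tau cs i j l))) * e) := by
        show eta cs i (eta cs j (x, e)) = _
        rw [eta_apply, eta_apply, Prod.mk.injEq]
        refine ⟨rfl, ?_⟩
        have hcnt : (List.range 2).countP (fun l => decide (x = tau cs i j l))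
            = (if x = tau cs i j 1 then 1 else 0) + (if x = tau cs i j 0 then 1 else 0) := by
          rw [range_two]
          by_cases hx0 : x = tau cs i j 0 <;> by_cases hx1 : x = tau cs i j 1 <;>
            simp [List.countP_cons, hx0, hx1]
        rw [hcnt]
        by_cases hx0 : x = tau cs i j 0 <;> by_cases hx1 : x = tau cs i j 1
        · rw [if_pos (h1.mpr hx1), if_pos (h0.mpr hx0), if_pos hx1, if_pos hx0]
          norm_num
        · rw [if_neg (fun hh => hx1 (h1.mp hh)), if_pos (h0.mpr hx0), if_neg hx1, if_pos hx0]
          norm_num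
        · rw [if_pos (h1.mpr hx1), if_neg (fun hh => hx0 (h0.mp hh)), if_pos hx1, if_neg hx0]
          norm_num
        · rw [if_neg (fun hh => hx1 (h1.mp hh)), if_neg (fun hh => hx0 (h0.mp hh)),
            if_neg hx1, if_neg hx0]
          norm_num
      rw [pow_succ]
      have happ : ((eta cs i * eta cs j) ^ k * (eta cs i * eta cs j)) (x, e)
          = ((eta cs i * eta cs j) ^ k) ((eta cs i * eta cs j) (x, e)) := rfl
      rw [happ, hstep, ih, Prod.mk.injEq]
      have hcongr : (List.range (2 * k)).countP
            (fun l => decide (cs.simple i * (cs.simple j * x * cs.simple j) * cs.simple i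
              = tau cs i j l))
          = (List.range (2 * k)).countP (fun l => decide (x = tau cs i j (2 + l))) := by
        apply List.countP_congr
        intro l _
        simp only [decide_eq_true_eq]
        constructor
        · intro hh
          have h2 := (simple_conj_eq_iff cs i _ _).mp hh
          have h3 := (simple_conj_eq_iff cs j _ _).mp h2
          rw [h3, tau_conj cs i j l]
          congr 1
          omega
        · intro hh
          apply (simple_conj_eq_iff cs i _ _).mpr
          apply (simple_conj_eq_iff cs j _ _).mpr
          rw [hh, tau_conj cs i j l]
          congr 1
          omega
      have hsplit : (List.range (2 * (k + 1))).countP (fun l => decide (x = tau cs i j l))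
          = (List.range 2).countP (fun l => decide (x = tau cs i j l))
            + (List.range (2 * k)).countP (fun l => decide (x = tau cs i j (2 + l))) := by
        have h2k : 2 * (k + 1) = 2 + 2 * k := by ring
        rw [h2k, List.range_add, List.countP_append, List.countP_map]
        rfl
      constructor
      · rw [pow_succ (cs.simple i * cs.simple j) k, pow_succ' (cs.simple j * cs.simple i) k]
        simp only [mul_assoc]
      · rw [hcongr, hsplit, pow_add]
        simp [mul_comm, mul_left_comm, mul_assoc]

lemma isLiftable_eta : M.IsLiftable (fun i => eta cs i) := by
  intro i j
  apply Equiv.ext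
  rintro ⟨x, e⟩
  show ((eta cs i * eta cs j) ^ M i j) (x, e) = (1 : Equiv.Perm (W × ℤˣ)) (x, e)
  rw [Equiv.Perm.one_apply, pow_eta_apply]
  have hconj : (cs.simple i * cs.simple j) ^ M i j * x * (cs.simple j * cs.simple i) ^ M i j
      = x := by
    rw [cs.simple_mul_simple_pow i j, cs.simple_mul_simple_pow' i j]
    simp
  have htau : ∀ l : ℕ, tau cs i j (M i j + l) = tau cs i j l := by
    intro l
    unfold tau
    rw [pow_add, cs.simple_mul_simple_pow' i j, one_mul]
  have hcount : (List.range (2 * M i j)).countP (fun l => decide (x = tau cs i j l))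
      = 2 * (List.range (M i j)).countP (fun l => decide (x = tau cs i j l)) := by
    have h2 : 2 * M i j = M i j + M i j := by ring
    rw [h2, List.range_add, List.countP_append, List.countP_map]
    have heq : List.countP ((fun l => decide (x = tau cs i j l)) ∘ (fun y => M i j + y))
        (List.range (M i j))
        = List.countP (fun l => decide (x = tau cs i j l)) (List.range (M i j)) := by
      apply List.countP_congr
      intro l _
      simp only [Function.comp_apply, decide_eq_true_eq]
      rw [htau l]
    rw [heq]
    ring
  rw [hconj, hcount, pow_mul]
  norm_num

/-- The sign representation of the Coxeter group. -/
noncomputable def phi : W →* Equiv.Perm (W × ℤˣ) :=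
  cs.lift ⟨fun i => eta cs i, isLiftable_eta cs⟩

lemma phi_simple (i : B) : phi cs (cs.simple i) = eta cs i :=
  cs.lift_apply_simple (isLiftable_eta cs) i

lemma rightInvSeq_cons (i : B) (ω : List B) :
    cs.rightInvSeq (i :: ω) =
      ((cs.wordProd ω)⁻¹ * cs.simple i * cs.wordProd ω) :: cs.rightInvSeq ω := rfl

lemma phi_wordProd (ω : List B) (x : W) (e : ℤˣ) :
    phi cs (cs.wordProd ω) (x, e) =
      (cs.wordProd ω * x * (cs.wordProd ω)⁻¹,
        (-1) ^ ((cs.rightInvSeq ω).count x) * e) := by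
  induction ω generalizing x e with
  | nil => simp [wordProd_nil]
  | cons i ω ih =>
      rw [cs.wordProd_cons i ω, map_mul, Equiv.Perm.mul_apply, ih, phi_simple, eta_apply]
      have hcond : (cs.wordProd ω * x * (cs.wordProd ω)⁻¹ = cs.simple i)
          ↔ ((cs.wordProd ω)⁻¹ * cs.simple i * cs.wordProd ω = x) := by
        constructor
        · intro h
          rw [← h]
          group
        · intro h
          rw [← h]
          group
      have hfst : cs.simple i * (cs.wordProd ω * x * (cs.wordProd ω)⁻¹) * cs.simple i
          = cs.simple i * cs.wordProd ω * x * (cs.simple i * cs.wordProd ω)⁻¹ := by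
        rw [mul_inv_rev, cs.inv_simple]
        group
      have hcount : (cs.rightInvSeq (i :: ω)).count x
          = (cs.rightInvSeq ω).count x
            + if (cs.wordProd ω)⁻¹ * cs.simple i * cs.wordProd ω = x then 1 else 0 := by
        rw [rightInvSeq_cons, List.count_cons]
        congr 1
        simp [beq_iff_eq]
      by_cases hc : cs.wordProd ω * x * (cs.wordProd ω)⁻¹ = cs.simple i
      · rw [if_pos hc, hcount, if_pos (hcond.mp hc), hfst, Prod.mk.injEq]
        refine ⟨rfl, ?_⟩
        rw [pow_succ]
        simp
      · rw [if_neg hc, hcount, if_neg (fun hh => hc (hcond.mpr hh)), hfst, Prod.mk.injEq]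
        exact ⟨rfl, by simp⟩

/-- The sign of `x` under `v` : `-1` iff `x` is a right inversion of `v`. -/
noncomputable def sgn (v x : W) : ℤˣ := (phi cs v (x, 1)).2

lemma sgn_wordProd (ω : List B) (x : W) :
    sgn cs (cs.wordProd ω) x = (-1) ^ ((cs.rightInvSeq ω).count x) := by
  rw [sgn, phi_wordProd]
  exact mul_one _

lemma phi_apply (v x : W) (e : ℤˣ) :
    phi cs v (x, e) = (v * x * v⁻¹, sgn cs v x * e) := by
  rcases cs.exists_reduced_word' v with ⟨ω, -, rfl⟩
  rw [phi_wordProd, sgn_wordProd]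

lemma sgn_mul (u v x : W) :
    sgn cs (u * v) x = sgn cs v x * sgn cs u (v * x * v⁻¹) := by
  unfold sgn
  rw [map_mul, Equiv.Perm.mul_apply, phi_apply cs v x 1, phi_apply]
  rw [mul_one]
  exact mul_comm _ _

lemma sgn_simple (m : B) (x : W) :
    sgn cs (cs.simple m) x = if x = cs.simple m then -1 else 1 := by
  unfold sgn
  rw [phi_simple, eta_apply]

lemma odd_of_neg_one_pow {n : ℕ} (h : ((-1 : ℤˣ)) ^ n = -1) : n ≠ 0 := by
  intro hn
  rw [hn] at h
  exact absurd h (by decide)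

lemma mem_ris_of_sgn_neg {ω : List B} (x : W)
    (h : sgn cs (cs.wordProd ω) x = -1) : x ∈ cs.rightInvSeq ω := by
  rw [sgn_wordProd] at h
  have hne := odd_of_neg_one_pow h
  rw [← List.count_pos_iff]
  omega

lemma descent_of_sgn (v : W) (m : B) (h : sgn cs v (cs.simple m) = -1) :
    cs.length (v * cs.simple m) < cs.length v := by
  rcases cs.exists_reduced_word' v with ⟨ω, hred, rfl⟩
  exact (cs.isRightInversion_of_mem_rightInvSeq hred
    (mem_ris_of_sgn_neg cs _ h)).2

lemma sgn_of_descent (v : W) (m : B) (h : cs.length (v * cs.simple m) < cs.length v) :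
    sgn cs v (cs.simple m) = -1 := by
  rcases Int.units_eq_one_or (sgn cs v (cs.simple m)) with h1 | h1
  · exfalso
    have hs : sgn cs (v * cs.simple m) (cs.simple m) = -1 := by
      rw [sgn_mul]
      have hmm : cs.simple m * cs.simple m * (cs.simple m)⁻¹ = cs.simple m := by
        rw [cs.inv_simple, cs.simple_mul_simple_cancel_right]
      rw [hmm, h1, sgn_simple, if_pos rfl]
      rfl
    have hlt := descent_of_sgn cs (v * cs.simple m) m hs
    rw [cs.simple_mul_simple_cancel_right] at hlt
    omega
  · exact h1

/-- The (strong) exchange property, for simple reflections. -/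
lemma exchange {v : W} {m : B} (h : cs.length (v * cs.simple m) < cs.length v)
    {ω : List B} (hred : cs.IsReduced ω) (hv : v = cs.wordProd ω) :
    ∃ j < ω.length, v * cs.simple m = cs.wordProd (ω.eraseIdx j) := by
  have hsgn : sgn cs v (cs.simple m) = -1 := sgn_of_descent cs v m h
  rw [hv] at hsgn
  have hmem : cs.simple m ∈ cs.rightInvSeq ω := mem_ris_of_sgn_neg cs _ hsgn
  rw [List.mem_iff_getElem] at hmem
  obtain ⟨j, hj, hEl⟩ := hmem
  have hj' : j < ω.length := by
    rw [cs.length_rightInvSeq] at hj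
    exact hj
  refine ⟨j, hj', ?_⟩
  have hkey := cs.wordProd_mul_getD_rightInvSeq ω j
  rw [List.getD_eq_getElem _ _ hj, hEl] at hkey
  rw [hv, hkey]

lemma card_le_of_sgn (v : W) (S : Finset W) (h : ∀ y ∈ S, sgn cs v y = -1) :
    S.card ≤ cs.length v := by
  rcases cs.exists_reduced_word' v with ⟨ω, hred, rfl⟩
  have hred' : cs.length (cs.wordProd ω) = ω.length := hred
  have hsub : S ⊆ (cs.rightInvSeq ω).toFinset := by
    intro y hy
    rw [List.mem_toFinset]
    exact mem_ris_of_sgn_neg cs _ (h y hy)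
  calc S.card ≤ (cs.rightInvSeq ω).toFinset.card := Finset.card_le_card hsub
    _ ≤ (cs.rightInvSeq ω).length := List.toFinset_card_le _
    _ = ω.length := cs.length_rightInvSeq ω
    _ = cs.length (cs.wordProd ω) := hred'.symm

/-! ### Alternating words -/

lemma alt_zero (a b : B) : alternatingWord a b 0 = [] := rfl

lemma prod_alt_succ (a b : B) : ∀ l : ℕ,
    (cs.wordProd (alternatingWord a b (l + 1)) = cs.wordProd (alternatingWord a b l) *
      ((cs.simple b * cs.simple a) ^ l * cs.simple b)) ∧
    (cs.wordProd (alternatingWord b a (l + 1)) = cs.wordProd (alternatingWord b a l) *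
      ((cs.simple a * cs.simple b) ^ l * cs.simple a)) := by
  intro l
  induction l with
  | zero =>
      refine ⟨?_, ?_⟩ <;>
        simp [alternatingWord_succ, alt_zero, cs.wordProd_concat, cs.wordProd_nil]
  | succ l ih =>
      have key : ∀ p q : B, cs.wordProd (alternatingWord q p (l + 1)) =
          cs.wordProd (alternatingWord q p l) * ((cs.simple p * cs.simple q) ^ l * cs.simple p) →
          cs.wordProd (alternatingWord p q (l + 1 + 1)) =
          cs.wordProd (alternatingWord p q (l + 1)) *
            ((cs.simple q * cs.simple p) ^ (l + 1) * cs.simple q) := by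
        intro p q hih
        rw [alternatingWord_succ p q (l + 1), cs.wordProd_concat, hih,
          alternatingWord_succ p q l, cs.wordProd_concat]
        have hkey : (cs.simple p * cs.simple q) ^ l * cs.simple p * cs.simple q
            = cs.simple q * ((cs.simple q * cs.simple p) ^ (l + 1) * cs.simple q) := by
          have hsw : cs.simple q * (cs.simple p * cs.simple q) ^ l
              = (cs.simple q * cs.simple p) ^ l * cs.simple q :=
            swap_pow (cs.simple p) (cs.simple q) l
          calc (cs.simple p * cs.simple q) ^ l * cs.simple p * cs.simple q
              = (cs.simple p * cs.simple q) ^ (l + 1) := by rw [pow_succ, mul_assoc]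
            _ = cs.simple q * (cs.simple q * (cs.simple p * cs.simple q) ^ (l + 1)) := by
                  rw [cs.simple_mul_simple_cancel_left]
            _ = cs.simple q * (cs.simple q * ((cs.simple p * cs.simple q) *
                  (cs.simple p * cs.simple q) ^ l)) := by rw [pow_succ']
            _ = cs.simple q * (cs.simple q * (cs.simple p *
                  (cs.simple q * (cs.simple p * cs.simple q) ^ l))) := by
                  simp only [mul_assoc]
            _ = cs.simple q * (cs.simple q * (cs.simple p *
                  ((cs.simple q * cs.simple p) ^ l * cs.simple q))) := by rw [hsw]
            _ = cs.simple q * ((cs.simple q * cs.simple p) ^ (l + 1) * cs.simple q) := by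
                  rw [pow_succ']
                  simp only [mul_assoc]
        rw [mul_assoc, hkey, ← mul_assoc]
      exact ⟨key a b ih.2, key b a ih.1⟩

lemma ris_alt (a b : B) : ∀ k : ℕ,
    cs.rightInvSeq (alternatingWord a b k) =
      (List.range k).reverse.map (fun l => (cs.simple b * cs.simple a) ^ l * cs.simple b) := by
  intro k
  induction k with
  | zero => simp [alt_zero]
  | succ k ih =>
      rw [alternatingWord_succ', rightInvSeq_cons, ih]
      have hhead : (cs.wordProd (alternatingWord a b k))⁻¹ *
          cs.simple (if Even k then b else a) * cs.wordProd (alternatingWord a b k)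
          = (cs.simple b * cs.simple a) ^ k * cs.simple b := by
        have hc : cs.simple (if Even k then b else a) * cs.wordProd (alternatingWord a b k)
            = cs.wordProd (alternatingWord a b (k + 1)) := by
          rw [alternatingWord_succ', cs.wordProd_cons]
        rw [mul_assoc, hc, (prod_alt_succ cs a b k).1, inv_mul_cancel_left]
      rw [hhead, List.range_succ]
      simp

lemma length_alt (a b : B) (k : ℕ)
    (hz : ∀ j, 0 < j → j < k → (cs.simple b * cs.simple a) ^ j ≠ 1) :
    cs.length (cs.wordProd (alternatingWord a b k)) = k := by
  have hle : cs.length (cs.wordProd (alternatingWord a b k)) ≤ k := by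
    have := cs.length_wordProd_le (alternatingWord a b k)
    rwa [length_alternatingWord] at this
  have hpowinj : ∀ l l', l < k → l' < k →
      (cs.simple b * cs.simple a) ^ l * cs.simple b
        = (cs.simple b * cs.simple a) ^ l' * cs.simple b → l = l' := by
    have haux : ∀ l l', l < l' → l' < k →
        (cs.simple b * cs.simple a) ^ l * cs.simple b
          = (cs.simple b * cs.simple a) ^ l' * cs.simple b → False := by
      intro l l' hll hl'k heq
      have h1 : (cs.simple b * cs.simple a) ^ l = (cs.simple b * cs.simple a) ^ l' :=
        mul_right_cancel heq
      have h2 : (cs.simple b * cs.simple a) ^ (l + (l' - l))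
          = (cs.simple b * cs.simple a) ^ l * (cs.simple b * cs.simple a) ^ (l' - l) :=
        pow_add _ _ _
      rw [Nat.add_sub_cancel' (le_of_lt hll), ← h1] at h2
      have h3 : (cs.simple b * cs.simple a) ^ (l' - l) = 1 := by
        have h4 : (cs.simple b * cs.simple a) ^ l * (cs.simple b * cs.simple a) ^ (l' - l)
            = (cs.simple b * cs.simple a) ^ l * 1 := by
          rw [mul_one, ← h2]
        exact mul_left_cancel h4
      exact hz (l' - l) (by omega) (by omega) h3
    intro l l' hl hl' heq
    rcases lt_trichotomy l l' with hc | hc | hc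
    · exact absurd (haux l l' hc hl' heq) (fun hh => hh)
    · exact hc
    · exact absurd (haux l' l hc hl heq.symm) (fun hh => hh)
  have hge : k ≤ cs.length (cs.wordProd (alternatingWord a b k)) := by
    set f : ℕ → W := fun l => (cs.simple b * cs.simple a) ^ l * cs.simple b with hf
    have hnodup : ((List.range k).reverse.map f).Nodup := by
      apply List.Nodup.map_on
      · intro l hl l' hl' heq
        rw [List.mem_reverse, List.mem_range] at hl hl'
        exact hpowinj l l' hl hl' heq
      · exact List.nodup_reverse.mpr List.nodup_range
    have hsgn : ∀ y ∈ (Finset.range k).image f,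
        sgn cs (cs.wordProd (alternatingWord a b k)) y = -1 := by
      intro y hy
      rw [Finset.mem_image] at hy
      obtain ⟨l, hl, rfl⟩ := hy
      rw [Finset.mem_range] at hl
      rw [sgn_wordProd]
      have hcount : (cs.rightInvSeq (alternatingWord a b k)).count (f l) = 1 := by
        rw [ris_alt]
        exact List.count_eq_one_of_mem hnodup
          (List.mem_map_of_mem (f := f) (by rw [List.mem_reverse, List.mem_range]; exact hl))
      rw [hcount, pow_one]
    have hcard : ((Finset.range k).image f).card = k := by
      rw [Finset.card_image_of_injOn, Finset.card_range]
      intro l hl l' hl' heq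
      simp only [Finset.coe_range, Set.mem_Iio] at hl hl'
      exact hpowinj l l' hl hl' heq
    calc k = ((Finset.range k).image f).card := hcard.symm
      _ ≤ _ := card_le_of_sgn cs _ _ hsgn
  omega

/-! ### The chain lemma -/

lemma chain (a b : B) (v : W)
    (hda : cs.length (v * cs.simple a) < cs.length v)
    (hdb : cs.length (v * cs.simple b) < cs.length v) :
    ∀ k : ℕ, (∀ j, 0 < j → j < k → (cs.simple b * cs.simple a) ^ j ≠ 1) →
      cs.length (v * cs.wordProd (alternatingWord a b k)) + k = cs.length v := by
  intro k
  induction k with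
  | zero =>
      intro _
      simp [alt_zero, wordProd_nil]
  | succ k ih =>
      intro hz
      have IH := ih (fun j hj1 hj2 => hz j hj1 (by omega))
      have hkey : cs.simple (if Even k then b else a) * cs.wordProd (alternatingWord a b k)
          = cs.wordProd (alternatingWord a b (k + 1)) := by
        rw [alternatingWord_succ', cs.wordProd_cons]
      have hdm : cs.length (v * cs.simple (if Even k then b else a)) < cs.length v := by
        by_cases h : Even k
        · simpa [h] using hdb
        · simpa [h] using hda
      obtain ⟨ωg, hred, hg⟩ :=
        cs.exists_reduced_word' (v * cs.wordProd (alternatingWord a b k))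
      have hred' : cs.length (cs.wordProd ωg) = ωg.length := hred
      have hωg : ωg.length = cs.length (v * cs.wordProd (alternatingWord a b k)) := by
        rw [hg, hred']
      have hπ : cs.wordProd (ωg ++ (alternatingWord a b k).reverse) = v := by
        rw [cs.wordProd_append, cs.wordProd_reverse, ← hg, mul_inv_cancel_right]
      have hlenω : (ωg ++ (alternatingWord a b k).reverse).length = cs.length v := by
        rw [List.length_append, List.length_reverse, length_alternatingWord, hωg]
        omega
      have hredω : cs.IsReduced (ωg ++ (alternatingWord a b k).reverse) := by
        show cs.length (cs.wordProd (ωg ++ (alternatingWord a b k).reverse))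
          = (ωg ++ (alternatingWord a b k).reverse).length
        rw [hπ, hlenω]
      obtain ⟨j, hj, hveq⟩ := exchange cs hdm hredω hπ.symm
      have hXlen : cs.length (cs.wordProd (alternatingWord a b (k + 1))) = k + 1 :=
        length_alt cs a b (k + 1) (fun j' hj1 hj2 => hz j' hj1 hj2)
      by_cases hcase : j < ωg.length
      · have herase : (ωg ++ (alternatingWord a b k).reverse).eraseIdx j
            = ωg.eraseIdx j ++ (alternatingWord a b k).reverse :=
          List.eraseIdx_append_of_lt_length hcase _
        have hvX : v * cs.wordProd (alternatingWord a b (k + 1))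
            = cs.wordProd (ωg.eraseIdx j) := by
          rw [← hkey, ← mul_assoc, hveq, herase, cs.wordProd_append, cs.wordProd_reverse,
            inv_mul_cancel_right]
        have hlen1 : (ωg.eraseIdx j).length + 1 = ωg.length :=
          List.length_eraseIdx_add_one hcase
        have hub : cs.length (v * cs.wordProd (alternatingWord a b (k + 1)))
            ≤ (ωg.eraseIdx j).length := by
          rw [hvX]
          exact cs.length_wordProd_le _
        have hlb : cs.length v
            ≤ cs.length (v * cs.wordProd (alternatingWord a b (k + 1))) + (k + 1) := by
          have hid : v = v * cs.wordProd (alternatingWord a b (k + 1))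
              * (cs.wordProd (alternatingWord a b (k + 1)))⁻¹ :=
            (mul_inv_cancel_right _ _).symm
          have h2 := cs.length_mul_le
            (v * cs.wordProd (alternatingWord a b (k + 1)))
            (cs.wordProd (alternatingWord a b (k + 1)))⁻¹
          rw [← hid, cs.length_inv, hXlen] at h2
          exact h2
        omega
      · exfalso
        push_neg at hcase
        have herase : (ωg ++ (alternatingWord a b k).reverse).eraseIdx j
            = ωg ++ ((alternatingWord a b k).reverse.eraseIdx (j - ωg.length)) :=
          List.eraseIdx_append_of_length_le hcase _
        have h5 : v * cs.simple (if Even k then b else a)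
            = v * (cs.wordProd (alternatingWord a b k) * cs.wordProd
              ((alternatingWord a b k).reverse.eraseIdx (j - ωg.length))) := by
          rw [hveq, herase, cs.wordProd_append, ← hg, mul_assoc]
        have hD : cs.simple (if Even k then b else a)
            = cs.wordProd (alternatingWord a b k) * cs.wordProd
              ((alternatingWord a b k).reverse.eraseIdx (j - ωg.length)) :=
          mul_left_cancel h5
        have hXinv : (cs.wordProd (alternatingWord a b (k + 1)))⁻¹ = cs.wordProd
            ((alternatingWord a b k).reverse.eraseIdx (j - ωg.length)) := by
          rw [← hkey, mul_inv_rev, cs.inv_simple, hD, inv_mul_cancel_left]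
        have hjk : j - ωg.length < (alternatingWord a b k).reverse.length := by
          rw [List.length_reverse, length_alternatingWord]
          rw [List.length_append, List.length_reverse, length_alternatingWord] at hj
          omega
        have hlenD : ((alternatingWord a b k).reverse.eraseIdx (j - ωg.length)).length + 1
            = (alternatingWord a b k).reverse.length :=
          List.length_eraseIdx_add_one hjk
        have hXb : cs.length (cs.wordProd (alternatingWord a b (k + 1)))⁻¹
            ≤ ((alternatingWord a b k).reverse.eraseIdx (j - ωg.length)).length := by
          rw [hXinv]
          exact cs.length_wordProd_le _
        rw [cs.length_inv, hXlen] at hXb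
        rw [List.length_reverse, length_alternatingWord] at hlenD
        omega

lemma hz_of (a b : B) (h4 : 4 ≤ orderOf (cs.simple a * cs.simple b)) :
    ∀ j, 0 < j → j < 4 → (cs.simple a * cs.simple b) ^ j ≠ 1 := by
  intro j hj hj4 hone
  have := orderOf_le_of_pow_eq_one hj hone
  omega

lemma alt_two (a b : B) : alternatingWord a b 2 = [a, b] := rfl

lemma alt_three (a b : B) : alternatingWord a b 3 = [b, a, b] := rfl

lemma alt_four (a b : B) : alternatingWord a b 4 = [a, b, a, b] := rfl

lemma chain2 (a b : B) (v : W)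
    (hda : cs.length (v * cs.simple a) < cs.length v)
    (hdb : cs.length (v * cs.simple b) < cs.length v)
    (h4 : 4 ≤ orderOf (cs.simple b * cs.simple a)) :
    cs.length (v * (cs.simple a * cs.simple b)) + 2 = cs.length v := by
  have hc := chain cs a b v hda hdb 2
    (fun j hj1 hj2 => hz_of cs b a h4 j hj1 (by omega))
  rwa [alt_two, cs.wordProd_cons, cs.wordProd_cons, cs.wordProd_nil, mul_one] at hc

lemma chain3 (a b : B) (v : W)
    (hda : cs.length (v * cs.simple a) < cs.length v)
    (hdb : cs.length (v * cs.simple b) < cs.length v)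
    (h4 : 4 ≤ orderOf (cs.simple b * cs.simple a)) :
    cs.length (v * (cs.simple b * (cs.simple a * cs.simple b))) + 3 = cs.length v := by
  have hc := chain cs a b v hda hdb 3
    (fun j hj1 hj2 => hz_of cs b a h4 j hj1 (by omega))
  rwa [alt_three, cs.wordProd_cons, cs.wordProd_cons, cs.wordProd_cons, cs.wordProd_nil,
    mul_one] at hc

lemma chain4 (a b : B) (v : W)
    (hda : cs.length (v * cs.simple a) < cs.length v)
    (hdb : cs.length (v * cs.simple b) < cs.length v)
    (h4 : 4 ≤ orderOf (cs.simple b * cs.simple a)) :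
    cs.length (v * (cs.simple a * (cs.simple b * (cs.simple a * cs.simple b)))) + 4
      = cs.length v := by
  have hc := chain cs a b v hda hdb 4
    (fun j hj1 hj2 => hz_of cs b a h4 j hj1 (by omega))
  rwa [alt_four, cs.wordProd_cons, cs.wordProd_cons, cs.wordProd_cons, cs.wordProd_cons,
    cs.wordProd_nil, mul_one] at hc

/-! ### The descent recursion -/

lemma Qstep (v : W) (p q x : B) (hpq : p ≠ q) (hqx : q ≠ x) (hpx : p ≠ x)
    (o : ∀ a b : B, a ≠ b → 4 ≤ orderOf (cs.simple a * cs.simple b))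
    (h1 : cs.length (v * cs.simple p) + 1 = cs.length v)
    (h2 : cs.length (v * cs.simple q) + 1 = cs.length v)
    (h3 : cs.length (v * cs.simple p * cs.simple x) + 2 = cs.length v)
    (h4 : cs.length (v * cs.simple q * cs.simple x) + 2 = cs.length v) :
    cs.length (v * cs.simple p * cs.simple q) + 2 = cs.length v ∧
    cs.length (v * cs.simple p * cs.simple q * cs.simple p) + 3 = cs.length v ∧
    cs.length (v * cs.simple p * cs.simple q * cs.simple x) + 3 = cs.length v ∧
    cs.length (v * cs.simple p * cs.simple q * cs.simple p * cs.simple q) + 4 = cs.length v ∧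
    cs.length (v * cs.simple p * cs.simple q * cs.simple x * cs.simple q) + 4 = cs.length v := by
  have hdp : cs.length (v * cs.simple p) < cs.length v := by omega
  have hdq : cs.length (v * cs.simple q) < cs.length v := by omega
  have A2 := chain2 cs p q v hdp hdq (o q p hpq.symm)
  have A3 := chain3 cs q p v hdq hdp (o p q hpq)
  have A4 := chain4 cs p q v hdp hdq (o q p hpq.symm)
  simp only [← mul_assoc] at A2 A3 A4
  have hd1q : cs.length (v * cs.simple p * cs.simple q) < cs.length (v * cs.simple p) := by
    omega
  have hd1x : cs.length (v * cs.simple p * cs.simple x) < cs.length (v * cs.simple p) := by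
    omega
  have B2 := chain2 cs q x (v * cs.simple p) hd1q hd1x (o x q hqx.symm)
  have B3 := chain3 cs x q (v * cs.simple p) hd1x hd1q (o q x hqx)
  simp only [← mul_assoc] at B2 B3
  exact ⟨by omega, by omega, by omega, by omega, by omega⟩

lemma noQ (o : ∀ a b : B, a ≠ b → 4 ≤ orderOf (cs.simple a * cs.simple b)) :
    ∀ n : ℕ, ∀ v : W, ∀ p q x : B, p ≠ q → q ≠ x → p ≠ x → cs.length v ≤ n →
      cs.length (v * cs.simple p) + 1 = cs.length v →
      cs.length (v * cs.simple q) + 1 = cs.length v →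
      cs.length (v * cs.simple p * cs.simple x) + 2 = cs.length v →
      cs.length (v * cs.simple q * cs.simple x) + 2 = cs.length v → False := by
  intro n
  induction n with
  | zero =>
      intro v p q x _ _ _ hle h1 _ _ _
      omega
  | succ n ih =>
      intro v p q x hpq hqx hpx hle h1 h2 h3 h4
      obtain ⟨O1, O2, O3, O4, O5⟩ := Qstep cs v p q x hpq hqx hpx o h1 h2 h3 h4
      exact ih (v * cs.simple p * cs.simple q) p x q hpx hqx.symm hpq
        (by omega) (by omega) (by omega) (by omega) (by omega)

end NotBothDownAux

/-- **Lemma (not both down).** Let `(W, S)` be a Coxeter system such that `m s t < ∞` and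
`m s t ≥ 4` for all `s ≠ t` in `S`. Suppose `w ∈ W` and `s ≠ t ∈ S` satisfy
`ℓ(ws) = ℓ(w) + 1 = ℓ(wt)`. Then for every `r ∈ S \ {s, t}` one has
`ℓ(wsr) = ℓ(w) + 2` or `ℓ(wtr) = ℓ(w) + 2`. -/
theorem not_both_down
    {B : Type*} [Fintype B] {W : Type*} [Group W] {M : CoxeterMatrix B}
    (cs : CoxeterSystem M W)
    (hfin : ∀ s t : B, s ≠ t → orderOf (cs.simple s * cs.simple t) ≠ 0)
    (hge4 : ∀ s t : B, s ≠ t → 4 ≤ orderOf (cs.simple s * cs.simple t))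
    (w : W) (s t : B) (hst : s ≠ t)
    (hws : cs.length (w * cs.simple s) = cs.length w + 1)
    (hwt : cs.length (w * cs.simple t) = cs.length w + 1)
    (r : B) (hrs : r ≠ s) (hrt : r ≠ t) :
    cs.length (w * cs.simple s * cs.simple r) = cs.length w + 2 ∨
      cs.length (w * cs.simple t * cs.simple r) = cs.length w + 2 := by
  by_contra hcon
  push_neg at hcon
  obtain ⟨hn1, hn2⟩ := hcon
  have hA : cs.length (w * cs.simple s * cs.simple r) = cs.length w := by
    rcases cs.length_mul_simple (w * cs.simple s) r with h | h
    · rw [hws] at h; omega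
    · rw [hws] at h; omega
  have hB : cs.length (w * cs.simple t * cs.simple r) = cs.length w := by
    rcases cs.length_mul_simple (w * cs.simple t) r with h | h
    · rw [hwt] at h; omega
    · rw [hwt] at h; omega
  -- Phase 1, s-side
  have hds : cs.length (w * cs.simple s * cs.simple s) < cs.length (w * cs.simple s) := by
    rw [cs.simple_mul_simple_cancel_right]
    omega
  have hdr : cs.length (w * cs.simple s * cs.simple r) < cs.length (w * cs.simple s) := by
    omega
  have C2 := NotBothDownAux.chain2 cs s r (w * cs.simple s) hds hdr (hge4 r s hrs)
  have C3 := NotBothDownAux.chain3 cs r s (w * cs.simple s) hdr hds (hge4 s r hrs.symm)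
  have C4 := NotBothDownAux.chain4 cs s r (w * cs.simple s) hds hdr (hge4 r s hrs)
  simp only [← mul_assoc, cs.simple_mul_simple_cancel_right] at C2 C3 C4
  -- Phase 1, t-side
  have hdt : cs.length (w * cs.simple t * cs.simple t) < cs.length (w * cs.simple t) := by
    rw [cs.simple_mul_simple_cancel_right]
    omega
  have hdr' : cs.length (w * cs.simple t * cs.simple r) < cs.length (w * cs.simple t) := by
    omega
  have D2 := NotBothDownAux.chain2 cs t r (w * cs.simple t) hdt hdr' (hge4 r t hrt)
  have D3 := NotBothDownAux.chain3 cs r t (w * cs.simple t) hdr' hdt (hge4 t r hrt.symm)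
  have D4 := NotBothDownAux.chain4 cs t r (w * cs.simple t) hdt hdr' (hge4 r t hrt)
  simp only [← mul_assoc, cs.simple_mul_simple_cancel_right] at D2 D3 D4
  exact NotBothDownAux.noQ cs hge4 (cs.length (w * cs.simple r)) (w * cs.simple r) s t r
    hst hrt.symm hrs.symm (le_refl _)
    (by omega) (by omega) (by omega) (by omega)
end

section
/- Let (W,S) be a Coxeter system of finite rank n ≥ 3 such that there exists m ≥ 3 with m_{st} = m for all s ≠ t ∈ S. Then for every natural number i > m one has 2·c_{i+1} = d_{i+1} + (n-2)·c_i + d_i (equivalently 2c_{i+1} - d_{i+1} = (n-2)c_i + d_i). -/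
open List
open scoped Classical
namespace TwoCAux
variable {B : Type*} {W : Type*} [Group W] {M : CoxeterMatrix B} (cs : CoxeterSystem M W)

noncomputable def sig (i : B) : Equiv.Perm (W × ZMod 2) :=
  Function.Involutive.toPerm
    (fun p => (cs.simple i * p.1 * cs.simple i,
      if p.1 = cs.simple i then p.2 + 1 else p.2))
    (by
      rintro ⟨w, e⟩
      by_cases h : w = cs.simple i
      · subst h
        simp only [cs.simple_mul_simple_cancel_right, if_pos rfl]
        have h1 : (1 : ZMod 2) + 1 = 0 := by decide
        simp [add_assoc, h1]
      · have h2 : cs.simple i * w * cs.simple i ≠ cs.simple i := by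
          intro hh
          apply h
          have := congrArg (fun x => cs.simple i * x * cs.simple i) hh
          simp only [mul_assoc] at this
          simpa [cs.simple_mul_simple_cancel_left,
            cs.simple_mul_simple_cancel_right, ← mul_assoc] using this
        simp only [if_neg h, if_neg h2]
        simp [mul_assoc, cs.simple_mul_simple_cancel_left,
          cs.simple_mul_simple_cancel_right])

lemma sig_apply (i : B) (w : W) (e : ZMod 2) :
    sig cs i (w, e) = (cs.simple i * w * cs.simple i,
      if w = cs.simple i then e + 1 else e) := rfl

lemma shift_pow (x y : W) (n : ℕ) : (x * y) ^ n * x = x * (y * x) ^ n := by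
  induction n with
  | zero => simp
  | succ n ih =>
    rw [pow_succ' (x * y), mul_assoc (x * y), ih, pow_succ' (y * x)]
    simp [mul_assoc]

lemma conj_pow_eq (a b : B) (q : ℕ) :
    ((cs.simple a * cs.simple b) ^ q)⁻¹ * cs.simple b * (cs.simple a * cs.simple b) ^ q
      = cs.simple b * (cs.simple a * cs.simple b) ^ (2 * q) := by
  have hinv : ((cs.simple a * cs.simple b) ^ q)⁻¹ = (cs.simple b * cs.simple a) ^ q := by
    rw [← inv_pow, mul_inv_rev, cs.inv_simple, cs.inv_simple]
  rw [hinv, shift_pow, two_mul, pow_add, mul_assoc]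

lemma conj_eq_iff (g x y : W) : g * x * g⁻¹ = y ↔ x = g⁻¹ * y * g := by
  constructor
  · intro h; subst h; group
  · intro h; subst h; group

lemma conj_odd_eq (a b : B) (k : ℕ) :
    ((cs.simple a * cs.simple b) ^ k)⁻¹ * (cs.simple b * cs.simple a * cs.simple b)
        * (cs.simple a * cs.simple b) ^ k
      = cs.simple b * (cs.simple a * cs.simple b) ^ (2 * k + 1) := by
  set sa := cs.simple a
  set sb := cs.simple b
  have e1 : sb * sa * sb = (sa * sb)⁻¹ * sb := by
    rw [mul_inv_rev, cs.inv_simple, cs.inv_simple]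
  have h4 : (sa * sb) ^ k = (sa * sb) ^ (k + 1) * (sa * sb)⁻¹ := by
    rw [pow_succ]; group
  calc ((sa * sb) ^ k)⁻¹ * (sb * sa * sb) * (sa * sb) ^ k
      = (((sa * sb) ^ k)⁻¹ * (sa * sb)⁻¹) * sb * ((sa * sb) ^ (k + 1) * (sa * sb)⁻¹) := by
        rw [e1, ← h4]; group
    _ = ((sa * sb) ^ (k + 1))⁻¹ * sb * (sa * sb) ^ (k + 1) * (sa * sb)⁻¹ := by
        rw [pow_succ', mul_inv_rev]
        simp [mul_assoc]
    _ = sb * (sa * sb) ^ (2 * (k + 1)) * (sa * sb)⁻¹ := by rw [conj_pow_eq]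
    _ = sb * (sa * sb) ^ (2 * k + 1) := by
        rw [show 2 * (k + 1) = (2 * k + 1) + 1 by ring, pow_succ]
        group

lemma sig_pair_pow (a b : B) (k : ℕ) (w : W) (e : ZMod 2) :
    ((sig cs a * sig cs b) ^ k) (w, e) =
      ((cs.simple a * cs.simple b) ^ k * w * ((cs.simple a * cs.simple b) ^ k)⁻¹,
        e + ∑ r ∈ Finset.range (2 * k),
          if w = cs.simple b * (cs.simple a * cs.simple b) ^ r then (1 : ZMod 2) else 0) := by
  set sa := cs.simple a with hsa
  set sb := cs.simple b with hsb
  induction k with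
  | zero => simp
  | succ k ih =>
    rw [pow_succ' (sig cs a * sig cs b), Equiv.Perm.mul_apply, ih, Equiv.Perm.mul_apply,
      sig_apply, sig_apply]
    have hc1 : ((sa * sb) ^ k * w * ((sa * sb) ^ k)⁻¹ = sb) ↔ (w = sb * (sa * sb) ^ (2 * k)) := by
      rw [conj_eq_iff, conj_pow_eq]
    have hc2 : (sb * ((sa * sb) ^ k * w * ((sa * sb) ^ k)⁻¹) * sb = sa)
        ↔ (w = sb * (sa * sb) ^ (2 * k + 1)) := by
      have hrw : sb * ((sa * sb) ^ k * w * ((sa * sb) ^ k)⁻¹) * sb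
          = sb * ((sa * sb) ^ k * w * ((sa * sb) ^ k)⁻¹) * sb⁻¹ := by
        rw [cs.inv_simple]
      rw [hrw, conj_eq_iff, cs.inv_simple, conj_eq_iff,
        show ((sa * sb) ^ k)⁻¹ * (sb * sa * sb) * (sa * sb) ^ k
          = sb * (sa * sb) ^ (2 * k + 1) from conj_odd_eq cs a b k]
    rw [show 2 * (k + 1) = (2 * k) + 1 + 1 by ring, Finset.sum_range_succ, Finset.sum_range_succ]
    simp only [← hsa, ← hsb, hc1, hc2, Prod.mk.injEq]
    constructor
    · rw [pow_succ' (sa * sb) k]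
      simp [hsa, hsb, mul_assoc, mul_inv_rev, cs.inv_simple]
    · by_cases hw2 : w = sb * (sa * sb) ^ (2 * k + 1) <;>
        by_cases hw1 : w = sb * (sa * sb) ^ (2 * k)
      · rw [if_pos hw2, if_pos hw1, if_pos hw1, if_pos hw2]; ring
      · rw [if_pos hw2, if_neg hw1, if_neg hw1, if_pos hw2]; ring
      · rw [if_neg hw2, if_pos hw1, if_pos hw1, if_neg hw2]; ring
      · rw [if_neg hw2, if_neg hw1, if_neg hw1, if_neg hw2]; ring

lemma sig_liftable : CoxeterMatrix.IsLiftable M (fun i => sig cs i) := by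
  intro a b
  ext ⟨w, e⟩ : 1
  rw [Equiv.Perm.one_apply, sig_pair_pow, cs.simple_mul_simple_pow a b]
  simp only [one_mul, inv_one, mul_one]
  have hsum : ∑ r ∈ Finset.range (2 * M.M a b),
      (if w = cs.simple b * (cs.simple a * cs.simple b) ^ r then (1 : ZMod 2) else 0) = 0 := by
    rw [two_mul, Finset.sum_range_add]
    have hper : ∀ r : ℕ,
        (if w = cs.simple b * (cs.simple a * cs.simple b) ^ (M.M a b + r) then (1 : ZMod 2) else 0)
        = (if w = cs.simple b * (cs.simple a * cs.simple b) ^ r then (1 : ZMod 2) else 0) := by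
      intro r
      rw [pow_add, cs.simple_mul_simple_pow a b, one_mul]
    rw [Finset.sum_congr rfl (fun r _ => hper r)]
    exact CharTwo.add_self_eq_zero _
  rw [hsum, add_zero]

/-- The Bourbaki sign homomorphism `W →* Perm (W × ZMod 2)`. -/
noncomputable def phi : W →* Equiv.Perm (W × ZMod 2) :=
  cs.lift ⟨fun i => sig cs i, sig_liftable cs⟩

lemma phi_simple (i : B) : phi cs (cs.simple i) = sig cs i :=
  cs.lift_apply_simple (sig_liftable cs) i

lemma phi_wordProd [DecidableEq W] (ω : List B) (t : W) (e : ZMod 2) :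
    phi cs (cs.wordProd ω) (t, e) =
      (cs.wordProd ω * t * (cs.wordProd ω)⁻¹,
        e + ((cs.rightInvSeq ω).count t : ZMod 2)) := by
  induction ω generalizing e with
  | nil => simp
  | cons i ω ih =>
    have hris : cs.rightInvSeq (i :: ω)
        = ((cs.wordProd ω)⁻¹ * cs.simple i * cs.wordProd ω) :: cs.rightInvSeq ω := rfl
    rw [cs.wordProd_cons, map_mul, Equiv.Perm.mul_apply, ih, phi_simple, sig_apply, hris,
      List.count_cons]
    have hcond : (cs.wordProd ω * t * (cs.wordProd ω)⁻¹ = cs.simple i)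
        ↔ ((cs.wordProd ω)⁻¹ * cs.simple i * cs.wordProd ω = t) := by
      rw [conj_eq_iff]
      constructor <;> intro h <;> exact h.symm
    simp only [Prod.mk.injEq]
    constructor
    · simp [mul_assoc, mul_inv_rev, cs.inv_simple]
    · simp only [beq_iff_eq, Nat.cast_add, Nat.cast_ite, Nat.cast_one, Nat.cast_zero, hcond]
      by_cases h : (cs.wordProd ω)⁻¹ * cs.simple i * cs.wordProd ω = t
      · rw [if_pos h, if_pos h]; ring
      · rw [if_neg h, if_neg h]; ring

/-- The sign cocycle. -/
noncomputable def eta (w t : W) : ZMod 2 := (phi cs w (t, 0)).2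

lemma eta_wordProd [DecidableEq W] (ω : List B) (t : W) :
    eta cs (cs.wordProd ω) t = ((cs.rightInvSeq ω).count t : ZMod 2) := by
  rw [eta, phi_wordProd, zero_add]

lemma phi_apply (w t : W) (e : ZMod 2) :
    phi cs w (t, e) = (w * t * w⁻¹, e + eta cs w t) := by
  classical
  obtain ⟨ω, rfl⟩ := cs.wordProd_surjective w
  rw [phi_wordProd, eta_wordProd]

lemma eta_mul (u v t : W) :
    eta cs (u * v) t = eta cs v t + eta cs u (v * t * v⁻¹) := by
  have := phi_apply cs u (v * t * v⁻¹) (eta cs v t)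
  rw [eta, map_mul, Equiv.Perm.mul_apply, phi_apply cs v t 0, zero_add, this]

lemma eta_one (t : W) : eta cs 1 t = 0 := by
  rw [eta, map_one]
  rfl

lemma eta_simple_self (i : B) : eta cs (cs.simple i) (cs.simple i) = 1 := by
  rw [eta, phi_simple, sig_apply, if_pos rfl]
  exact zero_add 1

lemma eta_refl_self {t : W} (ht : cs.IsReflection t) : eta cs t t = 1 := by
  obtain ⟨u, i, rfl⟩ := ht
  set t := u * cs.simple i * u⁻¹ with hts
  have e1 : eta cs t t = eta cs u⁻¹ t + eta cs (u * cs.simple i) (u⁻¹ * t * u⁻¹⁻¹) := by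
    conv_lhs => rw [hts]
    exact eta_mul cs (u * cs.simple i) u⁻¹ t
  have harg1 : u⁻¹ * t * u⁻¹⁻¹ = cs.simple i := by rw [hts]; group
  have e2 : eta cs (u * cs.simple i) (cs.simple i)
      = eta cs (cs.simple i) (cs.simple i)
        + eta cs u (cs.simple i * cs.simple i * (cs.simple i)⁻¹) :=
    eta_mul cs u (cs.simple i) (cs.simple i)
  have harg2 : cs.simple i * cs.simple i * (cs.simple i)⁻¹ = cs.simple i := by group
  have e3 : eta cs u (cs.simple i) + eta cs u⁻¹ (u * cs.simple i * u⁻¹) = 0 := by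
    have h := eta_mul cs u⁻¹ u (cs.simple i)
    rw [inv_mul_cancel, eta_one] at h
    exact h.symm
  rw [e1, harg1, e2, harg2, eta_simple_self]
  calc eta cs u⁻¹ t + (1 + eta cs u (cs.simple i))
      = (eta cs u (cs.simple i) + eta cs u⁻¹ (u * cs.simple i * u⁻¹)) + 1 := by
        rw [hts]; ring
    _ = 1 := by rw [e3, zero_add]

lemma zmod2_cases (x : ZMod 2) : x = 0 ∨ x = 1 := by
  revert x
  decide

lemma length_mul_lt_of_eta_one {w t : W} (h : eta cs w t = 1) :
    cs.length (w * t) < cs.length w := by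
  classical
  obtain ⟨ω, hlen, rfl⟩ := cs.exists_reduced_word w
  rw [eta_wordProd] at h
  have hcnt : (cs.rightInvSeq ω).count t ≠ 0 := by
    intro h0
    rw [h0] at h
    simp at h
  have hmem : t ∈ cs.rightInvSeq ω := by
    by_contra hmem
    exact hcnt (List.count_eq_zero.mpr hmem)
  obtain ⟨j, hj, hget⟩ := List.mem_iff_getElem.mp hmem
  have hj' : j < ω.length := by
    rwa [cs.length_rightInvSeq] at hj
  have hgetD : (cs.rightInvSeq ω).getD j 1 = t := by
    rw [List.getD_eq_getElem _ _ hj, hget]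
  have herase : cs.wordProd ω * t = cs.wordProd (ω.eraseIdx j) := by
    rw [← hgetD]
    exact cs.wordProd_mul_getD_rightInvSeq ω j
  rw [herase]
  calc cs.length (cs.wordProd (ω.eraseIdx j)) ≤ (ω.eraseIdx j).length :=
        cs.length_wordProd_le _
    _ < ω.length := by
        have := List.length_eraseIdx_add_one hj'
        omega
    _ = cs.length (cs.wordProd ω) := hlen.eq.symm

lemma eta_of_inversion {w t : W} (ht : cs.IsReflection t)
    (h : cs.length (w * t) < cs.length w) : eta cs w t = 1 := by
  rcases zmod2_cases (eta cs w t) with h0 | h1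
  · exfalso
    have hwt : eta cs (w * t) t = 1 := by
      have := eta_mul cs w t t
      rw [show t * t * t⁻¹ = t by group, h0, add_zero] at this
      rw [this, eta_refl_self cs ht]
    have := length_mul_lt_of_eta_one cs hwt
    rw [mul_assoc, ht.mul_self, mul_one] at this
    omega
  · exact h1

lemma exchange {t : W} (ω : List B) (ht : cs.IsReflection t)
    (h : cs.length (cs.wordProd ω * t) < cs.length (cs.wordProd ω)) :
    ∃ j < ω.length, cs.wordProd (ω.eraseIdx j) = cs.wordProd ω * t := by
  classical
  have h1 : eta cs (cs.wordProd ω) t = 1 := eta_of_inversion cs ht h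
  rw [eta_wordProd] at h1
  have hcnt : (cs.rightInvSeq ω).count t ≠ 0 := by
    intro h0
    rw [h0] at h1
    simp at h1
  have hmem : t ∈ cs.rightInvSeq ω := by
    by_contra hmem
    exact hcnt (List.count_eq_zero.mpr hmem)
  obtain ⟨j, hj, hget⟩ := List.mem_iff_getElem.mp hmem
  have hj' : j < ω.length := by rwa [cs.length_rightInvSeq] at hj
  refine ⟨j, hj', ?_⟩
  have hgetD : (cs.rightInvSeq ω).getD j 1 = t := by
    rw [List.getD_eq_getElem _ _ hj, hget]
  rw [← hgetD]
  exact (cs.wordProd_mul_getD_rightInvSeq ω j).symm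

/-- If `a` is a right descent of `w`, then `w` has a reduced word ending in `a`. -/
lemma word_ending {w : W} {a : B} (h : cs.length (w * cs.simple a) < cs.length w) :
    ∃ ω' : List B, cs.wordProd ω' = w * cs.simple a
      ∧ ω'.length + 1 = cs.length w
      ∧ cs.wordProd (ω' ++ [a]) = w
      ∧ (ω' ++ [a]).length = cs.length w := by
  obtain ⟨ω', hlen, heq⟩ := cs.exists_reduced_word (w * cs.simple a)
  have hd := cs.length_mul_simple w a
  have hl : cs.length (w * cs.simple a) + 1 = cs.length w := by omega
  have hprod : cs.wordProd (ω' ++ [a]) = w := by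
    rw [cs.wordProd_append, cs.wordProd_singleton, ← heq,
      cs.simple_mul_simple_cancel_right]
  exact ⟨ω', heq.symm, by rw [← hlen.eq, ← heq]; omega, hprod,
    by rw [List.length_append, List.length_singleton, ← hlen.eq, ← heq]; omega⟩

/-- Key dihedral lemma: if `a ≠ b` are both right descents of `w`,
then `ℓ(w s_a s_b) = ℓ(w) - 2`. -/
lemma L2 {w : W} {a b : B} (hne : cs.simple a ≠ cs.simple b)
    (ha : cs.length (w * cs.simple a) < cs.length w)
    (hb : cs.length (w * cs.simple b) < cs.length w) :
    cs.length (w * cs.simple a * cs.simple b) + 2 = cs.length w := by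
  obtain ⟨ω', hω'prod, hω'len, hfullprod, hfulllen⟩ := word_ending cs hb
  have hred : cs.length (cs.wordProd (ω' ++ [b])) = (ω' ++ [b]).length := by
    rw [hfullprod, hfulllen]
  obtain ⟨j, hj, hje⟩ := exchange cs (ω' ++ [b]) (cs.isReflection_simple a)
    (by rw [hfullprod]; exact ha)
  rw [hfullprod] at hje
  rcases Nat.lt_or_ge j ω'.length with hlt | hge
  · -- exchange inside ω'
    have herase : (ω' ++ [b]).eraseIdx j = ω'.eraseIdx j ++ [b] := by
      rw [List.eraseIdx_append_of_lt_length hlt]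
    rw [herase, cs.wordProd_append, cs.wordProd_singleton] at hje
    have hxe : cs.wordProd (ω'.eraseIdx j) = w * cs.simple a * cs.simple b := by
      have := congrArg (fun x => x * cs.simple b) hje
      simpa [mul_assoc, cs.simple_mul_simple_cancel_right] using this
    have hlenx : cs.length (w * cs.simple a * cs.simple b) ≤ ω'.length - 1 := by
      rw [← hxe]
      calc cs.length (cs.wordProd (ω'.eraseIdx j)) ≤ (ω'.eraseIdx j).length :=
            cs.length_wordProd_le _
        _ = ω'.length - 1 := by
            have := List.length_eraseIdx_add_one hlt
            omega
    have hge2 : cs.length w ≤ cs.length (w * cs.simple a * cs.simple b) + 2 := by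
      have h1 := cs.length_mul_simple (w * cs.simple a) b
      have h2 := cs.length_mul_simple w a
      omega
    omega
  · -- the erased letter is the final b : contradiction
    exfalso
    have hjeq : j = ω'.length := by
      have : j < (ω' ++ [b]).length := hj
      simp only [List.length_append, List.length_singleton] at this
      omega
    subst hjeq
    have herase : (ω' ++ [b]).eraseIdx ω'.length = ω' := by
      rw [List.eraseIdx_append_of_length_le (le_refl _)]
      simp
    rw [herase, hω'prod] at hje
    exact hne (by
      have := mul_left_cancel hje
      exact this.symm ▸ this)

/-- Depth-3 dihedral lemma: if `a, b` are distinct right descents of `w` and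
`s_a s_b` has order at least 3, then `ℓ(w s_b s_a s_b) = ℓ(w) - 3`. -/
lemma L3 {w : W} {a b : B} (hne : cs.simple a ≠ cs.simple b)
    (h2 : (cs.simple a * cs.simple b) ^ 2 ≠ 1)
    (ha : cs.length (w * cs.simple a) < cs.length w)
    (hb : cs.length (w * cs.simple b) < cs.length w) :
    cs.length (w * cs.simple b * cs.simple a * cs.simple b) + 3 = cs.length w := by
  have l1 : cs.length (w * cs.simple b * cs.simple a) + 2 = cs.length w :=
    L2 cs hne.symm hb ha
  have l1' : cs.length (w * cs.simple a * cs.simple b) + 2 = cs.length w :=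
    L2 cs hne ha hb
  by_contra hcon
  have hdich := cs.length_mul_simple (w * cs.simple b * cs.simple a) b
  have hdichb := cs.length_mul_simple w b
  have hz : cs.length (w * cs.simple b * cs.simple a * cs.simple b) + 1 = cs.length w := by
    omega
  -- z = w * s_b * s_a * s_b has right descent b
  have hzb : cs.length ((w * cs.simple b * cs.simple a * cs.simple b) * cs.simple b)
      < cs.length (w * cs.simple b * cs.simple a * cs.simple b) := by
    rw [mul_assoc (w * cs.simple b * cs.simple a), cs.simple_mul_simple_self, mul_one]
    omega
  -- if z also has right descent a, we get a contradiction
  have key : ¬ (cs.length ((w * cs.simple b * cs.simple a * cs.simple b) * cs.simple a)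
      < cs.length (w * cs.simple b * cs.simple a * cs.simple b)) := by
    intro hza
    have hL2z := L2 cs hne.symm hzb hza
    have hzsimp : (w * cs.simple b * cs.simple a * cs.simple b) * cs.simple b * cs.simple a
        = w * cs.simple b := by
      rw [mul_assoc (w * cs.simple b * cs.simple a), cs.simple_mul_simple_self, mul_one,
        mul_assoc (w * cs.simple b), cs.simple_mul_simple_self, mul_one]
    rw [hzsimp] at hL2z
    omega
  apply key
  by_cases hbraid : (cs.simple a * cs.simple b) ^ 3 = 1
  · -- braid case: s_a s_b s_a = s_b s_a s_b, so z = w s_a s_b s_a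
    have hx : (cs.simple a * cs.simple b) ^ 2 * (cs.simple a * cs.simple b) = 1 := by
      rw [← pow_succ]; exact hbraid
    have e2 : (cs.simple a * cs.simple b) ^ 2 = (cs.simple a * cs.simple b)⁻¹ :=
      eq_inv_of_mul_eq_one_left hx
    have e1 : cs.simple a * cs.simple b * cs.simple a
        = cs.simple b * cs.simple a * cs.simple b := by
      have h' := congrArg (fun x => x * cs.simple b) e2
      simp only [pow_two, mul_inv_rev, cs.inv_simple] at h'
      simpa [mul_assoc, cs.simple_mul_simple_self, mul_one,
        cs.simple_mul_simple_cancel_left] using h'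
    have hzsa : (w * cs.simple b * cs.simple a * cs.simple b) * cs.simple a
        = w * cs.simple a * cs.simple b := by
      have h' : w * cs.simple b * cs.simple a * cs.simple b
          = w * (cs.simple a * cs.simple b * cs.simple a) := by
        rw [congrArg (fun x => w * x) e1]; simp [mul_assoc]
      rw [h']
      simp [mul_assoc, cs.simple_mul_simple_self, mul_one,
        cs.simple_mul_simple_cancel_left]
    rw [hzsa]
    omega
  -- non-braid case: use strong exchange
  have hrefl : cs.IsReflection (cs.simple b * cs.simple a * cs.simple b) :=
    ⟨cs.simple b, a, by rw [cs.inv_simple]⟩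
  have hassoc : w * (cs.simple b * cs.simple a * cs.simple b)
      = w * cs.simple b * cs.simple a * cs.simple b := by
    simp [mul_assoc]
  have hwt : cs.length (w * (cs.simple b * cs.simple a * cs.simple b)) < cs.length w := by
    rw [hassoc]; omega
  obtain ⟨ω₂, hlen₂, heq₂⟩ := cs.exists_reduced_word (w * cs.simple a * cs.simple b)
  replace hlen₂ : ω₂.length = cs.length (w * cs.simple a * cs.simple b) := by
    rw [heq₂]; exact hlen₂.eq.symm
  have hfull : cs.wordProd (ω₂ ++ [b, a]) = w := by
    rw [cs.wordProd_append, ← heq₂]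
    have : cs.wordProd [b, a] = cs.simple b * cs.simple a := by
      rw [cs.wordProd_cons, cs.wordProd_singleton]
    rw [this, ← mul_assoc, mul_assoc (w * cs.simple a), cs.simple_mul_simple_self, mul_one,
      mul_assoc w, cs.simple_mul_simple_self, mul_one]
  obtain ⟨j, hj, hje⟩ := exchange cs (ω₂ ++ [b, a]) hrefl (by rw [hfull]; exact hwt)
  rw [hfull] at hje
  have hjlen : j < ω₂.length + 2 := by simpa using hj
  rcases Nat.lt_or_ge j ω₂.length with hlt | hge
  · -- erased inside ω₂ : get the descent a of z
    have herase : (ω₂ ++ [b, a]).eraseIdx j = ω₂.eraseIdx j ++ [b, a] := by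
      rw [List.eraseIdx_append_of_lt_length hlt]
    rw [herase, cs.wordProd_append] at hje
    have hba : cs.wordProd [b, a] = cs.simple b * cs.simple a := by
      rw [cs.wordProd_cons, cs.wordProd_singleton]
    rw [hba] at hje
    -- hje : x * (s_b * s_a) = w * (s_b * s_a * s_b) =: z
    have hxz : (w * cs.simple b * cs.simple a * cs.simple b) * cs.simple a
        = cs.wordProd (ω₂.eraseIdx j) * cs.simple b := by
      rw [← hassoc, ← hje]
      simp [mul_assoc]
    rw [hxz]
    have hxlen : cs.length (cs.wordProd (ω₂.eraseIdx j)) ≤ ω₂.length - 1 := by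
      calc cs.length (cs.wordProd (ω₂.eraseIdx j)) ≤ (ω₂.eraseIdx j).length :=
            cs.length_wordProd_le _
        _ = ω₂.length - 1 := by
            have := List.length_eraseIdx_add_one hlt
            omega
    have hxb : cs.length (cs.wordProd (ω₂.eraseIdx j) * cs.simple b)
        ≤ cs.length (cs.wordProd (ω₂.eraseIdx j)) + 1 := by
      have := cs.length_mul_le (cs.wordProd (ω₂.eraseIdx j)) (cs.simple b)
      rwa [cs.length_simple] at this
    omega
  · exfalso
    have hj2 : j = ω₂.length ∨ j = ω₂.length + 1 := by omega
    rcases hj2 with hjeq | hjeq <;> subst hjeq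
    · -- j = ω₂.length : erased letter is b
      have herase : (ω₂ ++ [b, a]).eraseIdx ω₂.length = ω₂ ++ [a] := by
        rw [List.eraseIdx_append_of_length_le (le_refl _)]
        simp
      rw [herase, cs.wordProd_append, cs.wordProd_singleton, ← heq₂] at hje
      -- hje : w * s_a * s_b * s_a = w * (s_b * s_a * s_b)
      have e : cs.simple a * cs.simple b * cs.simple a
          = cs.simple b * cs.simple a * cs.simple b := by
        have h' : w * (cs.simple a * cs.simple b * cs.simple a)
            = w * (cs.simple b * cs.simple a * cs.simple b) := by
          rw [← hje]; simp [mul_assoc]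
        exact mul_left_cancel h'
      apply hbraid
      have h3 : (cs.simple a * cs.simple b) ^ 3
          = (cs.simple a * cs.simple b * cs.simple a)
            * (cs.simple b * cs.simple a * cs.simple b) := by
        rw [pow_succ, pow_two]
        simp [mul_assoc]
      rw [h3, e]
      simp [mul_assoc, cs.simple_mul_simple_cancel_left]
    · -- j = ω₂.length + 1 : erased letter is a
      have herase : (ω₂ ++ [b, a]).eraseIdx (ω₂.length + 1) = ω₂ ++ [b] := by
        rw [List.eraseIdx_append_of_length_le (by omega)]
        simp
      rw [herase, cs.wordProd_append, cs.wordProd_singleton, ← heq₂] at hje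
      -- hje : w * s_a * s_b * s_b = w * (s_b * s_a * s_b), i.e. w * s_a = ...
      have hje' : w * cs.simple a = w * (cs.simple b * cs.simple a * cs.simple b) := by
        rw [← hje, mul_assoc (w * cs.simple a), cs.simple_mul_simple_self, mul_one]
      have e : cs.simple a = cs.simple b * cs.simple a * cs.simple b :=
        mul_left_cancel hje'
      apply h2
      rw [pow_two]
      nth_rewrite 2 [e]
      simp [mul_assoc, cs.simple_mul_simple_cancel_left]

section NoThree

variable {m : ℕ}

/-- In a Coxeter system where all off-diagonal orders are `m ≥ 3`, no element has three
distinct right descents. -/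
lemma no_three_descents (hm : 3 ≤ m)
    (hM : ∀ p q : B, p ≠ q → orderOf (cs.simple p * cs.simple q) = m)
    (w : W) {i j k : B} (hij : i ≠ j) (hik : i ≠ k) (hjk : j ≠ k)
    (hdi : cs.length (w * cs.simple i) < cs.length w)
    (hdj : cs.length (w * cs.simple j) < cs.length w)
    (hdk : cs.length (w * cs.simple k) < cs.length w) : False := by
  -- auxiliary facts about distinct pairs
  have hfacts : ∀ p q : B, p ≠ q →
      cs.simple p ≠ cs.simple q ∧ (cs.simple p * cs.simple q) ^ 2 ≠ 1 := by
    intro p q hpq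
    have hord := hM p q hpq
    constructor
    · intro h
      rw [h] at hord
      rw [cs.simple_mul_simple_self q] at hord
      rw [orderOf_one] at hord
      omega
    · intro h
      have := orderOf_dvd_of_pow_eq_one h
      rw [hord] at this
      have := Nat.le_of_dvd (by norm_num) this
      omega
  -- the cyclic sequence of letters j, i, k, j, i, k, ...
  set y : ℕ → B := fun r => if r % 3 = 0 then j else if r % 3 = 1 then i else k with hy
  have hy3 : ∀ r, y (r + 3) = y r := by
    intro r
    simp only [hy]
    have : (r + 3) % 3 = r % 3 := by omega
    rw [this]
  have hyne : ∀ r, y r ≠ y (r + 1) := by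
    intro r
    simp only [hy]
    have h3 : r % 3 = 0 ∨ r % 3 = 1 ∨ r % 3 = 2 := by omega
    rcases h3 with h | h | h
    · have h' : (r + 1) % 3 = 1 := by omega
      simp [h, h']
      exact hij.symm
    · have h' : (r + 1) % 3 = 2 := by omega
      simp [h, h']
      exact hik
    · have h' : (r + 1) % 3 = 0 := by omega
      simp [h, h']
      exact hjk.symm
  -- the sequence of elements
  set v : ℕ → W := fun r => w * cs.wordProd ((List.range r).map y) with hv
  have hv0 : v 0 = w := by simp [hv]
  have hvs : ∀ r, v (r + 1) = v r * cs.simple (y r) := by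
    intro r
    simp only [hv]
    rw [List.range_succ, List.map_append, cs.wordProd_append]
    simp [mul_assoc]
  -- the induction invariant
  set P : ℕ → Prop := fun r =>
    cs.length (v r) + r = cs.length w
    ∧ cs.length (v r * cs.simple (y r)) < cs.length (v r)
    ∧ cs.length (v r * cs.simple (y (r + 1))) < cs.length (v r) with hP
  have hy0 : y 0 = j := by simp [hy]
  have hy1 : y 1 = i := by simp [hy]
  have hy2 : y 2 = k := by simp [hy]
  have base0 : P 0 := by
    refine ⟨by simp [hv0], ?_, ?_⟩
    · rw [hv0, hy0]; exact hdj
    · rw [hv0, hy1]; exact hdi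
  have base1 : P 1 := by
    have e : v 1 = w * cs.simple j := by rw [hvs 0, hv0, hy0]
    have hdj' := cs.length_mul_simple w j
    refine ⟨?_, ?_, ?_⟩
    · rw [e]; omega
    · rw [e, hy1]
      have hL := L2 cs (hfacts j i hij.symm).1 hdj hdi
      omega
    · rw [e, hy2]
      have hL := L2 cs (hfacts j k hjk).1 hdj hdk
      omega
  have step : ∀ r, P r → P (r + 1) → P (r + 2) := by
    intro r hPr hPr1
    obtain ⟨hr1, hr2, hr3⟩ := hPr
    obtain ⟨hs1, hs2, hs3⟩ := hPr1
    have e2 : v (r + 2) = v (r + 1) * cs.simple (y (r + 1)) := hvs (r + 1)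
    have e1 : v (r + 1) = v r * cs.simple (y r) := hvs r
    have hyy : y (r + 1 + 1) = y (r + 2) := rfl
    rw [hyy] at hs3
    have hdich1 := cs.length_mul_simple (v (r + 1)) (y (r + 1))
    have hlen2 : cs.length (v (r + 2)) + (r + 2) = cs.length w := by
      rw [e2]; omega
    refine ⟨hlen2, ?_, ?_⟩
    · -- descent y (r + 2) of v (r + 2), via L2 on v (r + 1)
      have hL := L2 cs (hfacts (y (r + 1)) (y (r + 2)) (hyne (r + 1))).1 hs2 hs3
      rw [e2]
      omega
    · -- descent y (r + 3) = y r of v (r + 2), via L3 on v r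
      have hyr : y (r + 2 + 1) = y r := by
        rw [show r + 2 + 1 = r + 3 from rfl, hy3]
      have hL3 := L3 cs (hfacts (y (r + 1)) (y r) (hyne r).symm).1
        (hfacts (y (r + 1)) (y r) (hyne r).symm).2 hr3 hr2
      have hlen2' : cs.length (v r * cs.simple (y r) * cs.simple (y (r + 1))) + (r + 2)
          = cs.length w := by
        rw [← e1, ← e2]; exact hlen2
      rw [hyr, e2, e1]
      omega
  have all : ∀ r, P r ∧ P (r + 1) := by
    intro r
    induction r with
    | zero => exact ⟨base0, base1⟩
    | succ n ih => exact ⟨ih.2, step n ih.1 ih.2⟩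
  have := (all (cs.length w + 1)).1.1
  omega

end NoThree

lemma finite_len [Finite B] (q : ℕ) : {w : W | cs.length w = q}.Finite := by
  apply Set.Finite.subset (Set.Finite.image cs.wordProd (List.finite_length_eq B q))
  rintro w hw
  obtain ⟨ω, hlen, rfl⟩ := cs.exists_reduced_word w
  exact ⟨ω, show ω.length = q from hlen.eq.symm.trans hw, rfl⟩

end TwoCAux

open TwoCAux in
/-- Let `(W, S)` be a Coxeter system of finite rank `n ≥ 3` such that there exists `m ≥ 3`
with `m s t = m` for all `s ≠ t` in `S`. Let `c i` be the number of elements of length `i`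
and `d i` the number of elements of length `i` with exactly one right descent. Then for
every `i > m` one has `2 * c (i+1) = d (i+1) + (n - 2) * c i + d i`. -/
theorem two_c_succ_eq
    {B : Type*} [Fintype B] {W : Type*} [Group W] {M : CoxeterMatrix B}
    (cs : CoxeterSystem M W) (n : ℕ) (hn : Fintype.card B = n) (hn3 : 3 ≤ n)
    (m : ℕ) (hm : 3 ≤ m)
    (hM : ∀ s t : B, s ≠ t → orderOf (cs.simple s * cs.simple t) = m)
    (c d : ℕ → ℕ)
    (hc : ∀ i, c i = Nat.card {w : W // cs.length w = i})
    (hd : ∀ i, d i = Nat.card {w : W // cs.length w = i ∧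
      ∃! s : B, cs.length (w * cs.simple s) < cs.length w})
    (i : ℕ) (hi : m < i) :
    2 * c (i + 1) = d (i + 1) + (n - 2) * c i + d i := by
  classical
  set desc : W → Finset B :=
    fun w => Finset.univ.filter (fun a => cs.length (w * cs.simple a) < cs.length w)
    with hdesc
  have hfin : ∀ q : ℕ, {w : W | cs.length w = q}.Finite := finite_len cs
  set T : ℕ → Finset W := fun q => (hfin q).toFinset with hT
  have hmemT : ∀ q w, w ∈ T q ↔ cs.length w = q := by
    intro q w
    simp [hT, Set.Finite.mem_toFinset]
  -- c q is the cardinality of T q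
  have hcT : ∀ q, c q = (T q).card := by
    intro q
    rw [hc q]
    have h1 : Nat.card {w : W // cs.length w = q} = ({w : W | cs.length w = q}).ncard :=
      Nat.card_coe_set_eq _
    rw [h1, Set.ncard_eq_toFinset_card _ (hfin q)]
  -- d q counts the elements with exactly one descent
  have hdescone : ∀ w : W,
      (∃! a : B, cs.length (w * cs.simple a) < cs.length w) ↔ (desc w).card = 1 := by
    intro w
    constructor
    · rintro ⟨a, ha, hu⟩
      rw [Finset.card_eq_one]
      refine ⟨a, ?_⟩
      ext b
      simp only [hdesc, Finset.mem_filter, Finset.mem_univ, true_and, Finset.mem_singleton]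
      constructor
      · intro hb; exact hu b hb
      · intro hb; subst hb; exact ha
    · intro h1
      obtain ⟨a, ha⟩ := Finset.card_eq_one.mp h1
      refine ⟨a, ?_, ?_⟩
      · have : a ∈ desc w := by rw [ha]; exact Finset.mem_singleton_self a
        simpa [hdesc, Finset.mem_filter] using this
      · intro b hb
        have : b ∈ desc w := by simp [hdesc, Finset.mem_filter, hb]
        rw [ha, Finset.mem_singleton] at this
        exact this
  have hdT : ∀ q, d q = ((T q).filter (fun w => (desc w).card = 1)).card := by
    intro q
    rw [hd q]
    have hfin2 : {w : W | cs.length w = q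
        ∧ ∃! a : B, cs.length (w * cs.simple a) < cs.length w}.Finite :=
      (hfin q).subset (fun w hw => hw.1)
    have h1 : Nat.card {w : W // cs.length w = q
        ∧ ∃! a : B, cs.length (w * cs.simple a) < cs.length w}
        = ({w : W | cs.length w = q
            ∧ ∃! a : B, cs.length (w * cs.simple a) < cs.length w}).ncard :=
      Nat.card_coe_set_eq _
    rw [h1, Set.ncard_eq_toFinset_card _ hfin2]
    congr 1
    ext w
    simp only [Set.Finite.mem_toFinset, Set.mem_setOf_eq, Finset.mem_filter, hmemT,
      hdescone w]
  -- every element of positive length has 1 or 2 descents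
  have hcard : ∀ q, 1 ≤ q → ∀ w ∈ T q, 1 ≤ (desc w).card ∧ (desc w).card ≤ 2 := by
    intro q hq w hw
    have hwq : cs.length w = q := (hmemT q w).1 hw
    have hw1 : w ≠ 1 := by
      intro h
      rw [h, cs.length_one] at hwq
      omega
    constructor
    · obtain ⟨a, ha⟩ := cs.exists_rightDescent_of_ne_one hw1
      exact Finset.card_pos.mpr ⟨a, by
        simp only [hdesc, Finset.mem_filter, Finset.mem_univ, true_and]
        exact ha⟩
    · by_contra hgt
      have h3 : 2 < (desc w).card := by omega
      obtain ⟨a, b, c', ha, hb, hc', hab, hac, hbc⟩ := Finset.two_lt_card_iff.mp h3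
      simp only [hdesc, Finset.mem_filter, Finset.mem_univ, true_and] at ha hb hc'
      exact no_three_descents cs hm hM w hab hac hbc ha hb hc'
  -- total descent count on level q
  set S : ℕ → ℕ := fun q => ∑ w ∈ T q, (desc w).card with hS
  have hsum2 : ∀ q, 1 ≤ q →
      S q + ((T q).filter (fun w => (desc w).card = 1)).card = 2 * (T q).card := by
    intro q hq
    simp only [hS]
    calc (∑ w ∈ T q, (desc w).card) + ((T q).filter (fun w => (desc w).card = 1)).card
        = ∑ w ∈ T q, ((desc w).card + if (desc w).card = 1 then 1 else 0) := by
          rw [Finset.sum_add_distrib, Finset.card_filter]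
      _ = ∑ _w ∈ T q, 2 := by
          refine Finset.sum_congr rfl (fun w hw => ?_)
          obtain ⟨h1, h2⟩ := hcard q hq w hw
          split_ifs <;> omega
      _ = 2 * (T q).card := by
          rw [Finset.sum_const, smul_eq_mul, mul_comm]
  -- the pairing between descents on level q+1 and ascents on level q
  have hpair : ∀ q, S (q + 1) + S q = n * (T q).card := by
    intro q
    set asc : W → Finset B :=
      fun w => Finset.univ.filter (fun a => ¬ cs.length (w * cs.simple a) < cs.length w)
      with hasc
    have hdescasc : ∀ w : W, (desc w).card + (asc w).card = n := by
      intro w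
      have h := Finset.card_filter_add_card_filter_not
        (s := (Finset.univ : Finset B))
        (p := fun a => cs.length (w * cs.simple a) < cs.length w)
      rw [Finset.card_univ, hn] at h
      exact h
    have hbij : ((T (q + 1)).sigma (fun w => desc w)).card
        = ((T q).sigma (fun w => asc w)).card := by
      apply Finset.card_bij (fun p _ => (⟨p.1 * cs.simple p.2, p.2⟩ : Σ _ : W, B))
      · rintro ⟨w, a⟩ hp
        simp only [Finset.mem_sigma] at hp
        obtain ⟨hw, haw⟩ := hp
        rw [hmemT] at hw
        simp only [hdesc, Finset.mem_filter, Finset.mem_univ, true_and] at haw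
        have hdich := cs.length_mul_simple w a
        rw [Finset.mem_sigma]
        dsimp only
        constructor
        · rw [hmemT]
          omega
        · simp only [hasc, Finset.mem_filter, Finset.mem_univ, true_and]
          rw [mul_assoc, cs.simple_mul_simple_self, mul_one]
          omega
      · rintro ⟨w, a⟩ hp ⟨w', a'⟩ hp' heq
        dsimp only at heq
        have ha' : a = a' := congrArg Sigma.snd heq
        subst ha'
        have hw' : w = w' := mul_right_cancel (congrArg Sigma.fst heq)
        subst hw'
        rfl
      · rintro ⟨v, a⟩ hp
        simp only [Finset.mem_sigma] at hp
        obtain ⟨hv, hav⟩ := hp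
        rw [hmemT] at hv
        simp only [hasc, Finset.mem_filter, Finset.mem_univ, true_and] at hav
        have hdich := cs.length_mul_simple v a
        refine ⟨⟨v * cs.simple a, a⟩, ?_, ?_⟩
        · rw [Finset.mem_sigma]
          dsimp only
          constructor
          · rw [hmemT]
            omega
          · simp only [hdesc, Finset.mem_filter, Finset.mem_univ, true_and]
            rw [mul_assoc, cs.simple_mul_simple_self, mul_one]
            omega
        · dsimp only
          rw [mul_assoc, cs.simple_mul_simple_self, mul_one]
    have e1 : (∑ w ∈ T (q + 1), (desc w).card) = ∑ w ∈ T q, (asc w).card := by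
      rw [← Finset.card_sigma, hbij, Finset.card_sigma]
    have e2 : S (q + 1) + S q = ∑ w ∈ T q, ((asc w).card + (desc w).card) := by
      simp only [hS]
      rw [e1, Finset.sum_add_distrib]
    have e3 : ∑ w ∈ T q, ((asc w).card + (desc w).card) = n * (T q).card :=
      calc ∑ w ∈ T q, ((asc w).card + (desc w).card)
          = ∑ _w ∈ T q, n :=
            Finset.sum_congr rfl (fun w _ => by have := hdescasc w; omega)
        _ = n * (T q).card := by rw [Finset.sum_const, smul_eq_mul, mul_comm]
    exact e2.trans e3
  -- assemble
  have A1 : S (i + 1) + d (i + 1) = 2 * c (i + 1) := by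
    rw [hdT, hcT]
    exact hsum2 (i + 1) (by omega)
  have A2 : S i + d i = 2 * c i := by
    rw [hdT, hcT]
    exact hsum2 i (by omega)
  have A3 : S (i + 1) + S i = n * c i := by
    rw [hcT]
    exact hpair i
  have A4 : n * c i = (n - 2) * c i + 2 * c i := by
    have h : n - 2 + 2 = n := by omega
    calc n * c i = (n - 2 + 2) * c i := by rw [h]
      _ = (n - 2) * c i + 2 * c i := by rw [add_mul]
  omega
end
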